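/- arXiv:2009.02922 — 7 statements merged into one kernel-verified Lean document; each statement's English description precedes it below -/
import Mathlib

section
/- For every r ≥ 2 and s, t, k ∈ ℕ there exists α = α(r, s, t, k) ∈ ℝ such that, setting β := s(2^{r-1} − 1): for any d_1, …, d_r ∈ ℕ, any semilinear set X ⊆ ℝ^{d_1} × ⋯ × ℝ^{d_r} of description complexity (s, t), and any finite sets V_i ⊆ ℝ^{d_i}, if the set E := X ∩ (V_1 × ⋯ × V_r) is K_{k,…,k}-free, then |E| ≤ α · δ^r_{r-1}(V) · log^β(δ^r_{r-1}(V) + 1), where V := V_1 × ⋯ × V_r and δ^r_{r-1}(V) = Σ_{i ∈ [r]} ∏_{j ≠ i} |V_j|. -/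
/-- A subset of `ℝ^{d₁} × ⋯ × ℝ^{d_r}` is a semilinear cell with (at most) `s` conditions:
it is cut out by `p` non-strict and `s - p` strict affine-linear inequalities. -/
def IsSemilinearCell {r : ℕ} {d : Fin r → ℕ} (s : ℕ)
    (X : Set (∀ i, Fin (d i) → ℝ)) : Prop :=
  ∃ p : ℕ, p ≤ s ∧ ∃ (lam : Fin s → ∀ i, Fin (d i) → ℝ) (a : Fin s → ℝ),
    X = {x | ∀ q : Fin s,
      ((q : ℕ) < p → (∑ i, ∑ c, lam q i c * x i c) + a q ≤ 0) ∧
      (p ≤ (q : ℕ) → (∑ i, ∑ c, lam q i c * x i c) + a q < 0)}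

/-- `X ⊆ ℝ^{d₁} × ⋯ × ℝ^{d_r}` is semilinear of description complexity `(s, t)`:
a union of at most `t` cells, each defined by at most `s` linear (in)equalities. -/
def IsSemilinearOfComplexity {r : ℕ} {d : Fin r → ℕ} (s t : ℕ)
    (X : Set (∀ i, Fin (d i) → ℝ)) : Prop :=
  ∃ t' ≤ t, ∃ C : Fin t' → Set (∀ i, Fin (d i) → ℝ),
    (∀ j, IsSemilinearCell s (C j)) ∧ X = ⋃ j, C j

open Classical Finset

noncomputable section
namespace SemiZar

/-! ### depth function -/

def dep : ℕ → ℕ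
  | 0 => 0
  | 1 => 1
  | (n+2) => dep ((n+3)/2) + 1
decreasing_by omega

lemma dep_eq {D : ℕ} (h : 2 ≤ D) : dep D = dep ((D+1)/2) + 1 := by
  obtain ⟨n, rfl⟩ : ∃ n, D = n + 2 := ⟨D - 2, by omega⟩
  simp [dep]

lemma dep_mono : Monotone dep := by
  have key : ∀ m, ∀ n ≤ m, dep n ≤ dep m := by
    intro m
    induction m using Nat.strong_induction_on with
    | _ m IH =>
      intro n hnm
      match m, hnm with
      | 0, hnm => interval_cases n <;> simp [dep]
      | 1, hnm => interval_cases n <;> simp [dep]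
      | (m+2), hnm =>
        rcases Nat.lt_or_ge n 2 with hn | hn
        · have h1 : dep n ≤ 1 := by interval_cases n <;> simp [dep]
          rw [dep_eq (by omega : 2 ≤ m + 2)]
          omega
        · rw [dep_eq hn, dep_eq (by omega : 2 ≤ m + 2)]
          have := IH ((m+2+1)/2) (by omega) ((n+1)/2) (by omega)
          omega
  exact fun a b h => key b a h

lemma dep_le_pow : ∀ (k D : ℕ), D ≤ 2 ^ k → dep D ≤ k + 1 := by
  intro k
  induction k with
  | zero => intro D hD; interval_cases D <;> simp [dep]
  | succ k IH =>
    intro D hD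
    rcases Nat.lt_or_ge D 2 with h | h
    · interval_cases D <;> simp [dep] <;> omega
    · rw [dep_eq h]
      have h2 : (2:ℕ) ^ (k+1) = 2 * 2 ^ k := by ring
      have := IH ((D+1)/2) (by omega)
      omega

lemma dep_le_log (D : ℕ) : dep D ≤ Nat.log 2 D + 2 := by
  rcases Nat.eq_zero_or_pos D with rfl | hD
  · simp [dep]
  · have := Nat.lt_pow_succ_log_self (by norm_num : 1 < 2) D
    have := dep_le_pow (Nat.log 2 D + 1) D (le_of_lt this)
    omega

lemma dep_one : dep 1 = 1 := by simp [dep]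

/-! ### Basic setup -/

variable {r : ℕ} {d : Fin r → ℕ}

abbrev Pt (d : Fin r → ℕ) := ∀ i, Fin (d i) → ℝ
abbrev Bx (d : Fin r → ℕ) := ∀ i, Finset (Fin (d i) → ℝ)

structure Ineq (d : Fin r → ℕ) where
  g : ∀ i, (Fin (d i) → ℝ) → ℝ
  c : ℝ
  strict : Bool

def Ineq.sat (q : Ineq d) (x : Pt d) : Prop :=
  if q.strict then (∑ i, q.g i (x i)) + q.c < 0 else (∑ i, q.g i (x i)) + q.c ≤ 0

def satList (qs : List (Ineq d)) (x : Pt d) : Prop := ∀ q ∈ qs, q.sat x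

def suppIn (q : Ineq d) (P : Finset (Fin r)) : Prop := ∀ i ∉ P, ∀ v, q.g i v = 0

/-- ambient size measure -/
def NV (V : Bx d) : ℕ := (∑ i, (V i).card) + ∏ i, (V i).card

lemma NV_mono {V W : Bx d} (h : ∀ i, V i ⊆ W i) : NV V ≤ NV W := by
  unfold NV
  have h1 : (∑ i, (V i).card) ≤ ∑ i, (W i).card :=
    Finset.sum_le_sum fun i _ => Finset.card_le_card (h i)
  have h2 : (∏ i, (V i).card) ≤ ∏ i, (W i).card :=
    Finset.prod_le_prod' fun i _ => Finset.card_le_card (h i)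
  omega

structure IsCover (V : Bx d) (P : Finset (Fin r)) (E : Pt d → Prop) (L : List (Bx d))
    (M : ℕ) : Prop where
  sub : ∀ B ∈ L, ∀ i, B i ⊆ V i
  untouched : ∀ B ∈ L, ∀ i ∉ P, B i = V i
  prodSub : ∀ B ∈ L, ∀ x : Pt d, (∀ i, x i ∈ B i) → E x
  covers : ∀ x : Pt d, (∀ i, x i ∈ V i) → E x → ∃ B ∈ L, ∀ i, x i ∈ B i
  mult : ∀ (i : Fin r) (x : Pt d),
    (L.countP fun B => decide (∀ j, j ≠ i → x j ∈ B j)) ≤ M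

lemma IsCover.mono_M {V : Bx d} {P E L M M'} (h : IsCover V P E L M) (hM : M ≤ M') :
    IsCover V P E L M' :=
  ⟨h.sub, h.untouched, h.prodSub, h.covers, fun i x => le_trans (h.mult i x) hM⟩

lemma IsCover.mono_P {V : Bx d} {P P' : Finset (Fin r)} {E L M} (h : IsCover V P E L M)
    (hP : P ⊆ P') : IsCover V P' E L M :=
  ⟨h.sub, fun B hB i hi => h.untouched B hB i (fun hc => hi (hP hc)), h.prodSub, h.covers,
    h.mult⟩

lemma IsCover.congr {V : Bx d} {P : Finset (Fin r)} {E E' : Pt d → Prop} {L M}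
    (h : IsCover V P E L M) (hE : ∀ x, E x ↔ E' x) : IsCover V P E' L M :=
  ⟨h.sub, h.untouched, fun B hB x hx => (hE x).mp (h.prodSub B hB x hx),
    fun x hx hEx => h.covers x hx ((hE x).mpr hEx), h.mult⟩

lemma cover_of_empty {V : Bx d} {P : Finset (Fin r)} {E : Pt d → Prop} {M : ℕ}
    (h : ¬ ∀ i, (V i).Nonempty) : IsCover V P E [] M := by
  refine ⟨by simp, by simp, by simp, ?_, by simp⟩
  intro x hx _
  exact absurd (fun i => ⟨x i, hx i⟩) h

/-! ### list counting helpers -/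

lemma countP_bind {α β : Type*} (l : List α) (f : α → List β) (p : β → Bool) :
    ((l.flatMap f).countP p) = (l.map fun a => (f a).countP p).sum := by
  induction l with
  | nil => simp
  | cons a l IH => simp [List.countP_append, IH]

lemma list_sum_map_le {α : Type*} (l : List α) (f g : α → ℕ) (h : ∀ a ∈ l, f a ≤ g a) :
    (l.map f).sum ≤ (l.map g).sum := by
  induction l with
  | nil => simp
  | cons a l IH =>
    simp only [List.map_cons, List.sum_cons]
    exact Nat.add_le_add (h a (by simp)) (IH fun b hb => h b (by simp [hb]))

lemma countP_eq_sum_map {α : Type*} (l : List α) (p : α → Bool) :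
    l.countP p = (l.map fun a => if p a then 1 else 0).sum := by
  induction l with
  | nil => simp
  | cons a l IH => by_cases h : p a <;> simp [List.countP_cons, IH, h] <;> omega

lemma sum_map_ite {α : Type*} (l : List α) (p : α → Bool) (M : ℕ) :
    (l.map fun a => if p a then M else 0).sum = M * l.countP p := by
  induction l with
  | nil => simp
  | cons a l IH =>
    by_cases hpa : p a <;> simp [List.countP_cons, hpa, IH] <;> ring

lemma list_sum_map_ite_le {α : Type*} (l : List α) (p : α → Bool) (M : ℕ)
    (f : α → ℕ) (h : ∀ a ∈ l, f a ≤ if p a then M else 0) :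
    (l.map f).sum ≤ M * l.countP p :=
  (list_sum_map_le _ _ _ h).trans (le_of_eq (sum_map_ite l p M))

/-! ### composition of covers -/

lemma cover_comp {V : Bx d} {P₁ P₂ : Finset (Fin r)} {E₁ E₂ : Pt d → Prop}
    {L₁ : List (Bx d)} {M₁ M₂ : ℕ}
    (h₁ : IsCover V P₁ E₁ L₁ M₁)
    (h₂ : ∀ B ∈ L₁, ∃ L', IsCover B P₂ E₂ L' M₂) :
    ∃ L, IsCover V (P₁ ∪ P₂) (fun x => E₁ x ∧ E₂ x) L (M₁ * M₂) := by
  classical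
  set F : Bx d → List (Bx d) := fun B =>
    if h : ∃ L', IsCover B P₂ E₂ L' M₂ then h.choose else [] with hF
  have hFspec : ∀ B ∈ L₁, IsCover B P₂ E₂ (F B) M₂ := by
    intro B hB
    have h := h₂ B hB
    simp only [hF, dif_pos h]
    exact h.choose_spec
  refine ⟨L₁.flatMap F, ?_, ?_, ?_, ?_, ?_⟩
  · intro B' hB'
    rw [List.mem_flatMap] at hB'
    obtain ⟨B, hB, hB'⟩ := hB'
    exact fun i => (((hFspec B hB).sub B' hB') i).trans (h₁.sub B hB i)
  · intro B' hB' i hi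
    rw [List.mem_flatMap] at hB'
    obtain ⟨B, hB, hB'⟩ := hB'
    rw [(hFspec B hB).untouched B' hB' i (fun hc => hi (Finset.mem_union_right _ hc))]
    exact h₁.untouched B hB i (fun hc => hi (Finset.mem_union_left _ hc))
  · intro B' hB' x hx
    rw [List.mem_flatMap] at hB'
    obtain ⟨B, hB, hB'⟩ := hB'
    exact ⟨h₁.prodSub B hB x (fun i => (hFspec B hB).sub B' hB' i (hx i)),
      (hFspec B hB).prodSub B' hB' x hx⟩
  · intro x hx hE
    obtain ⟨B, hB, hxB⟩ := h₁.covers x hx hE.1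
    obtain ⟨B', hB', hxB'⟩ := (hFspec B hB).covers x hxB hE.2
    exact ⟨B', List.mem_flatMap.mpr ⟨B, hB, hB'⟩, hxB'⟩
  · intro i x
    rw [countP_bind]
    have hterm : ∀ B ∈ L₁,
        ((F B).countP fun B' => decide (∀ j, j ≠ i → x j ∈ B' j)) ≤
          (if decide (∀ j, j ≠ i → x j ∈ B j) then M₂ else 0) := by
      intro B hB
      by_cases hp : ∀ j, j ≠ i → x j ∈ B j
      · have he : decide (∀ j, j ≠ i → x j ∈ B j) = true := decide_eq_true hp
        rw [he, if_pos rfl]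
        exact (hFspec B hB).mult i x
      · have hz : ((F B).countP fun B' => decide (∀ j, j ≠ i → x j ∈ B' j)) = 0 := by
          rw [List.countP_eq_zero]
          intro B' hB' hcon
          rw [decide_eq_true_eq] at hcon
          exact hp (fun j hj => (hFspec B hB).sub B' hB' j (hcon j hj))
        simp [hz]
    calc (L₁.map fun B => ((F B).countP fun B' => decide (∀ j, j ≠ i → x j ∈ B' j))).sum
        ≤ M₂ * (L₁.countP fun B => decide (∀ j, j ≠ i → x j ∈ B j)) :=
          list_sum_map_ite_le _ _ _ _ hterm
      _ ≤ M₂ * M₁ := Nat.mul_le_mul_left _ (h₁.mult i x)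
      _ = M₁ * M₂ := Nat.mul_comm _ _
/-! ### single-inequality machinery -/

variable (q : Ineq d) (i₀ : Fin r)

/-- the "right side value": `q.sat x ↔ q.g i₀ (x i₀) ◁ negh q i₀ x`. -/
def negh (x : Pt d) : ℝ := -(∑ i ∈ Finset.univ.erase i₀, q.g i (x i)) - q.c

lemma sum_split (x : Pt d) :
    (∑ i, q.g i (x i)) = q.g i₀ (x i₀) + ∑ i ∈ Finset.univ.erase i₀, q.g i (x i) :=
  (Finset.add_sum_erase _ _ (Finset.mem_univ _)).symm

lemma sat_iff (x : Pt d) :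
    q.sat x ↔ (if q.strict then q.g i₀ (x i₀) < negh q i₀ x
      else q.g i₀ (x i₀) ≤ negh q i₀ x) := by
  unfold Ineq.sat negh
  rw [sum_split q i₀ x]
  cases q.strict <;> simp <;> constructor <;> intro h <;> linarith

lemma negh_eq_of_eq_off {x y : Pt d} (h : ∀ j, j ≠ i₀ → x j = y j) :
    negh q i₀ x = negh q i₀ y := by
  unfold negh
  congr 2
  apply Finset.sum_congr rfl
  intro j hj
  rw [h j (Finset.ne_of_mem_erase hj)]

/-- inequality expressing `u < negh q i₀ x` (strict) or `u ≤ negh q i₀ x` (nonstrict). -/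
def mkLow (u : ℝ) (st : Bool) : Ineq d :=
  ⟨fun i v => if i = i₀ then 0 else q.g i v, q.c + u, st⟩

/-- inequality expressing `negh q i₀ x ≤ w`. -/
def mkHigh (w : ℝ) : Ineq d :=
  ⟨fun i v => if i = i₀ then 0 else -(q.g i v), -q.c - w, false⟩

lemma sum_ite_erase (f : ∀ i, (Fin (d i) → ℝ) → ℝ) (x : Pt d) :
    (∑ i, (if i = i₀ then 0 else f i (x i))) = ∑ i ∈ Finset.univ.erase i₀, f i (x i) := by
  rw [← Finset.add_sum_erase _ _ (Finset.mem_univ i₀), if_pos rfl, zero_add]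
  apply Finset.sum_congr rfl
  intro j hj
  rw [if_neg (Finset.ne_of_mem_erase hj)]

lemma mkLow_sat (u : ℝ) (st : Bool) (x : Pt d) :
    (mkLow q i₀ u st).sat x ↔ (if st then u < negh q i₀ x else u ≤ negh q i₀ x) := by
  unfold Ineq.sat mkLow negh
  simp only
  rw [sum_ite_erase]
  cases st <;> simp <;> constructor <;> intro h <;> linarith

lemma mkHigh_sat (w : ℝ) (x : Pt d) :
    (mkHigh q i₀ w).sat x ↔ negh q i₀ x ≤ w := by
  unfold Ineq.sat mkHigh negh
  simp only [Bool.false_eq_true, if_false]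
  have h1 : (∑ i, (if i = i₀ then 0 else -(q.g i (x i))))
      = ∑ i ∈ Finset.univ.erase i₀, -(q.g i (x i)) := sum_ite_erase i₀ (fun i v => -(q.g i v)) x
  rw [h1, Finset.sum_neg_distrib]
  constructor <;> intro h <;> linarith

lemma mkLow_supp {P : Finset (Fin r)} (hsupp : suppIn q P) (u : ℝ) (st : Bool) :
    suppIn (mkLow q i₀ u st) (P.erase i₀) := by
  intro i hi v
  unfold mkLow
  simp only
  by_cases h : i = i₀
  · rw [if_pos h]
  · rw [if_neg h]
    exact hsupp i (fun hc => hi (Finset.mem_erase.mpr ⟨h, hc⟩)) v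

lemma mkHigh_supp {P : Finset (Fin r)} (hsupp : suppIn q P) (w : ℝ) :
    suppIn (mkHigh q i₀ w) (P.erase i₀) := by
  intro i hi v
  unfold mkHigh
  simp only
  by_cases h : i = i₀
  · rw [if_pos h]
  · rw [if_neg h, hsupp i (fun hc => hi (Finset.mem_erase.mpr ⟨h, hc⟩)) v, neg_zero]

/-- the finite set of relevant right-side values. -/
def hvals (V : Bx d) : Finset ℝ := (Fintype.piFinset V).image (negh q i₀)

/-- relevant distinct values in a window. -/
def tset (V : Bx d) (A : Finset (Fin (d i₀) → ℝ)) (lo hi : ℝ) : Finset ℝ :=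
  A.image (q.g i₀) ∪ (hvals q i₀ V).filter (fun w => lo < w ∧ w ≤ hi)
lemma mem_tset {V : Bx d} {A : Finset (Fin (d i₀) → ℝ)} {lo hi w : ℝ} :
    w ∈ tset q i₀ V A lo hi ↔
      (w ∈ A.image (q.g i₀) ∨ (w ∈ hvals q i₀ V ∧ lo < w ∧ w ≤ hi)) := by
  unfold tset
  simp [Finset.mem_union, Finset.mem_filter]
/-! ### more list helpers -/

lemma countP_le_countP {α : Type*} (l : List α) (p p' : α → Bool)
    (h : ∀ a ∈ l, p a = true → p' a = true) : l.countP p ≤ l.countP p' := by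
  induction l with
  | nil => simp
  | cons a l IH =>
    rw [List.countP_cons, List.countP_cons]
    have hIH := IH (fun b hb => h b (by simp [hb]))
    by_cases hpa : p a = true
    · have hqa := h a (by simp) hpa
      simp only [hpa, hqa, if_pos]
      omega
    · have hpa' : p a = false := by simpa using hpa
      simp only [hpa', Bool.false_eq_true, if_false]
      omega

/-! ### pivot selection -/

lemma exists_pivot (T : Finset ℝ) (hT2 : 2 ≤ T.card) :
    ∃ m ∈ T, (T.filter (fun w => w ≤ m)).card ≤ (T.card + 1) / 2 ∧
      (T.filter (fun w => m < w)).card ≤ T.card / 2 := by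
  classical
  have hne : T.Nonempty := Finset.card_pos.mp (by omega)
  set S' := T.filter (fun mm => (T.filter fun w => w ≤ mm).card ≤ (T.card + 1) / 2) with hS'
  have hmin : T.min' hne ∈ S' := by
    rw [hS', Finset.mem_filter]
    refine ⟨T.min'_mem hne, ?_⟩
    have hone : T.filter (fun w => w ≤ T.min' hne) = {T.min' hne} := by
      ext w
      simp only [Finset.mem_filter, Finset.mem_singleton]
      constructor
      · rintro ⟨hwT, hw⟩; exact le_antisymm hw (T.min'_le w hwT)
      · rintro rfl; exact ⟨T.min'_mem hne, le_refl _⟩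
    rw [hone, Finset.card_singleton]
    omega
  have hS'ne : S'.Nonempty := ⟨_, hmin⟩
  set m := S'.max' hS'ne with hm
  have hmS' : m ∈ S' := S'.max'_mem hS'ne
  have hmT : m ∈ T := (Finset.mem_filter.mp hmS').1
  have hc1 : (T.filter fun w => w ≤ m).card ≤ (T.card + 1) / 2 := (Finset.mem_filter.mp hmS').2
  refine ⟨m, hmT, hc1, ?_⟩
  have hcompl : (T.filter fun w => w ≤ m).card + (T.filter fun w => m < w).card = T.card := by
    have h := Finset.card_filter_add_card_filter_not (s := T) (p := fun w => w ≤ m)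
    simpa [not_le] using h
  by_cases hgt : (T.filter fun w => m < w).Nonempty
  · set u := (T.filter fun w => m < w).min' hgt with hu
    have humem := (T.filter fun w => m < w).min'_mem hgt
    have huT : u ∈ T := (Finset.mem_filter.mp humem).1
    have hmu : m < u := (Finset.mem_filter.mp humem).2
    have huS' : u ∉ S' := fun hc => absurd (S'.le_max' u hc) (not_le.mpr hmu)
    have hucard : ¬ ((T.filter fun w => w ≤ u).card ≤ (T.card + 1) / 2) := by
      intro hc
      exact huS' (Finset.mem_filter.mpr ⟨huT, hc⟩)
    have hsub : (T.filter fun w => w ≤ u) ⊆ insert u (T.filter fun w => w ≤ m) := by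
      intro w hw
      obtain ⟨hwT, hwu⟩ := Finset.mem_filter.mp hw
      by_cases hwm : w ≤ m
      · exact Finset.mem_insert_of_mem (Finset.mem_filter.mpr ⟨hwT, hwm⟩)
      · have hle : u ≤ w := (T.filter fun w => m < w).min'_le w
          (Finset.mem_filter.mpr ⟨hwT, not_le.mp hwm⟩)
        exact Finset.mem_insert.mpr (Or.inl (le_antisymm hwu hle))
    have hcard1 := Finset.card_le_card hsub
    have hcard2 := Finset.card_insert_le u (T.filter fun w => w ≤ m)
    omega
  · rw [Finset.not_nonempty_iff_eq_empty] at hgt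
    rw [hgt]
    simp

/-! ### the dyadic construction -/

structure AuxGood (q : Ineq d) (P : Finset (Fin r)) (i₀ : Fin r) (V : Bx d)
    (A : Finset (Fin (d i₀) → ℝ)) (lo hi : ℝ) (M : ℕ) (L : List (Bx d)) : Prop where
  sides : ∀ B ∈ L, (∀ j, B j ⊆ V j) ∧ B i₀ ⊆ A ∧ (∀ j ∉ P, B j = V j) ∧ (B i₀).Nonempty
  prods : ∀ B ∈ L, ∀ x : Pt d, (∀ j, x j ∈ B j) → q.sat x
  win : ∀ B ∈ L, ∀ x : Pt d, (∀ j, j ≠ i₀ → x j ∈ B j) →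
    lo < negh q i₀ x ∧ negh q i₀ x ≤ hi
  cov : ∀ x : Pt d, (∀ j, x j ∈ V j) → x i₀ ∈ A → q.sat x → lo < negh q i₀ x →
    negh q i₀ x ≤ hi → ∃ B ∈ L, ∀ j, x j ∈ B j
  mult : ∀ (i : Fin r) (x : Pt d),
    (L.countP fun B => decide (∀ j, j ≠ i → x j ∈ B j)) ≤ M

lemma auxGood_nil {q : Ineq d} {P : Finset (Fin r)} {i₀ : Fin r} {V : Bx d}
    {A : Finset (Fin (d i₀) → ℝ)} {lo hi : ℝ} {M : ℕ}
    (h : ∀ x : Pt d, (∀ j, x j ∈ V j) → x i₀ ∈ A → q.sat x →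
      lo < negh q i₀ x → negh q i₀ x ≤ hi → False) :
    AuxGood q P i₀ V A lo hi M [] :=
  ⟨by simp, by simp, by simp, fun x h1 h2 h3 h4 h5 => absurd (h x h1 h2 h3 h4 h5) not_false,
    by simp⟩

section Override

variable {q : Ineq d} {i₀ : Fin r} {V : Bx d}

lemma override_full {B : Bx d} (hBi₀ : B i₀ = V i₀) {A₁ : Finset (Fin (d i₀) → ℝ)}
    (hA₁V : A₁ ⊆ V i₀) (x : Pt d) (h : ∀ j, x j ∈ Function.update B i₀ A₁ j) :
    ∀ j, x j ∈ B j := by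
  intro j
  by_cases hj : j = i₀
  · subst hj
    have := h j
    rw [Function.update_self] at this
    rw [hBi₀]
    exact hA₁V this
  · have := h j
    rwa [Function.update_of_ne hj] at this

lemma override_partial {B : Bx d} (hBi₀ : B i₀ = V i₀) {A₁ : Finset (Fin (d i₀) → ℝ)}
    (hA₁V : A₁ ⊆ V i₀) {a : Fin (d i₀) → ℝ} (ha : a ∈ A₁) (x : Pt d)
    (h : ∀ j, j ≠ i₀ → x j ∈ Function.update B i₀ A₁ j) :
    (∀ j, Function.update x i₀ a j ∈ B j) ∧
      negh q i₀ (Function.update x i₀ a) = negh q i₀ x := by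
  constructor
  · apply override_full hBi₀ hA₁V
    intro j
    by_cases hj : j = i₀
    · subst hj
      rw [Function.update_self, Function.update_self]
      exact ha
    · simp only [Function.update_of_ne hj]
      have := h j hj
      rwa [Function.update_of_ne hj] at this
  · exact negh_eq_of_eq_off q i₀ (fun j hj => Function.update_of_ne hj _ _)

lemma countP_override_le {Lh : List (Bx d)} {P' : Finset (Fin r)} {E : Pt d → Prop} {MB : ℕ}
    (hLh : IsCover V P' E Lh MB) (hP'i₀ : i₀ ∉ P') {A₁ : Finset (Fin (d i₀) → ℝ)}
    (hA₁V : A₁ ⊆ V i₀) (i : Fin r) (x : Pt d) :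
    ((Lh.map fun B => Function.update B i₀ A₁).countP
      fun B => decide (∀ j, j ≠ i → x j ∈ B j)) ≤ MB := by
  by_cases hii : i = i₀
  · subst hii
    rw [List.countP_map]
    refine le_trans (countP_le_countP _ _ _ ?_) (hLh.mult i x)
    intro B hB hpred
    rw [Function.comp_apply, decide_eq_true_eq] at hpred
    rw [decide_eq_true_eq]
    intro j hj
    have := hpred j hj
    rwa [Function.update_of_ne hj] at this
  · by_cases hx1 : x i₀ ∈ A₁
    · rw [List.countP_map]
      refine le_trans (countP_le_countP _ _ _ ?_) (hLh.mult i x)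
      intro B hB hpred
      rw [Function.comp_apply, decide_eq_true_eq] at hpred
      rw [decide_eq_true_eq]
      intro j hj
      by_cases hj0 : j = i₀
      · subst hj0
        rw [hLh.untouched B hB j hP'i₀]
        exact hA₁V hx1
      · have := hpred j hj
        rwa [Function.update_of_ne hj0] at this
    · have hz : ((Lh.map fun B => Function.update B i₀ A₁).countP
          fun B => decide (∀ j, j ≠ i → x j ∈ B j)) = 0 := by
        rw [List.countP_eq_zero]
        intro B' hB' hpred
        obtain ⟨B, hB, rfl⟩ := List.mem_map.mp hB'
        rw [decide_eq_true_eq] at hpred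
        have h2 := hpred i₀ (fun hc => hii hc.symm)
        rw [Function.update_self] at h2
        exact hx1 h2
      rw [hz]
      exact Nat.zero_le _

end Override
lemma auxCover (q : Ineq d) (P : Finset (Fin r)) (i₀ : Fin r) (hi₀P : i₀ ∈ P)
    (hsupp : suppIn q P) (V : Bx d) (MB : ℕ)
    (hB : ∀ q₁ q₂ : Ineq d, suppIn q₁ (P.erase i₀) → suppIn q₂ (P.erase i₀) →
      ∃ L, IsCover V (P.erase i₀) (fun x => q₁.sat x ∧ q₂.sat x) L MB) :
    ∀ (D : ℕ) (A : Finset (Fin (d i₀) → ℝ)) (lo hi : ℝ), A ⊆ V i₀ →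
      (tset q i₀ V A lo hi).card ≤ D →
      ∃ L, AuxGood q P i₀ V A lo hi (MB * dep D) L := by
  have hsatle : ∀ x : Pt d, q.sat x → q.g i₀ (x i₀) ≤ negh q i₀ x := by
    intro x hx
    rw [sat_iff q i₀] at hx
    cases hq : q.strict <;> rw [hq] at hx <;> simp at hx <;> linarith
  have hsatof : ∀ x : Pt d, q.g i₀ (x i₀) < negh q i₀ x → q.sat x := by
    intro x hx
    rw [sat_iff q i₀]
    cases hq : q.strict <;> simp <;> linarith
  have hmemhv : ∀ x : Pt d, (∀ j, x j ∈ V j) → negh q i₀ x ∈ hvals q i₀ V := by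
    intro x hx
    exact Finset.mem_image_of_mem _ (Fintype.mem_piFinset.mpr hx)
  intro D
  induction D using Nat.strong_induction_on with
  | _ D IH =>
  intro A lo hi hAV hTD
  by_cases hA : A = ∅
  · refine ⟨[], auxGood_nil ?_⟩
    intro x _ hxA _ _ _
    rw [hA] at hxA
    exact absurd hxA (Finset.notMem_empty _)
  have hAne : A.Nonempty := Finset.nonempty_iff_ne_empty.mpr hA
  set T := tset q i₀ V A lo hi with hT
  have hTmemA : ∀ v ∈ A, q.g i₀ v ∈ T := by
    intro v hv
    rw [hT, mem_tset]
    exact Or.inl (Finset.mem_image_of_mem _ hv)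
  have hTmemW : ∀ x : Pt d, (∀ j, x j ∈ V j) → lo < negh q i₀ x → negh q i₀ x ≤ hi →
      negh q i₀ x ∈ T := by
    intro x hx h1 h2
    rw [hT, mem_tset]
    exact Or.inr ⟨hmemhv x hx, h1, h2⟩
  have hT1 : 1 ≤ T.card :=
    Finset.card_pos.mpr ⟨q.g i₀ hAne.choose, hTmemA _ hAne.choose_spec⟩
  by_cases hTc : T.card = 1
  · -- base case: a single relevant value m
    obtain ⟨m, hTm⟩ := Finset.card_eq_one.mp hTc
    have hfA : ∀ v ∈ A, q.g i₀ v = m := by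
      intro v hv
      have h := hTmemA v hv
      rw [hTm] at h
      exact Finset.mem_singleton.mp h
    have hWm : ∀ x : Pt d, (∀ j, x j ∈ V j) → lo < negh q i₀ x → negh q i₀ x ≤ hi →
        negh q i₀ x = m := by
      intro x h1 h2 h3
      have h := hTmemW x h1 h2 h3
      rw [hTm] at h
      exact Finset.mem_singleton.mp h
    have hdep1 : 1 ≤ dep D := by
      have h1D : 1 ≤ D := le_trans hT1 hTD
      calc 1 = dep 1 := dep_one.symm
        _ ≤ dep D := dep_mono h1D
    cases hstr : q.strict with
    | true =>
      refine ⟨[], auxGood_nil ?_⟩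
      intro x hxV hxA hsat h1 h2
      rw [sat_iff q i₀, hstr] at hsat
      simp only [if_true] at hsat
      rw [hfA _ hxA, hWm x hxV h1 h2] at hsat
      exact lt_irrefl m hsat
    | false =>
      by_cases hlom : lo < m
      · obtain ⟨Lh, hLh⟩ := hB (mkLow q i₀ m false) (mkHigh q i₀ hi)
          (mkLow_supp q i₀ hsupp m false) (mkHigh_supp q i₀ hsupp hi)
        have hLhE : ∀ x : Pt d, ((mkLow q i₀ m false).sat x ∧ (mkHigh q i₀ hi).sat x) ↔
            (m ≤ negh q i₀ x ∧ negh q i₀ x ≤ hi) := by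
          intro x
          rw [mkLow_sat, mkHigh_sat]
          simp
        have hLh_i₀ : ∀ B ∈ Lh, B i₀ = V i₀ := fun B hBm =>
          hLh.untouched B hBm i₀ (Finset.notMem_erase i₀ P)
        refine ⟨Lh.map (fun B => Function.update B i₀ A), ?_, ?_, ?_, ?_, ?_⟩
        · intro B' hB'
          obtain ⟨B, hBm, rfl⟩ := List.mem_map.mp hB'
          refine ⟨?_, ?_, ?_, ?_⟩
          · intro j
            by_cases hj : j = i₀
            · subst hj; rw [Function.update_self]; exact hAV
            · rw [Function.update_of_ne hj]; exact hLh.sub B hBm j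
          · rw [Function.update_self]
          · intro j hjP
            have hj : j ≠ i₀ := fun hc => hjP (hc ▸ hi₀P)
            rw [Function.update_of_ne hj]
            exact hLh.untouched B hBm j (fun hc => hjP (Finset.mem_of_mem_erase hc))
          · rw [Function.update_self]; exact hAne
        · intro B' hB' x hx
          obtain ⟨B, hBm, rfl⟩ := List.mem_map.mp hB'
          have hxB := override_full (hLh_i₀ B hBm) hAV x hx
          have hE := (hLhE x).mp (hLh.prodSub B hBm x hxB)
          have hxA : x i₀ ∈ A := by
            have h := hx i₀; rwa [Function.update_self] at h
          rw [sat_iff q i₀, hstr]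
          simp only [Bool.false_eq_true, if_false]
          rw [hfA _ hxA]
          exact hE.1
        · intro B' hB' x hx
          obtain ⟨B, hBm, rfl⟩ := List.mem_map.mp hB'
          obtain ⟨a, ha⟩ := hAne
          obtain ⟨hymem, hyeq⟩ := override_partial (q := q) (hLh_i₀ B hBm) hAV ha x hx
          have hE := (hLhE _).mp (hLh.prodSub B hBm _ hymem)
          rw [hyeq] at hE
          exact ⟨lt_of_lt_of_le hlom hE.1, hE.2⟩
        · intro x hxV hxA hsat h1 h2
          have hle : q.g i₀ (x i₀) ≤ negh q i₀ x := hsatle x hsat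
          rw [hfA _ hxA] at hle
          obtain ⟨B, hBm, hxB⟩ := hLh.covers x hxV ((hLhE x).mpr ⟨hle, h2⟩)
          refine ⟨Function.update B i₀ A, List.mem_map_of_mem hBm, ?_⟩
          intro j
          by_cases hj : j = i₀
          · subst hj; rw [Function.update_self]; exact hxA
          · rw [Function.update_of_ne hj]; exact hxB j
        · intro i x
          have hc := countP_override_le (V := V) hLh (Finset.notMem_erase i₀ P) hAV i x
          calc _ ≤ MB := hc
            _ = MB * 1 := (Nat.mul_one MB).symm
            _ ≤ MB * dep D := Nat.mul_le_mul_left MB hdep1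
      · refine ⟨[], auxGood_nil ?_⟩
        intro x hxV hxA hsat h1 h2
        exact hlom (hWm x hxV h1 h2 ▸ h1)
  · -- main case
    have hT2 : 2 ≤ T.card := by omega
    have hD2 : 2 ≤ D := le_trans hT2 hTD
    obtain ⟨m, hmT, hc1, hc2⟩ := exists_pivot T hT2
    set Dh := (D + 1) / 2 with hDh
    have hDhlt : Dh < D := by omega
    have hdepD : dep D = dep Dh + 1 := dep_eq hD2
    have hmul : MB * dep D = MB * dep Dh + MB := by rw [hdepD]; ring
    have hmono : MB * dep Dh ≤ MB * dep D := Nat.mul_le_mul_left _ (dep_mono hDhlt.le)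
    set A₁ := A.filter (fun v => q.g i₀ v ≤ m) with hA₁
    set A₂ := A.filter (fun v => ¬ q.g i₀ v ≤ m) with hA₂
    have hA₁A : A₁ ⊆ A := Finset.filter_subset _ _
    have hA₂A : A₂ ⊆ A := Finset.filter_subset _ _
    have hT1sub : tset q i₀ V A₁ lo (min m hi) ⊆ T.filter (fun w => w ≤ m) := by
      intro w hw
      rw [mem_tset] at hw
      rcases hw with hw | hw
      · obtain ⟨v, hv, rfl⟩ := Finset.mem_image.mp hw
        obtain ⟨hvA, hvm⟩ := Finset.mem_filter.mp hv
        exact Finset.mem_filter.mpr ⟨hTmemA v hvA, hvm⟩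
      · obtain ⟨hwh, hcond1, hcond2⟩ := hw
        refine Finset.mem_filter.mpr ⟨?_, le_trans hcond2 (min_le_left _ _)⟩
        rw [hT, mem_tset]
        exact Or.inr ⟨hwh, hcond1, le_trans hcond2 (min_le_right _ _)⟩
    have hT2sub : tset q i₀ V A₂ (max m lo) hi ⊆ T.filter (fun w => m < w) := by
      intro w hw
      rw [mem_tset] at hw
      rcases hw with hw | hw
      · obtain ⟨v, hv, rfl⟩ := Finset.mem_image.mp hw
        obtain ⟨hvA, hvm⟩ := Finset.mem_filter.mp hv
        exact Finset.mem_filter.mpr ⟨hTmemA v hvA, not_le.mp hvm⟩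
      · obtain ⟨hwh, hcond1, hcond2⟩ := hw
        refine Finset.mem_filter.mpr ⟨?_, lt_of_le_of_lt (le_max_left _ _) hcond1⟩
        rw [hT, mem_tset]
        exact Or.inr ⟨hwh, lt_of_le_of_lt (le_max_right _ _) hcond1, hcond2⟩
    have hcard1 : (tset q i₀ V A₁ lo (min m hi)).card ≤ Dh := by
      have h := Finset.card_le_card hT1sub
      have h2 : (T.card + 1) / 2 ≤ Dh := by rw [hDh]; omega
      omega
    have hcard2 : (tset q i₀ V A₂ (max m lo) hi).card ≤ Dh := by
      have h := Finset.card_le_card hT2sub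
      have h2 : T.card / 2 ≤ Dh := by rw [hDh]; omega
      omega
    obtain ⟨L₁, hL₁⟩ := IH Dh hDhlt A₁ lo (min m hi) (hA₁A.trans hAV) hcard1
    obtain ⟨L₂, hL₂⟩ := IH Dh hDhlt A₂ (max m lo) hi (hA₂A.trans hAV) hcard2
    by_cases hA₁e : A₁ = ∅
    · refine ⟨L₂, ?_, hL₂.prods, ?_, ?_, ?_⟩
      · intro B hBm
        obtain ⟨hs, hsA, hu, hne⟩ := hL₂.sides B hBm
        exact ⟨hs, hsA.trans hA₂A, hu, hne⟩
      · intro B hBm x hx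
        obtain ⟨h1, h2⟩ := hL₂.win B hBm x hx
        exact ⟨lt_of_le_of_lt (le_max_right m lo) h1, h2⟩
      · intro x hxV hxA hsat h1 h2
        have hfm : ¬ q.g i₀ (x i₀) ≤ m := by
          intro hc
          have : x i₀ ∈ A₁ := Finset.mem_filter.mpr ⟨hxA, hc⟩
          rw [hA₁e] at this
          exact absurd this (Finset.notMem_empty _)
        have hx2 : x i₀ ∈ A₂ := Finset.mem_filter.mpr ⟨hxA, hfm⟩
        have hm2 : m < negh q i₀ x := lt_of_lt_of_le (not_le.mp hfm) (hsatle x hsat)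
        exact hL₂.cov x hxV hx2 hsat (max_lt hm2 h1) h2
      · intro i x
        exact le_trans (hL₂.mult i x) hmono
    · have hA₁ne : A₁.Nonempty := Finset.nonempty_iff_ne_empty.mpr hA₁e
      obtain ⟨Lh, hLh⟩ := hB (mkLow q i₀ (max m lo) true) (mkHigh q i₀ hi)
        (mkLow_supp q i₀ hsupp _ _) (mkHigh_supp q i₀ hsupp _)
      have hLhE : ∀ x : Pt d,
          ((mkLow q i₀ (max m lo) true).sat x ∧ (mkHigh q i₀ hi).sat x) ↔
          (max m lo < negh q i₀ x ∧ negh q i₀ x ≤ hi) := by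
        intro x
        rw [mkLow_sat, mkHigh_sat]
        simp
      have hLh_i₀ : ∀ B ∈ Lh, B i₀ = V i₀ := fun B hBm =>
        hLh.untouched B hBm i₀ (Finset.notMem_erase i₀ P)
      set F := Lh.map (fun B => Function.update B i₀ A₁) with hF
      set L := F ++ (L₁ ++ L₂) with hL
      have hmem : ∀ B, B ∈ L ↔ B ∈ F ∨ B ∈ L₁ ∨ B ∈ L₂ := by
        intro B
        rw [hL]
        simp [List.mem_append]
      have hFwin : ∀ B' ∈ F, ∀ x : Pt d, (∀ j, j ≠ i₀ → x j ∈ B' j) →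
          max m lo < negh q i₀ x ∧ negh q i₀ x ≤ hi := by
        intro B' hB' x hx
        rw [hF] at hB'
        obtain ⟨B, hBm, rfl⟩ := List.mem_map.mp hB'
        obtain ⟨a, ha⟩ := hA₁ne
        obtain ⟨hymem, hyeq⟩ := override_partial (q := q) (hLh_i₀ B hBm)
          (hA₁A.trans hAV) ha x hx
        have hE := (hLhE _).mp (hLh.prodSub B hBm _ hymem)
        rw [hyeq] at hE
        exact hE
      refine ⟨L, ?_, ?_, ?_, ?_, ?_⟩
      · intro B hBm
        rcases (hmem B).mp hBm with hBF | hB1 | hB2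
        · rw [hF] at hBF
          obtain ⟨B0, hB0, rfl⟩ := List.mem_map.mp hBF
          refine ⟨?_, ?_, ?_, ?_⟩
          · intro j
            by_cases hj : j = i₀
            · subst hj; rw [Function.update_self]; exact hA₁A.trans hAV
            · rw [Function.update_of_ne hj]; exact hLh.sub B0 hB0 j
          · rw [Function.update_self]; exact hA₁A
          · intro j hjP
            have hj : j ≠ i₀ := fun hc => hjP (hc ▸ hi₀P)
            rw [Function.update_of_ne hj]
            exact hLh.untouched B0 hB0 j (fun hc => hjP (Finset.mem_of_mem_erase hc))
          · rw [Function.update_self]; exact hA₁ne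
        · obtain ⟨hs, hsA, hu, hne⟩ := hL₁.sides B hB1
          exact ⟨hs, hsA.trans hA₁A, hu, hne⟩
        · obtain ⟨hs, hsA, hu, hne⟩ := hL₂.sides B hB2
          exact ⟨hs, hsA.trans hA₂A, hu, hne⟩
      · intro B hBm x hx
        rcases (hmem B).mp hBm with hBF | hB1 | hB2
        · rw [hF] at hBF
          obtain ⟨B0, hB0, rfl⟩ := List.mem_map.mp hBF
          have hxA₁ : x i₀ ∈ A₁ := by
            have h := hx i₀; rwa [Function.update_self] at h
          have hxB := override_full (hLh_i₀ B0 hB0) (hA₁A.trans hAV) x hx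
          have hE := (hLhE x).mp (hLh.prodSub B0 hB0 x hxB)
          apply hsatof
          calc q.g i₀ (x i₀) ≤ m := (Finset.mem_filter.mp hxA₁).2
            _ ≤ max m lo := le_max_left _ _
            _ < negh q i₀ x := hE.1
        · exact hL₁.prods B hB1 x hx
        · exact hL₂.prods B hB2 x hx
      · intro B hBm x hx
        rcases (hmem B).mp hBm with hBF | hB1 | hB2
        · obtain ⟨h1, h2⟩ := hFwin B hBF x hx
          exact ⟨lt_of_le_of_lt (le_max_right m lo) h1, h2⟩
        · obtain ⟨h1, h2⟩ := hL₁.win B hB1 x hx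
          exact ⟨h1, le_trans h2 (min_le_right _ _)⟩
        · obtain ⟨h1, h2⟩ := hL₂.win B hB2 x hx
          exact ⟨lt_of_le_of_lt (le_max_right m lo) h1, h2⟩
      · intro x hxV hxA hsat h1 h2
        by_cases hfm : q.g i₀ (x i₀) ≤ m
        · have hx1 : x i₀ ∈ A₁ := Finset.mem_filter.mpr ⟨hxA, hfm⟩
          by_cases hnm : negh q i₀ x ≤ m
          · obtain ⟨B, hBm, hxB⟩ := hL₁.cov x hxV hx1 hsat h1 (le_min hnm h2)
            exact ⟨B, (hmem B).mpr (Or.inr (Or.inl hBm)), hxB⟩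
          · push_neg at hnm
            obtain ⟨B, hBm, hxB⟩ := hLh.covers x hxV ((hLhE x).mpr ⟨max_lt hnm h1, h2⟩)
            refine ⟨Function.update B i₀ A₁, (hmem _).mpr (Or.inl ?_), ?_⟩
            · rw [hF]; exact List.mem_map_of_mem hBm
            · intro j
              by_cases hj : j = i₀
              · subst hj; rw [Function.update_self]; exact hx1
              · rw [Function.update_of_ne hj]; exact hxB j
        · have hx2 : x i₀ ∈ A₂ := Finset.mem_filter.mpr ⟨hxA, hfm⟩
          have hm2 : m < negh q i₀ x := lt_of_lt_of_le (not_le.mp hfm) (hsatle x hsat)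
          obtain ⟨B, hBm, hxB⟩ := hL₂.cov x hxV hx2 hsat (max_lt hm2 h1) h2
          exact ⟨B, (hmem B).mpr (Or.inr (Or.inr hBm)), hxB⟩
      · intro i x
        rw [hL, List.countP_append, List.countP_append]
        have hcF : (F.countP fun B => decide (∀ j, j ≠ i → x j ∈ B j)) ≤ MB := by
          rw [hF]
          exact countP_override_le (V := V) hLh (Finset.notMem_erase i₀ P)
            (hA₁A.trans hAV) i x
        have hc1' : (L₁.countP fun B => decide (∀ j, j ≠ i → x j ∈ B j)) ≤ MB * dep Dh :=
          hL₁.mult i x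
        have hc2' : (L₂.countP fun B => decide (∀ j, j ≠ i → x j ∈ B j)) ≤ MB * dep Dh :=
          hL₂.mult i x
        by_cases hii : i = i₀
        · subst hii
          by_cases hnm : negh q i x ≤ m
          · have hF0 : (F.countP fun B => decide (∀ j, j ≠ i → x j ∈ B j)) = 0 := by
              rw [List.countP_eq_zero]
              intro B' hB' hpred
              rw [decide_eq_true_eq] at hpred
              have hw := (hFwin B' hB' x hpred).1
              have hmle : m ≤ max m lo := le_max_left m lo
              linarith
            have h20 : (L₂.countP fun B => decide (∀ j, j ≠ i → x j ∈ B j)) = 0 := by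
              rw [List.countP_eq_zero]
              intro B' hB' hpred
              rw [decide_eq_true_eq] at hpred
              have hw := (hL₂.win B' hB' x hpred).1
              have hmle : m ≤ max m lo := le_max_left m lo
              linarith
            rw [hF0, h20, Nat.zero_add, Nat.add_zero]
            exact le_trans hc1' hmono
          · have h10 : (L₁.countP fun B => decide (∀ j, j ≠ i → x j ∈ B j)) = 0 := by
              rw [List.countP_eq_zero]
              intro B' hB' hpred
              rw [decide_eq_true_eq] at hpred
              have hw := (hL₁.win B' hB' x hpred).2
              exact hnm (le_trans hw (min_le_left _ _))
            rw [h10, hmul, Nat.zero_add]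
            exact le_trans (Nat.add_le_add hcF hc2') (le_of_eq (Nat.add_comm _ _))
        · by_cases hx1 : x i₀ ∈ A₁
          · have h20 : (L₂.countP fun B => decide (∀ j, j ≠ i → x j ∈ B j)) = 0 := by
              rw [List.countP_eq_zero]
              intro B' hB' hpred
              rw [decide_eq_true_eq] at hpred
              have hxB : x i₀ ∈ B' i₀ := hpred i₀ (fun hc => hii hc.symm)
              have hsA₂ : B' i₀ ⊆ A₂ := (hL₂.sides B' hB').2.1
              exact (Finset.mem_filter.mp (hsA₂ hxB)).2 (Finset.mem_filter.mp hx1).2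
            rw [h20, Nat.add_zero, hmul]
            exact le_trans (Nat.add_le_add hcF hc1') (le_of_eq (Nat.add_comm _ _))
          · have hF0 : (F.countP fun B => decide (∀ j, j ≠ i → x j ∈ B j)) = 0 := by
              rw [hF, List.countP_eq_zero]
              intro B' hB' hpred
              obtain ⟨B0, hB0, rfl⟩ := List.mem_map.mp hB'
              rw [decide_eq_true_eq] at hpred
              have h := hpred i₀ (fun hc => hii hc.symm)
              rw [Function.update_self] at h
              exact hx1 h
            have h10 : (L₁.countP fun B => decide (∀ j, j ≠ i → x j ∈ B j)) = 0 := by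
              rw [List.countP_eq_zero]
              intro B' hB' hpred
              rw [decide_eq_true_eq] at hpred
              have hxB : x i₀ ∈ B' i₀ := hpred i₀ (fun hc => hii hc.symm)
              exact hx1 ((hL₁.sides B' hB').2.1 hxB)
            rw [hF0, h10, Nat.zero_add, Nat.zero_add]
            exact le_trans hc2' hmono
lemma lemA_base (P : Finset (Fin r)) (hP : P.card ≤ 1) (q : Ineq d) (hq : suppIn q P)
    (V : Bx d) : ∃ L, IsCover V P q.sat L 1 := by
  classical
  rcases Nat.le_one_iff_eq_zero_or_eq_one.mp hP with h0 | h1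
  · -- P = ∅ : constant condition
    have hPe : P = ∅ := Finset.card_eq_zero.mp h0
    have hsum : ∀ x : Pt d, (∑ i, q.g i (x i)) = 0 := by
      intro x
      apply Finset.sum_eq_zero
      intro i _
      exact hq i (by rw [hPe]; exact Finset.notMem_empty i) (x i)
    have hsat : ∀ x : Pt d, q.sat x ↔ (if q.strict then q.c < 0 else q.c ≤ 0) := by
      intro x
      unfold Ineq.sat
      rw [hsum x, zero_add]
    by_cases hcond : (if q.strict then q.c < 0 else q.c ≤ 0)
    · refine ⟨[V], ?_, ?_, ?_, ?_, ?_⟩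
      · intro B hB
        rw [List.mem_singleton] at hB
        subst hB
        exact fun i => subset_rfl
      · intro B hB i _
        rw [List.mem_singleton] at hB
        subst hB
        rfl
      · intro B hB x _
        exact (hsat x).mpr hcond
      · intro x hx _
        exact ⟨V, List.mem_singleton_self V, hx⟩
      · intro i x
        simpa using List.countP_le_length
          (p := fun B => decide (∀ j, j ≠ i → x j ∈ B j)) (l := [V])
    · refine ⟨[], ?_, ?_, ?_, ?_, ?_⟩ <;> try simp
      intro x _ hx
      exact absurd ((hsat x).mp hx) hcond
  · -- P = {i₀}
    obtain ⟨i₀, hPe⟩ := Finset.card_eq_one.mp h1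
    have hsum : ∀ x : Pt d, (∑ i, q.g i (x i)) = q.g i₀ (x i₀) := by
      intro x
      apply Finset.sum_eq_single
      · intro i _ hne
        refine hq i ?_ (x i)
        rw [hPe, Finset.mem_singleton]
        exact hne
      · intro h
        exact absurd (Finset.mem_univ i₀) h
    have hsat : ∀ x : Pt d, q.sat x ↔
        (if q.strict then q.g i₀ (x i₀) + q.c < 0 else q.g i₀ (x i₀) + q.c ≤ 0) := by
      intro x
      unfold Ineq.sat
      rw [hsum x]
    set W := (V i₀).filter
      (fun v => if q.strict then q.g i₀ v + q.c < 0 else q.g i₀ v + q.c ≤ 0) with hW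
    refine ⟨[Function.update V i₀ W], ?_, ?_, ?_, ?_, ?_⟩
    · intro B hB
      rw [List.mem_singleton] at hB
      subst hB
      intro j
      by_cases hj : j = i₀
      · subst hj
        rw [Function.update_self]
        exact Finset.filter_subset _ _
      · rw [Function.update_of_ne hj]
    · intro B hB j hj
      rw [List.mem_singleton] at hB
      subst hB
      have hji : j ≠ i₀ := by
        intro hc
        subst hc
        exact hj (by rw [hPe]; exact Finset.mem_singleton_self j)
      rw [Function.update_of_ne hji]
    · intro B hB x hx
      rw [List.mem_singleton] at hB
      subst hB
      have h := hx i₀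
      rw [Function.update_self, hW, Finset.mem_filter] at h
      exact (hsat x).mpr h.2
    · intro x hx hs
      refine ⟨Function.update V i₀ W, List.mem_singleton_self _, ?_⟩
      intro j
      by_cases hj : j = i₀
      · subst hj
        rw [Function.update_self, hW, Finset.mem_filter]
        exact ⟨hx j, (hsat x).mp hs⟩
      · rw [Function.update_of_ne hj]
        exact hx j
    · intro i x
      simpa using List.countP_le_length
        (p := fun B => decide (∀ j, j ≠ i → x j ∈ B j))
        (l := [Function.update V i₀ W])

lemma lemB (P : Finset (Fin r)) (K MA : ℕ)
    (hA : ∀ (q : Ineq d), suppIn q P → ∀ V : Bx d, dep (NV V) ≤ K →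
      ∃ L, IsCover V P q.sat L MA) :
    ∀ (qs : List (Ineq d)), (∀ q ∈ qs, suppIn q P) → ∀ V : Bx d, dep (NV V) ≤ K →
      ∃ L, IsCover V P (satList qs) L (MA ^ qs.length) := by
  intro qs
  induction qs with
  | nil =>
    intro _ V _
    refine ⟨[V], ?_, ?_, ?_, ?_, ?_⟩
    · intro B hB
      rw [List.mem_singleton] at hB
      subst hB
      exact fun i => subset_rfl
    · intro B hB i _
      rw [List.mem_singleton] at hB
      subst hB
      rfl
    · intro B _ x _ q hq
      exact absurd hq List.not_mem_nil
    · intro x hx _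
      exact ⟨V, List.mem_singleton_self V, hx⟩
    · intro i x
      simpa using List.countP_le_length
        (p := fun B => decide (∀ j, j ≠ i → x j ∈ B j)) (l := [V])
  | cons q qs IHqs =>
    intro hsupp V hV
    obtain ⟨L₁, hL₁⟩ := hA q (hsupp q List.mem_cons_self) V hV
    have hinner : ∀ B ∈ L₁, ∃ L', IsCover B P (satList qs) L' (MA ^ qs.length) := by
      intro B hBm
      exact IHqs (fun q' hq' => hsupp q' (List.mem_cons_of_mem q hq')) B
        (le_trans (dep_mono (NV_mono (hL₁.sub B hBm))) hV)
    obtain ⟨L, hL⟩ := cover_comp hL₁ hinner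
    refine ⟨L, ((hL.mono_P (by rw [Finset.union_self]) ).congr ?_).mono_M (le_of_eq ?_)⟩
    · intro x
      constructor
      · rintro ⟨h1, h2⟩ q' hq'
        rcases List.mem_cons.mp hq' with rfl | hq'
        · exact h1
        · exact h2 q' hq'
      · intro h
        exact ⟨h q List.mem_cons_self, fun q' hq' => h q' (List.mem_cons_of_mem q hq')⟩
    · rw [List.length_cons, pow_succ]
      ring

lemma lemA : ∀ (n : ℕ) (P : Finset (Fin r)), P.card ≤ n →
    ∀ (K : ℕ), 1 ≤ K → ∀ (q : Ineq d), suppIn q P → ∀ V : Bx d, dep (NV V) ≤ K →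
    ∃ L, IsCover V P q.sat L (K ^ (2 ^ (P.card - 1) - 1)) := by
  intro n
  induction n with
  | zero =>
    intro P hP K hK q hq V _
    obtain ⟨L, hL⟩ := lemA_base P (by omega) q hq V
    exact ⟨L, hL.mono_M (Nat.one_le_pow _ _ (by omega))⟩
  | succ n IHn =>
    intro P hP K hK q hq V hV
    by_cases hP1 : P.card ≤ 1
    · obtain ⟨L, hL⟩ := lemA_base P hP1 q hq V
      exact ⟨L, hL.mono_M (Nat.one_le_pow _ _ (by omega))⟩
    · push_neg at hP1
      have hPne : P.Nonempty := Finset.card_pos.mp (by omega)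
      obtain ⟨i₀, hi₀⟩ := hPne
      have hP'c : (P.erase i₀).card = P.card - 1 := Finset.card_erase_of_mem hi₀
      set e' := 2 ^ ((P.erase i₀).card - 1) - 1 with he'
      set MA := K ^ e' with hMA
      by_cases hVne : ∀ i, (V i).Nonempty
      · have hA' : ∀ (q' : Ineq d), suppIn q' (P.erase i₀) → ∀ W : Bx d,
            dep (NV W) ≤ K → ∃ L, IsCover W (P.erase i₀) q'.sat L MA :=
          fun q' hq' W hW => IHn (P.erase i₀) (by omega) K hK q' hq' W hW
        have hBB : ∀ q₁ q₂ : Ineq d, suppIn q₁ (P.erase i₀) → suppIn q₂ (P.erase i₀) →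
            ∃ L, IsCover V (P.erase i₀) (fun x => q₁.sat x ∧ q₂.sat x) L (MA ^ 2) := by
          intro q₁ q₂ h1 h2
          have hsupp2 : ∀ q' ∈ [q₁, q₂], suppIn q' (P.erase i₀) := by
            intro q' hq'
            rcases List.mem_cons.mp hq' with rfl | hq'
            · exact h1
            · rw [List.mem_singleton] at hq'
              subst hq'
              exact h2
          obtain ⟨L, hL⟩ := lemB (P.erase i₀) K MA hA' [q₁, q₂] hsupp2 V hV
          refine ⟨L, (hL.congr ?_).mono_M (le_of_eq (by simp))⟩
          intro x
          constructor
          · intro h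
            exact ⟨h q₁ (by simp), h q₂ (by simp)⟩
          · rintro ⟨hx1, hx2⟩ q' hq'
            rcases List.mem_cons.mp hq' with rfl | hq'
            · exact hx1
            · rw [List.mem_singleton] at hq'
              subst hq'
              exact hx2
        have hpine : (Fintype.piFinset V).Nonempty :=
          ⟨fun i => (hVne i).choose, Fintype.mem_piFinset.mpr fun i => (hVne i).choose_spec⟩
        have hhne : (hvals q i₀ V).Nonempty := hpine.image _
        set lo := (hvals q i₀ V).min' hhne - 1 with hlo
        set hi := (hvals q i₀ V).max' hhne with hhi
        have hTbound : (tset q i₀ V (V i₀) lo hi).card ≤ NV V := by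
          have h1 : (tset q i₀ V (V i₀) lo hi).card ≤
              ((V i₀).image (q.g i₀)).card +
              ((hvals q i₀ V).filter (fun w => lo < w ∧ w ≤ hi)).card := by
            unfold tset
            exact Finset.card_union_le _ _
          have h2 : ((V i₀).image (q.g i₀)).card ≤ (V i₀).card := Finset.card_image_le
          have h3 : ((hvals q i₀ V).filter (fun w => lo < w ∧ w ≤ hi)).card
              ≤ (hvals q i₀ V).card := Finset.card_filter_le _ _
          have h4 : (hvals q i₀ V).card ≤ (Fintype.piFinset V).card := Finset.card_image_le
          have h5 : (Fintype.piFinset V).card = ∏ i, (V i).card := Fintype.card_piFinset V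
          have h6 : (V i₀).card ≤ ∑ i, (V i).card :=
            Finset.single_le_sum (f := fun i => (V i).card) (fun i _ => Nat.zero_le _)
              (Finset.mem_univ i₀)
          unfold NV
          omega
        obtain ⟨L, hgood⟩ := auxCover q P i₀ hi₀ hq V (MA ^ 2) hBB (NV V) (V i₀) lo hi
          subset_rfl hTbound
        refine ⟨L, ?_, ?_, hgood.prods, ?_, ?_⟩
        · intro B hBm
          exact (hgood.sides B hBm).1
        · intro B hBm i hi'
          exact (hgood.sides B hBm).2.2.1 i hi'
        · intro x hx hsat
          apply hgood.cov x hx (hx i₀) hsat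
          · have hmem : negh q i₀ x ∈ hvals q i₀ V :=
              Finset.mem_image_of_mem _ (Fintype.mem_piFinset.mpr hx)
            have h := Finset.min'_le _ _ hmem
            rw [hlo]
            linarith
          · exact Finset.le_max' _ _ (Finset.mem_image_of_mem _ (Fintype.mem_piFinset.mpr hx))
        · intro i x
          have hexp : e' * 2 + 1 = 2 ^ (P.card - 1) - 1 := by
            rw [he', hP'c]
            have hp2 : P.card - 1 - 1 = P.card - 2 := by omega
            rw [hp2]
            have h2 : (2:ℕ) ^ (P.card - 1) = 2 * 2 ^ (P.card - 2) := by
              have he : P.card - 1 = (P.card - 2) + 1 := by omega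
              rw [he, pow_succ]
              ring
            have h1 : 1 ≤ (2:ℕ) ^ (P.card - 2) := Nat.one_le_two_pow
            omega
          calc _ ≤ MA ^ 2 * dep (NV V) := hgood.mult i x
            _ ≤ MA ^ 2 * K := Nat.mul_le_mul_left _ hV
            _ = K ^ (e' * 2 + 1) := by rw [hMA]; ring
            _ = K ^ (2 ^ (P.card - 1) - 1) := by rw [hexp]
      · exact ⟨[], cover_of_empty hVne⟩
/-! ### counting lemmas -/

lemma list_sum_mul {α : Type*} (l : List α) (f : α → ℕ) (c : ℕ) :
    (l.map f).sum * c = (l.map fun a => f a * c).sum := by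
  induction l with
  | nil => simp
  | cons a l IH => simp [Nat.add_mul, IH]

lemma list_sum_mul_left {α : Type*} (l : List α) (f : α → ℕ) (c : ℕ) :
    (l.map fun a => c * f a).sum = c * (l.map f).sum := by
  induction l with
  | nil => simp
  | cons a l IH => simp [Nat.mul_add, IH]

lemma list_map_congr' {α β : Type*} {l : List α} {f g : α → β}
    (h : ∀ a ∈ l, f a = g a) : l.map f = l.map g := by
  induction l with
  | nil => simp
  | cons a l IH =>
    simp only [List.map_cons]
    rw [h a (by simp), IH (fun b hb => h b (by simp [hb]))]

lemma list_sum_finset_sum {α β : Type*} (L : List α) (S : Finset β) (g : α → β → ℕ) :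
    (L.map fun a => ∑ x ∈ S, g a x).sum = ∑ x ∈ S, (L.map fun a => g a x).sum := by
  induction L with
  | nil => simp
  | cons a L IH => simp [IH, Finset.sum_add_distrib]

lemma sum_map_ite_prop {α : Type*} (l : List α) (p : α → Prop) [∀ a, Decidable (p a)] :
    (l.map fun a => if p a then 1 else 0).sum = l.countP fun a => decide (p a) := by
  induction l with
  | nil => simp
  | cons a l IH =>
    by_cases h : p a <;> simp [List.countP_cons, h, IH, Nat.add_comm]

lemma card_le_boxes {S : Finset (Pt d)} {L : List (Bx d)}
    (h : ∀ x ∈ S, ∃ B ∈ L, ∀ i, x i ∈ B i) :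
    S.card ≤ (L.map fun B => ∏ i, (B i).card).sum := by
  classical
  induction L generalizing S with
  | nil =>
    have hS : S = ∅ := by
      rw [Finset.eq_empty_iff_forall_notMem]
      intro x hx
      obtain ⟨B, hB, _⟩ := h x hx
      exact absurd hB List.not_mem_nil
    simp [hS]
  | cons B L IH =>
    have hsplit := Finset.card_filter_add_card_filter_not
      (s := S) (p := fun x => ∀ i, x i ∈ B i)
    have h1 : (S.filter (fun x => ∀ i, x i ∈ B i)).card ≤ ∏ i, (B i).card := by
      calc _ ≤ (Fintype.piFinset B).card := Finset.card_le_card (fun x hx =>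
            Fintype.mem_piFinset.mpr (Finset.mem_filter.mp hx).2)
        _ = ∏ i, (B i).card := Fintype.card_piFinset B
    have h2 : (S.filter (fun x => ¬ ∀ i, x i ∈ B i)).card ≤
        (L.map fun B => ∏ i, (B i).card).sum := by
      apply IH
      intro x hx
      obtain ⟨hxS, hxn⟩ := Finset.mem_filter.mp hx
      obtain ⟨B', hB', hxB'⟩ := h x hxS
      rcases List.mem_cons.mp hB' with rfl | hB'
      · exact absurd hxB' hxn
      · exact ⟨B', hB', hxB'⟩
    simp only [List.map_cons, List.sum_cons]
    rw [← hsplit]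
    exact Nat.add_le_add h1 h2

lemma cover_weight {V : Bx d} {P : Finset (Fin r)} {E : Pt d → Prop} {L : List (Bx d)}
    {M : ℕ} (hC : IsCover V P E L M) (i : Fin r) (hVi : (V i).Nonempty) :
    (L.map fun B => ∏ j ∈ Finset.univ.erase i, (B j).card).sum ≤
      M * ∏ j ∈ Finset.univ.erase i, (V j).card := by
  classical
  have hBcard : ∀ B ∈ L, (∏ j ∈ Finset.univ.erase i, (B j).card) * (V i).card =
      ((Fintype.piFinset V).filter (fun x => ∀ j, j ≠ i → x j ∈ B j)).card := by
    intro B hB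
    have he : (Fintype.piFinset (Function.update B i (V i)))
        = (Fintype.piFinset V).filter (fun x => ∀ j, j ≠ i → x j ∈ B j) := by
      ext x
      simp only [Fintype.mem_piFinset, Finset.mem_filter]
      constructor
      · intro h
        constructor
        · intro j
          by_cases hj : j = i
          · subst hj
            have hh := h j
            rwa [Function.update_self] at hh
          · have hh := h j
            rw [Function.update_of_ne hj] at hh
            exact hC.sub B hB j hh
        · intro j hj
          have hh := h j
          rwa [Function.update_of_ne hj] at hh
      · rintro ⟨h1, h2⟩ j
        by_cases hj : j = i
        · subst hj
          rw [Function.update_self]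
          exact h1 j
        · rw [Function.update_of_ne hj]
          exact h2 j hj
    have hprod : (∏ j, (Function.update B i (V i) j).card)
        = (V i).card * ∏ j ∈ Finset.univ.erase i, (B j).card := by
      rw [← Finset.mul_prod_erase Finset.univ
        (fun j => (Function.update B i (V i) j).card) (Finset.mem_univ i)]
      rw [Function.update_self]
      congr 1
      apply Finset.prod_congr rfl
      intro j hj
      rw [Function.update_of_ne (Finset.ne_of_mem_erase hj)]
    calc (∏ j ∈ Finset.univ.erase i, (B j).card) * (V i).card
        = ∏ j, (Function.update B i (V i) j).card := by rw [hprod]; ring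
      _ = (Fintype.piFinset (Function.update B i (V i))).card :=
          (Fintype.card_piFinset _).symm
      _ = _ := by rw [he]
  have key : (L.map fun B => ∏ j ∈ Finset.univ.erase i, (B j).card).sum * (V i).card ≤
      (M * ∏ j ∈ Finset.univ.erase i, (V j).card) * (V i).card := by
    calc (L.map fun B => ∏ j ∈ Finset.univ.erase i, (B j).card).sum * (V i).card
        = (L.map fun B => (∏ j ∈ Finset.univ.erase i, (B j).card) * (V i).card).sum :=
          list_sum_mul _ _ _
      _ = (L.map fun B =>
            ((Fintype.piFinset V).filter (fun x => ∀ j, j ≠ i → x j ∈ B j)).card).sum := by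
          rw [list_map_congr' hBcard]
      _ = (L.map fun B => ∑ x ∈ Fintype.piFinset V,
            if (∀ j, j ≠ i → x j ∈ B j) then 1 else 0).sum := by
          apply congrArg List.sum
          apply list_map_congr'
          intro B _
          rw [Finset.card_filter]
      _ = ∑ x ∈ Fintype.piFinset V, (L.map fun B =>
            if (∀ j, j ≠ i → x j ∈ B j) then 1 else 0).sum := by
          rw [list_sum_finset_sum]
      _ = ∑ x ∈ Fintype.piFinset V,
            (L.countP fun B => decide (∀ j, j ≠ i → x j ∈ B j)) := by
          apply Finset.sum_congr rfl
          intro x _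
          exact sum_map_ite_prop _ _
      _ ≤ ∑ _x ∈ Fintype.piFinset V, M := Finset.sum_le_sum (fun x _ => hC.mult i x)
      _ = (Fintype.piFinset V).card * M := by rw [Finset.sum_const, smul_eq_mul]
      _ = (M * ∏ j ∈ Finset.univ.erase i, (V j).card) * (V i).card := by
          rw [Fintype.card_piFinset,
            ← Finset.mul_prod_erase Finset.univ (fun j => (V j).card) (Finset.mem_univ i)]
          ring
  exact Nat.le_of_mul_le_mul_right key (Finset.card_pos.mpr hVi)
/-! ### from semilinear cells to covers -/

lemma cell_cover (s' : ℕ) (X : Set (Pt d)) (hX : IsSemilinearCell s' X) (K : ℕ)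
    (hK : 1 ≤ K) (V : Bx d) (hV : dep (NV V) ≤ K) :
    ∃ L, IsCover V Finset.univ (fun x => x ∈ X) L
      (K ^ ((2 ^ ((Finset.univ : Finset (Fin r)).card - 1) - 1) * s')) := by
  classical
  obtain ⟨p, hp, lam, a, hXeq⟩ := hX
  set mkq : Fin s' → Ineq d := fun idx =>
    ⟨fun i v => (∑ c, lam idx i c * v c), a idx, decide (p ≤ (idx : ℕ))⟩ with hmkq
  set qs := (List.finRange s').map mkq with hqs
  have hsupp : ∀ q' ∈ qs, suppIn q' Finset.univ := by
    intro q' _ i hi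
    exact absurd (Finset.mem_univ i) hi
  have hsat1 : ∀ (idx : Fin s') (x : Pt d),
      ((mkq idx).sat x) ↔
      (if p ≤ (idx : ℕ) then (∑ i, ∑ c, lam idx i c * x i c) + a idx < 0
        else (∑ i, ∑ c, lam idx i c * x i c) + a idx ≤ 0) := by
    intro idx x
    rw [hmkq]
    unfold Ineq.sat
    by_cases hc : p ≤ (idx : ℕ) <;> simp [hc]
  have hsat : ∀ x : Pt d, satList qs x ↔ x ∈ X := by
    intro x
    rw [hXeq]
    simp only [Set.mem_setOf_eq]
    constructor
    · intro h idx
      have hq := (hsat1 idx x).mp (h _ (List.mem_map_of_mem (List.mem_finRange idx)))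
      by_cases hc : p ≤ (idx : ℕ)
      · rw [if_pos hc] at hq
        exact ⟨fun hlt => absurd hc (by omega), fun _ => hq⟩
      · rw [if_neg hc] at hq
        exact ⟨fun _ => hq, fun hple => absurd hple hc⟩
    · intro h q' hq'
      rw [hqs] at hq'
      obtain ⟨idx, _, rfl⟩ := List.mem_map.mp hq'
      rw [hsat1 idx x]
      by_cases hc : p ≤ (idx : ℕ)
      · rw [if_pos hc]
        exact (h idx).2 hc
      · rw [if_neg hc]
        exact (h idx).1 (by omega)
  obtain ⟨L, hL⟩ := lemB (d := d) Finset.univ K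
    (K ^ (2 ^ ((Finset.univ : Finset (Fin r)).card - 1) - 1))
    (fun q' hq' W hW =>
      lemA (Finset.univ : Finset (Fin r)).card Finset.univ le_rfl K hK q' hq' W hW)
    qs hsupp V hV
  refine ⟨L, (hL.congr hsat).mono_M (le_of_eq ?_)⟩
  rw [← pow_mul]
  congr 1
  rw [hqs, List.length_map, List.length_finRange]
/-! ### the logarithmic estimate -/

lemma K_log_bound (N δn : ℕ) (hδ : 2 ≤ δn) (hN1 : 1 ≤ N) (hNle : N ≤ 2 * δn ^ 2) :
    ((dep N + 1 : ℕ) : ℝ) ≤ (3 / Real.log 2 + 3) * Real.log ((δn : ℝ) + 1) := by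
  have hlog2 : (0:ℝ) < Real.log 2 := Real.log_pos (by norm_num)
  have hδR : (2:ℝ) ≤ (δn:ℝ) := by exact_mod_cast hδ
  have hlogδ1 : (1:ℝ) ≤ Real.log ((δn:ℝ) + 1) := by
    have he : Real.exp 1 ≤ (δn:ℝ) + 1 := by
      have h9 := Real.exp_one_lt_d9
      linarith
    calc (1:ℝ) = Real.log (Real.exp 1) := (Real.log_exp 1).symm
      _ ≤ Real.log ((δn:ℝ) + 1) := Real.log_le_log (Real.exp_pos 1) he
  have hdep : ((dep N : ℕ) : ℝ) ≤ ((Nat.log 2 N : ℕ) : ℝ) + 2 := by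
    exact_mod_cast dep_le_log N
  have hNat : ((Nat.log 2 N : ℕ) : ℝ) * Real.log 2 ≤ Real.log N := by
    have hpow : (2:ℕ) ^ (Nat.log 2 N) ≤ N := Nat.pow_log_le_self 2 (by omega)
    have hpowR : (2:ℝ) ^ (Nat.log 2 N) ≤ (N:ℝ) := by exact_mod_cast hpow
    calc ((Nat.log 2 N : ℕ) : ℝ) * Real.log 2 = Real.log ((2:ℝ) ^ (Nat.log 2 N)) := by
          rw [Real.log_pow]
      _ ≤ Real.log N := Real.log_le_log (by positivity) hpowR
  have hlogN : Real.log N ≤ 3 * Real.log ((δn:ℝ) + 1) := by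
    have h1 : (N:ℝ) ≤ 2 * (δn:ℝ)^2 := by exact_mod_cast hNle
    have hNpos : (0:ℝ) < (N:ℝ) := by exact_mod_cast hN1
    have h2 : Real.log N ≤ Real.log (2 * (δn:ℝ)^2) := Real.log_le_log hNpos h1
    rw [Real.log_mul (by norm_num) (by positivity), Real.log_pow] at h2
    have h3 : Real.log 2 ≤ Real.log ((δn:ℝ)+1) := Real.log_le_log (by norm_num) (by linarith)
    have h4 : Real.log (δn:ℝ) ≤ Real.log ((δn:ℝ)+1) := Real.log_le_log (by linarith) (by linarith)
    push_cast at h2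
    linarith
  have hNatle : ((Nat.log 2 N : ℕ) : ℝ) ≤ 3 * Real.log ((δn:ℝ)+1) / Real.log 2 := by
    rw [le_div_iff₀ hlog2]
    linarith
  have hdN : ((dep N : ℕ) : ℝ) ≤ 3 * Real.log ((δn:ℝ)+1) / Real.log 2 + 2 := by linarith
  calc ((dep N + 1 : ℕ) : ℝ) = ((dep N : ℕ) : ℝ) + 1 := by push_cast; ring
    _ ≤ 3 * Real.log ((δn:ℝ)+1) / Real.log 2 + 3 := by linarith
    _ ≤ 3 * Real.log ((δn:ℝ)+1) / Real.log 2 + 3 * Real.log ((δn:ℝ)+1) := by linarith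
    _ = (3 / Real.log 2 + 3) * Real.log ((δn:ℝ) + 1) := by ring
end SemiZar

/-- Zarankiewicz bound for semilinear hypergraphs: for every `r ≥ 2` and `s, t, k` there
is `α ∈ ℝ` with `β := s(2^{r-1} − 1)` such that for every semilinear
`X ⊆ ℝ^{d₁} × ⋯ × ℝ^{d_r}` of description complexity `(s, t)` and all finite `V_i`,
if `E := X ∩ (V₁ × ⋯ × V_r)` is `K_{k,…,k}`-free then
`|E| ≤ α · δ^r_{r-1}(V) · log^β(δ^r_{r-1}(V) + 1)`. -/


theorem semilinear_zarankiewicz (r s t k : ℕ) (hr : 2 ≤ r) :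
    ∃ α : ℝ, ∀ (d : Fin r → ℕ) (X : Set (∀ i, Fin (d i) → ℝ)),
      IsSemilinearOfComplexity s t X →
      ∀ V : ∀ i, Finset (Fin (d i) → ℝ),
      (¬ ∃ C : ∀ i, Finset (Fin (d i) → ℝ), (∀ i, C i ⊆ V i) ∧
          (∀ i, (C i).card = k) ∧
          ∀ x : ∀ i, Fin (d i) → ℝ, (∀ i, x i ∈ C i) → x ∈ X ∧ ∀ i, x i ∈ V i) →
      (Set.ncard {x ∈ X | ∀ i, x i ∈ V i} : ℝ) ≤
        α * (∑ i, ∏ j ∈ Finset.univ.erase i, ((V j).card : ℝ)) *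
          Real.log ((∑ i, ∏ j ∈ Finset.univ.erase i, ((V j).card : ℝ)) + 1) ^
            (s * (2 ^ (r - 1) - 1)) := by
  classical
  open SemiZar in
  set β := s * (2 ^ (r - 1) - 1) with hβ
  set Creal : ℝ := 3 / Real.log 2 + 3 with hCreal
  have hlog2 : (0:ℝ) < Real.log 2 := Real.log_pos (by norm_num)
  have hCpos : (0:ℝ) ≤ Creal := by rw [hCreal]; positivity
  refine ⟨(t : ℝ) * (k : ℝ) * Creal ^ β, ?_⟩
  intro d X hX V hfree
  set δR := (∑ i, ∏ j ∈ Finset.univ.erase i, ((V j).card : ℝ)) with hδR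
  rcases Nat.eq_zero_or_pos k with hk0 | hk
  · exfalso
    apply hfree
    refine ⟨fun i => ∅, fun i => Finset.empty_subset _, fun i => by simp [hk0], ?_⟩
    intro x hx
    have h0 : (0:ℕ) < r := by omega
    exact absurd (hx ⟨0, h0⟩) (Finset.notMem_empty _)
  have hδRnn : (0:ℝ) ≤ δR := by
    rw [hδR]
    exact Finset.sum_nonneg fun i _ => Finset.prod_nonneg fun j _ => Nat.cast_nonneg _
  have hlognn : (0:ℝ) ≤ Real.log (δR + 1) := Real.log_nonneg (by linarith)
  have hαnn : (0:ℝ) ≤ (t:ℝ) * (k:ℝ) * Creal ^ β :=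
    mul_nonneg (mul_nonneg (Nat.cast_nonneg t) (Nat.cast_nonneg k)) (pow_nonneg hCpos β)
  by_cases hVne : ∀ i, (V i).Nonempty
  swap
  · push_neg at hVne
    obtain ⟨i0, hi0⟩ := hVne
    have hE : {x ∈ X | ∀ i, x i ∈ V i} = (∅ : Set (∀ i, Fin (d i) → ℝ)) := by
      rw [Set.eq_empty_iff_forall_notMem]
      rintro x ⟨_, hx⟩
      have hc := hx i0
      rw [hi0] at hc
      exact absurd hc (Finset.notMem_empty _)
    rw [hE]
    simp only [Set.ncard_empty, Nat.cast_zero]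
    exact mul_nonneg (mul_nonneg hαnn hδRnn) (pow_nonneg hlognn _)
  obtain ⟨t', ht', C, hcells, hXeq⟩ := hX
  set δn := ∑ i, ∏ j ∈ Finset.univ.erase i, (V j).card with hδn
  have hδcast : δR = (δn : ℝ) := by
    rw [hδR, hδn]
    push_cast
    ring
  have hcard1 : ∀ i, 1 ≤ (V i).card := fun i => Finset.card_pos.mpr (hVne i)
  have hprod1 : ∀ i, 1 ≤ ∏ j ∈ Finset.univ.erase i, (V j).card := by
    intro i
    apply Finset.one_le_prod'
    intro j _
    exact hcard1 j
  have hδr : r ≤ δn := by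
    calc r = ∑ _i : Fin r, 1 := by simp
      _ ≤ δn := Finset.sum_le_sum (fun i _ => hprod1 i)
  have hδ2 : 2 ≤ δn := le_trans hr hδr
  have h0r : (0:ℕ) < r := by omega
  have h1r : (1:ℕ) < r := by omega
  have hVleδ : ∀ i, (V i).card ≤ δn := by
    intro i
    set i' : Fin r := if i = ⟨0, h0r⟩ then ⟨1, h1r⟩ else ⟨0, h0r⟩ with hi'
    have hne : i ≠ i' := by
      rw [hi']
      by_cases hc : i = ⟨0, h0r⟩
      · rw [if_pos hc, hc]
        intro hcon
        rw [Fin.ext_iff] at hcon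
        simp at hcon
      · rw [if_neg hc]
        exact hc
    calc (V i).card ≤ ∏ j ∈ Finset.univ.erase i', (V j).card :=
        Finset.single_le_prod' (fun j _ => hcard1 j)
          (Finset.mem_erase.mpr ⟨hne, Finset.mem_univ i⟩)
      _ ≤ δn := Finset.single_le_sum
          (f := fun i => ∏ j ∈ Finset.univ.erase i, (V j).card)
          (fun _ _ => Nat.zero_le _) (Finset.mem_univ i')
  have hNle : NV V ≤ 2 * δn ^ 2 := by
    have h1 : (∑ i, (V i).card) ≤ r * δn := by
      calc _ ≤ ∑ _i : Fin r, δn := Finset.sum_le_sum (fun i _ => hVleδ i)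
        _ = r * δn := by simp [Finset.sum_const, mul_comm]
    have h2 : (∏ i, (V i).card) ≤ δn * δn := by
      set i0 : Fin r := ⟨0, h0r⟩
      calc (∏ i, (V i).card) = (V i0).card * ∏ j ∈ Finset.univ.erase i0, (V j).card :=
          (Finset.mul_prod_erase _ _ (Finset.mem_univ i0)).symm
        _ ≤ δn * δn := Nat.mul_le_mul (hVleδ i0)
            (Finset.single_le_sum
              (f := fun i => ∏ j ∈ Finset.univ.erase i, (V j).card)
              (fun _ _ => Nat.zero_le _) (Finset.mem_univ i0))
    have hrδ : r * δn ≤ δn * δn := Nat.mul_le_mul_right _ hδr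
    calc NV V = (∑ i, (V i).card) + ∏ i, (V i).card := rfl
      _ ≤ r * δn + δn * δn := Nat.add_le_add h1 h2
      _ ≤ δn * δn + δn * δn := Nat.add_le_add_right hrδ _
      _ = 2 * δn ^ 2 := by ring
  have hN1 : 1 ≤ NV V := by
    have h1 : r ≤ ∑ i, (V i).card := by
      calc r = ∑ _i : Fin r, 1 := by simp
        _ ≤ _ := Finset.sum_le_sum (fun i _ => hcard1 i)
    have : NV V = (∑ i, (V i).card) + ∏ i, (V i).card := rfl
    omega
  set K := dep (NV V) + 1 with hK
  have hKlog : ((K:ℕ):ℝ) ≤ Creal * Real.log ((δn:ℝ) + 1) := by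
    rw [hK, hCreal]
    exact K_log_bound (NV V) δn hδ2 hN1 hNle
  set M := K ^ ((2 ^ ((Finset.univ : Finset (Fin r)).card - 1) - 1) * s) with hM
  have hcellbound : ∀ j : Fin t',
      ((Fintype.piFinset V).filter (fun x => x ∈ C j)).card ≤ (k-1) * (M * δn) := by
    intro j
    obtain ⟨L, hL⟩ := cell_cover s (C j) (hcells j) K (by omega) V (by omega)
    have hsmall : ∀ B ∈ L, ∃ i, (B i).card ≤ k - 1 := by
      intro B hBm
      by_contra hcon
      push_neg at hcon
      have hex : ∀ i, ∃ Ci, Ci ⊆ B i ∧ Ci.card = k := by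
        intro i
        have hki : k ≤ (B i).card := by
          have := hcon i
          omega
        obtain ⟨Ci, h1, h2⟩ := Finset.exists_subset_card_eq hki
        exact ⟨Ci, h1, h2⟩
      choose Cc hC1 hC2 using hex
      apply hfree
      refine ⟨Cc, fun i => (hC1 i).trans (hL.sub B hBm i), hC2, ?_⟩
      intro x hx
      have hxB : ∀ i, x i ∈ B i := fun i => hC1 i (hx i)
      constructor
      · rw [hXeq]
        exact Set.mem_iUnion.mpr ⟨j, hL.prodSub B hBm x hxB⟩
      · exact fun i => hL.sub B hBm i (hxB i)
    have hcov : ∀ x ∈ (Fintype.piFinset V).filter (fun x => x ∈ C j),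
        ∃ B ∈ L, ∀ i, x i ∈ B i := by
      intro x hx
      obtain ⟨hx1, hx2⟩ := Finset.mem_filter.mp hx
      exact hL.covers x (Fintype.mem_piFinset.mp hx1) hx2
    have hperB : ∀ B ∈ L, (∏ i, (B i).card) ≤
        (k-1) * ∑ i, ∏ j' ∈ Finset.univ.erase i, (B j').card := by
      intro B hBm
      obtain ⟨i', hi'⟩ := hsmall B hBm
      calc (∏ i, (B i).card)
          = (B i').card * ∏ j' ∈ Finset.univ.erase i', (B j').card :=
            (Finset.mul_prod_erase _ _ (Finset.mem_univ i')).symm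
        _ ≤ (k-1) * ∏ j' ∈ Finset.univ.erase i', (B j').card :=
            Nat.mul_le_mul_right _ hi'
        _ ≤ (k-1) * ∑ i, ∏ j' ∈ Finset.univ.erase i, (B j').card :=
            Nat.mul_le_mul_left _ (Finset.single_le_sum
              (f := fun i => ∏ j' ∈ Finset.univ.erase i, (B j').card)
              (fun _ _ => Nat.zero_le _) (Finset.mem_univ i'))
    calc ((Fintype.piFinset V).filter (fun x => x ∈ C j)).card
        ≤ (L.map fun B => ∏ i, (B i).card).sum := card_le_boxes hcov
      _ ≤ (L.map fun B => (k-1) * ∑ i, ∏ j' ∈ Finset.univ.erase i, (B j').card).sum :=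
          list_sum_map_le _ _ _ hperB
      _ = (k-1) * (L.map fun B => ∑ i, ∏ j' ∈ Finset.univ.erase i, (B j').card).sum :=
          list_sum_mul_left _ _ _
      _ = (k-1) * ∑ i, (L.map fun B => ∏ j' ∈ Finset.univ.erase i, (B j').card).sum := by
          rw [list_sum_finset_sum]
      _ ≤ (k-1) * ∑ i, M * ∏ j' ∈ Finset.univ.erase i, (V j').card :=
          Nat.mul_le_mul_left _ (Finset.sum_le_sum (fun i _ => cover_weight hL i (hVne i)))
      _ = (k-1) * (M * δn) := by rw [← Finset.mul_sum, hδn]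
  set FF := (Fintype.piFinset V).filter (fun x => x ∈ X) with hFF
  have hFFsub : FF ⊆ Finset.univ.biUnion
      (fun j : Fin t' => (Fintype.piFinset V).filter (fun x => x ∈ C j)) := by
    intro x hx
    obtain ⟨hx1, hx2⟩ := Finset.mem_filter.mp hx
    rw [hXeq] at hx2
    obtain ⟨j, hj⟩ := Set.mem_iUnion.mp hx2
    exact Finset.mem_biUnion.mpr ⟨j, Finset.mem_univ j, Finset.mem_filter.mpr ⟨hx1, hj⟩⟩
  have hFFcard : FF.card ≤ t * ((k-1) * (M * δn)) := by
    calc FF.card ≤ _ := Finset.card_le_card hFFsub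
      _ ≤ ∑ j : Fin t', ((Fintype.piFinset V).filter (fun x => x ∈ C j)).card :=
          Finset.card_biUnion_le
      _ ≤ ∑ _j : Fin t', (k-1) * (M * δn) := Finset.sum_le_sum (fun j _ => hcellbound j)
      _ = t' * ((k-1) * (M * δn)) := by simp [Finset.sum_const, mul_comm]
      _ ≤ t * ((k-1) * (M * δn)) := Nat.mul_le_mul_right _ ht'
  have hEeq : {x ∈ X | ∀ i, x i ∈ V i} = (FF : Set (∀ i, Fin (d i) → ℝ)) := by
    ext x
    simp only [Set.mem_setOf_eq, hFF, Finset.coe_filter, Fintype.mem_piFinset]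
    tauto
  rw [hEeq, Set.ncard_coe_finset]
  have hMle : (M : ℝ) ≤ (Creal * Real.log ((δn:ℝ)+1)) ^ β := by
    have hexp : (2 ^ ((Finset.univ : Finset (Fin r)).card - 1) - 1) * s = β := by
      rw [hβ, Finset.card_univ, Fintype.card_fin]
      ring
    rw [hM, hexp, Nat.cast_pow]
    exact pow_le_pow_left₀ (Nat.cast_nonneg K) hKlog β
  have hfinal : (FF.card : ℝ) ≤ (t:ℝ) * (k:ℝ) * Creal^β *
      ((δn:ℝ) * Real.log ((δn:ℝ)+1) ^ β) := by
    have hkk : ((k-1:ℕ):ℝ) ≤ (k:ℝ) := by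
      have := Nat.sub_le k 1
      exact_mod_cast this
    calc (FF.card : ℝ) ≤ ((t * ((k-1) * (M * δn)) : ℕ) : ℝ) := by exact_mod_cast hFFcard
      _ = (t:ℝ) * (((k-1:ℕ):ℝ) * ((M:ℝ) * (δn:ℝ))) := by push_cast; ring
      _ ≤ (t:ℝ) * ((k:ℝ) * (((Creal * Real.log ((δn:ℝ)+1))^β) * (δn:ℝ))) := by
          apply mul_le_mul_of_nonneg_left _ (Nat.cast_nonneg t)
          apply mul_le_mul hkk _ (mul_nonneg (Nat.cast_nonneg M) (Nat.cast_nonneg δn))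
            (Nat.cast_nonneg k)
          exact mul_le_mul_of_nonneg_right hMle (Nat.cast_nonneg δn)
      _ = (t:ℝ) * (k:ℝ) * Creal^β * ((δn:ℝ) * Real.log ((δn:ℝ)+1) ^ β) := by
          rw [mul_pow]
          ring
  rw [hδcast]
  calc (FF.card : ℝ) ≤ _ := hfinal
    _ = (t:ℝ) * (k:ℝ) * Creal^β * (δn:ℝ) * Real.log ((δn:ℝ)+1) ^ β := by ring
end
end

section
/- For every s, k ∈ ℕ there exists α = α(s, k) ∈ ℝ satisfying the following. Let d ∈ ℕ and let H_1, …, H_s ⊆ ℝ^d be half-spaces (each either open, of the form {x̄ : Σ_j a_j x_j > b}, or closed, of the form {x̄ : Σ_j a_j x_j ≥ b}). Let 𝓕 be the family of all polytopes of the form ∩_{i ∈ [s]} (ȳ_i + H_i) over all translation vectors ȳ_1, …, ȳ_s ∈ ℝ^d. Then for any set P of n_1 points in ℝ^d and any finite list F of n_2 polytopes from 𝓕, if the incidence graph on P × F is K_{k,k}-free, then the number of incidences (pairs (p, Q) ∈ P × F with p ∈ Q) is at most α · n · log^s(n), where n = n_1 + n_2. -/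
/-!
A point `x` lies in `⋂ᵢ (yᵢ + Hᵢ)` iff `⟨aᵢ, x⟩ > bᵢ + ⟨aᵢ, yᵢ⟩` (or `≥` for a closed `Hᵢ`)
for every `i`. Mapping points to `(⟨aᵢ, x⟩)ᵢ` and polytopes to `(bᵢ + ⟨aᵢ, yᵢ⟩)ᵢ` turns incidence
into coordinatewise dominance in `ℝ^s`, whatever `d` is. Dominance incidences are counted by
divide and conquer: split at the median `t` of one coordinate; pairs on the same side of `t`
are counted recursively at half the size, while a pair straddling `t` already satisfies that
coordinate and is a dominance incidence in the other `s - 1` coordinates. Since a `K_{k,k}`-free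
complete bipartite graph has at most `k n` edges, this gives the bound `k 2^s n log₂^s n`.
-/

/-- The half-space `{x : Σ_j a_j x_j > b}` (if `opn = true`) or `{x : Σ_j a_j x_j ≥ b}`
(if `opn = false`) in `ℝ^d`. -/
def halfSpace {d : ℕ} (a : Fin d → ℝ) (b : ℝ) (opn : Bool) : Set (Fin d → ℝ) :=
  {x | if opn then b < ∑ j, a j * x j else b ≤ ∑ j, a j * x j}

/-- The polytope `⋂_{i ∈ [s]} (y_i + H_i)` cut out by the translates of the half-spaces
`H_i = halfSpace (a i) (b i) (opn i)` by the vectors `y i`. -/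
def translatedPolytope {d s : ℕ} (a : Fin s → Fin d → ℝ) (b : Fin s → ℝ)
    (opn : Fin s → Bool) (y : Fin s → Fin d → ℝ) : Set (Fin d → ℝ) :=
  ⋂ i : Fin s, {x | (fun j => x j - y i j) ∈ halfSpace (a i) (b i) (opn i)}

open Finset

theorem exists_card_filter_lt_le_half_and_card_filter_gt_le_half {Ω α : Type*} [LinearOrder α]
    (S : Finset Ω) (f : Ω → α) (hS : S.Nonempty) :
    ∃ t, #{x ∈ S | f x < t} ≤ #S / 2 ∧ #{x ∈ S | t < f x} ≤ #S / 2 := by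
  set G := {x ∈ S | #S - #S / 2 ≤ #{y ∈ S | f y ≤ f x}}
  have hG : G.Nonempty := by
    obtain ⟨x, hx, hmax⟩ := S.exists_max_image f hS
    refine ⟨x, mem_filter.2 ⟨hx, ?_⟩⟩
    rw [filter_true_of_mem hmax]
    omega
  obtain ⟨x, hxG, hmin⟩ := G.exists_min_image f hG
  refine ⟨f x, ?_, ?_⟩
  · by_contra! hbig
    have hne : 0 < #{y ∈ S | f y < f x} := by omega
    obtain ⟨y, hy, hymax⟩ := exists_max_image _ f (card_pos.1 hne)
    have hyG : y ∈ G := by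
      refine mem_filter.2 ⟨(mem_filter.1 hy).1, ?_⟩
      calc #S - #S / 2 ≤ #{z ∈ S | f z < f x} := by omega
        _ ≤ #{z ∈ S | f z ≤ f y} :=
          card_le_card fun z hz => mem_filter.2 ⟨(mem_filter.1 hz).1, hymax z hz⟩
    exact (mem_filter.1 hy).2.not_ge (hmin y hyG)
  · have hle := (mem_filter.1 hxG).2
    have hsplit := card_filter_add_card_filter_not (s := S) (fun y => f y ≤ f x)
    simp only [not_le] at hsplit
    omega

section Incidences

variable {ι κ : Type*}

def incidences (R : ι → κ → Prop) [DecidableRel R] (A : Finset ι) (B : Finset κ) :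
    Finset (ι × κ) :=
  {z ∈ A ×ˢ B | R z.1 z.2}

def HasBiclique (k : ℕ) (R : ι → κ → Prop) (A : Finset ι) (B : Finset κ) : Prop :=
  ∃ A' ⊆ A, ∃ B' ⊆ B, #A' = k ∧ #B' = k ∧ ∀ a ∈ A', ∀ b ∈ B', R a b

theorem HasBiclique.mono {k : ℕ} {R R' : ι → κ → Prop} {A A' : Finset ι} {B B' : Finset κ}
    (h : HasBiclique k R A B) (hA : A ⊆ A') (hB : B ⊆ B')
    (hR : ∀ a ∈ A, ∀ b ∈ B, R a b → R' a b) : HasBiclique k R' A' B' := by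
  obtain ⟨A₀, hA₀, B₀, hB₀, hA₀k, hB₀k, hAB⟩ := h
  exact ⟨A₀, hA₀.trans hA, B₀, hB₀.trans hB, hA₀k, hB₀k,
    fun a ha b hb => hR a (hA₀ ha) b (hB₀ hb) (hAB a ha b hb)⟩

theorem card_incidences_le_of_forall {k : ℕ} {R : ι → κ → Prop} [DecidableRel R]
    {A : Finset ι} {B : Finset κ} (hR : ∀ a b, R a b) (hfree : ¬HasBiclique k R A B) :
    #(incidences R A B) ≤ k * (#A + #B) := by
  have hsmall : #A < k ∨ #B < k := by
    by_contra! h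
    obtain ⟨A', hA', hA'k⟩ := exists_subset_card_eq h.1
    obtain ⟨B', hB', hB'k⟩ := exists_subset_card_eq h.2
    exact hfree ⟨A', hA', B', hB', hA'k, hB'k, fun a _ b _ => hR a b⟩
  rw [incidences, filter_true_of_mem fun z _ => hR z.1 z.2, card_product]
  rcases hsmall with h | h
  · nlinarith
  · nlinarith

theorem card_filter_disjSum (A : Finset ι) (B : Finset κ) (q : ι ⊕ κ → Prop) [DecidablePred q] :
    #{x ∈ A.disjSum B | q x} = #{a ∈ A | q (.inl a)} + #{b ∈ B | q (.inr b)} := by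
  rw [card_filter, sum_disjSum, card_filter, card_filter]

end Incidences

def incidenceBound (k s n : ℕ) : ℕ :=
  k * 2 ^ s * n * Nat.log 2 n ^ s

theorem incidenceBound_mono (k s : ℕ) {n n' : ℕ} (h : n ≤ n') :
    incidenceBound k s n ≤ incidenceBound k s n' := by
  unfold incidenceBound
  gcongr

theorem pow_succ_add_pow_le_succ_pow (m s : ℕ) : m ^ (s + 1) + (m + 1) ^ s ≤ (m + 1) ^ (s + 1) :=
  calc m ^ (s + 1) + (m + 1) ^ s = m ^ s * m + (m + 1) ^ s := by ring
    _ ≤ (m + 1) ^ s * m + (m + 1) ^ s := by gcongr; omega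
    _ = (m + 1) ^ (s + 1) := by ring

theorem incidenceBound_add_le {k s n n₁ n₂ : ℕ} (hn : 2 ≤ n) (h₁ : n₁ ≤ n / 2) (h₂ : n₂ ≤ n / 2) :
    incidenceBound k (s + 1) n₁ + incidenceBound k (s + 1) n₂ + 2 * incidenceBound k s n ≤
      incidenceBound k (s + 1) n := by
  obtain ⟨m, hm⟩ : ∃ m, Nat.log 2 n = m + 1 :=
    ⟨Nat.log 2 n - 1, by have := Nat.log_pos (b := 2) one_lt_two hn; omega⟩
  have hlog {n' : ℕ} (h : n' ≤ n / 2) : Nat.log 2 n' ≤ m := by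
    have := Nat.log_mono_right (b := 2) h
    rw [Nat.log_div_base] at this
    omega
  unfold incidenceBound
  rw [hm]
  calc k * 2 ^ (s + 1) * n₁ * Nat.log 2 n₁ ^ (s + 1) + k * 2 ^ (s + 1) * n₂ * Nat.log 2 n₂ ^ (s + 1)
        + 2 * (k * 2 ^ s * n * (m + 1) ^ s)
      ≤ k * 2 ^ (s + 1) * n₁ * m ^ (s + 1) + k * 2 ^ (s + 1) * n₂ * m ^ (s + 1)
        + 2 * (k * 2 ^ s * n * (m + 1) ^ s) := by gcongr <;> exact hlog ‹_›
    _ = k * 2 ^ (s + 1) * ((n₁ + n₂) * m ^ (s + 1) + n * (m + 1) ^ s) := by ring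
    _ ≤ k * 2 ^ (s + 1) * (n * m ^ (s + 1) + n * (m + 1) ^ s) := by gcongr; omega
    _ ≤ k * 2 ^ (s + 1) * n * (m + 1) ^ (s + 1) := by
      rw [mul_assoc _ n, ← mul_add]
      gcongr
      exact pow_succ_add_pow_le_succ_pow m s

section Dominance

variable {α γ ι κ : Type*} [LinearOrder α]

def LtIf (strict : Bool) (u v : α) : Prop :=
  if strict then u < v else u ≤ v

instance (strict : Bool) (u v : α) : Decidable (LtIf strict u v) := by
  unfold LtIf; infer_instance

theorem LtIf.le {strict : Bool} {u v : α} (h : LtIf strict u v) : u ≤ v := by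
  cases strict
  exacts [h, le_of_lt h]

theorem LtIf.of_lt {strict : Bool} {u v : α} (h : u < v) : LtIf strict u v := by
  cases strict
  exacts [h.le, h]

def Dominates (I : Finset γ) (σ : γ → Bool) (x y : γ → α) : Prop :=
  ∀ i ∈ I, LtIf (σ i) (y i) (x i)

instance (I : Finset γ) (σ : γ → Bool) (x y : γ → α) : Decidable (Dominates I σ x y) := by
  unfold Dominates; infer_instance

theorem dominates_insert_iff [DecidableEq γ] {i₀ : γ} {I : Finset γ} {σ : γ → Bool}
    {x y : γ → α} :
    Dominates (insert i₀ I) σ x y ↔ LtIf (σ i₀) (y i₀) (x i₀) ∧ Dominates I σ x y :=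
  forall_mem_insert _ _ _

variable (σ : γ → Bool) (p : ι → γ → α) (c : κ → γ → α)

-- Pairs across `t` satisfy the constraint on coordinate `i₀`, so only the coordinates in `I`
-- remain to be checked for them.
theorem incidences_dominates_insert_subset [DecidableEq γ] [DecidableEq ι] [DecidableEq κ]
    (i₀ : γ) (I : Finset γ) (A : Finset ι) (B : Finset κ) (t : α) :
    incidences (fun a b => Dominates (insert i₀ I) σ (p a) (c b)) A B ⊆
      incidences (fun a b => Dominates (insert i₀ I) σ (p a) (c b))
          {a ∈ A | p a i₀ < t} {b ∈ B | c b i₀ < t} ∪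
        incidences (fun a b => Dominates (insert i₀ I) σ (p a) (c b))
          {a ∈ A | t < p a i₀} {b ∈ B | t < c b i₀} ∪
        incidences (fun a b => Dominates I σ (p a) (c b))
          {a ∈ A | t ≤ p a i₀} {b ∈ B | c b i₀ < t} ∪
        incidences (fun a b => Dominates I σ (p a) (c b))
          {a ∈ A | LtIf (σ i₀) t (p a i₀)} {b ∈ B | c b i₀ = t} := by
  rintro ⟨a, b⟩ hab
  simp only [incidences, mem_union, mem_filter, mem_product] at hab ⊢
  obtain ⟨⟨ha, hb⟩, hdom⟩ := hab
  have ⟨h₀, hI⟩ := dominates_insert_iff.1 hdom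
  rcases lt_trichotomy (c b i₀) t with hc | rfl | hc
  · by_cases hp : p a i₀ < t
    · exact Or.inl (Or.inl (Or.inl ⟨⟨⟨ha, hp⟩, hb, hc⟩, hdom⟩))
    · exact Or.inl (Or.inr ⟨⟨⟨ha, not_lt.1 hp⟩, hb, hc⟩, hI⟩)
  · exact Or.inr ⟨⟨⟨ha, h₀⟩, hb, rfl⟩, hI⟩
  · exact Or.inl (Or.inl (Or.inr ⟨⟨⟨ha, hc.trans_le h₀.le⟩, hb, hc⟩, hdom⟩))

theorem card_incidences_dominates_insert_le [DecidableEq γ] [DecidableEq ι] [DecidableEq κ]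
    {k : ℕ} {i₀ : γ} {I : Finset γ}
    (ih : ∀ (A : Finset ι) (B : Finset κ),
      ¬HasBiclique k (fun a b => Dominates I σ (p a) (c b)) A B →
        #(incidences (fun a b => Dominates I σ (p a) (c b)) A B) ≤
          incidenceBound k #I (#A + #B))
    (A : Finset ι) (B : Finset κ)
    (hfree : ¬HasBiclique k (fun a b => Dominates (insert i₀ I) σ (p a) (c b)) A B) :
    #(incidences (fun a b => Dominates (insert i₀ I) σ (p a) (c b)) A B) ≤
      incidenceBound k (#I + 1) (#A + #B) := by
  induction hn : #A + #B using Nat.strong_induction_on generalizing A B with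
  | _ n IH =>
  by_cases hsmall : n < 2
  · obtain rfl | rfl : A = ∅ ∨ B = ∅ := by
      rw [← card_eq_zero, ← card_eq_zero]; omega
    all_goals simp [incidences]
  obtain ⟨t, hlt, hgt⟩ := exists_card_filter_lt_le_half_and_card_filter_gt_le_half
    (A.disjSum B) (Sum.elim (p · i₀) (c · i₀)) (by rw [← card_pos, card_disjSum]; omega)
  rw [card_disjSum, hn] at hlt hgt
  replace hlt : #{a ∈ A | p a i₀ < t} + #{b ∈ B | c b i₀ < t} ≤ n / 2 :=
    (card_filter_disjSum A B _).symm.trans_le hlt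
  replace hgt : #{a ∈ A | t < p a i₀} + #{b ∈ B | t < c b i₀} ≤ n / 2 :=
    (card_filter_disjSum A B _).symm.trans_le hgt
  have hfree_of {A' : Finset ι} {B' : Finset κ} (hA : A' ⊆ A) (hB : B' ⊆ B) {R : ι → κ → Prop}
      (hR : ∀ a ∈ A', ∀ b ∈ B', R a b → Dominates (insert i₀ I) σ (p a) (c b)) :
      ¬HasBiclique k R A' B' := fun h => hfree (h.mono hA hB hR)
  have hsize {A' : Finset ι} {B' : Finset κ} (hA : A' ⊆ A) (hB : B' ⊆ B) : #A' + #B' ≤ n :=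
    hn ▸ add_le_add (card_le_card hA) (card_le_card hB)
  calc _ ≤ _ := card_le_card (incidences_dominates_insert_subset σ p c i₀ I A B t)
    _ ≤ _ := (card_union_le _ _).trans (Nat.add_le_add_right
        ((card_union_le _ _).trans (Nat.add_le_add_right (card_union_le _ _) _)) _)
    _ ≤ incidenceBound k (#I + 1) (#{a ∈ A | p a i₀ < t} + #{b ∈ B | c b i₀ < t})
        + incidenceBound k (#I + 1) (#{a ∈ A | t < p a i₀} + #{b ∈ B | t < c b i₀})
        + incidenceBound k #I n + incidenceBound k #I n := by
      gcongr
      · exact IH _ (by omega) _ _ (hfree_of (filter_subset _ _) (filter_subset _ _)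
          fun _ _ _ _ => id) rfl
      · exact IH _ (by omega) _ _ (hfree_of (filter_subset _ _) (filter_subset _ _)
          fun _ _ _ _ => id) rfl
      · refine (ih _ _ (hfree_of (filter_subset _ _) (filter_subset _ _) ?_)).trans
          (incidenceBound_mono _ _ (hsize (filter_subset _ _) (filter_subset _ _)))
        intro a ha b hb hab
        rw [mem_filter] at ha hb
        exact dominates_insert_iff.2 ⟨.of_lt (hb.2.trans_le ha.2), hab⟩
      · refine (ih _ _ (hfree_of (filter_subset _ _) (filter_subset _ _) ?_)).trans
          (incidenceBound_mono _ _ (hsize (filter_subset _ _) (filter_subset _ _)))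
        intro a ha b hb hab
        rw [mem_filter] at ha hb
        exact dominates_insert_iff.2 ⟨hb.2 ▸ ha.2, hab⟩
    _ ≤ incidenceBound k (#I + 1) n := by
      rw [add_assoc _ (incidenceBound k #I n), ← two_mul]
      exact incidenceBound_add_le (by omega) hlt hgt

theorem card_incidences_dominates_le [DecidableEq γ] [DecidableEq ι] [DecidableEq κ]
    (k : ℕ) (I : Finset γ) (A : Finset ι) (B : Finset κ)
    (hfree : ¬HasBiclique k (fun a b => Dominates I σ (p a) (c b)) A B) :
    #(incidences (fun a b => Dominates I σ (p a) (c b)) A B) ≤ incidenceBound k #I (#A + #B) := by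
  induction I using Finset.induction_on generalizing A B with
  | empty =>
    simp only [incidenceBound, card_empty, pow_zero, mul_one]
    exact card_incidences_le_of_forall (fun a b i hi => absurd hi (notMem_empty i)) hfree
  | insert i₀ I hi₀ ih =>
    rw [card_insert_of_notMem hi₀]
    exact card_incidences_dominates_insert_le σ p c ih A B hfree

end Dominance

theorem mem_translatedPolytope_iff {d s : ℕ} {a : Fin s → Fin d → ℝ} {b : Fin s → ℝ}
    {opn : Fin s → Bool} {y : Fin s → Fin d → ℝ} {x : Fin d → ℝ} :
    x ∈ translatedPolytope a b opn y ↔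
      Dominates univ opn (fun i => ∑ j, a i j * x j) (fun i => b i + ∑ j, a i j * y i j) := by
  simp only [translatedPolytope, halfSpace, Dominates, LtIf, Set.mem_iInter, Set.mem_ofPred_eq,
    mem_univ, true_implies, mul_sub, sum_sub_distrib, lt_sub_iff_add_lt, le_sub_iff_add_le]

theorem incidenceBound_le_mul_log_pow (k s n : ℕ) :
    (incidenceBound k s n : ℝ) ≤ k * 2 ^ s / Real.log 2 ^ s * n * Real.log n ^ s := by
  have hlog : (Nat.log 2 n : ℝ) ^ s ≤ (Real.log n / Real.log 2) ^ s :=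
    pow_le_pow_left₀ (Nat.cast_nonneg _) (Real.natLog_le_logb n 2) s
  calc (incidenceBound k s n : ℝ) = k * 2 ^ s * n * (Nat.log 2 n : ℝ) ^ s := by
        simp [incidenceBound]
    _ ≤ k * 2 ^ s * n * (Real.log n / Real.log 2) ^ s := by gcongr
    _ = k * 2 ^ s / Real.log 2 ^ s * n * Real.log n ^ s := by ring

/-- For every `s, k` there is `α` such that: for any `d`, any half-spaces
`H₁, …, H_s ⊆ ℝ^d` (each open or closed), any finite set `P` of points and any finite
list `F` (of length `n₂`) of polytopes cut out by translates of `H₁, …, H_s`, if the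
incidence graph on `P × F` is `K_{k,k}`-free then the number of incidences is at most
`α · n · log^s n`, where `n = |P| + n₂`. -/
theorem polytope_incidence_bound (s k : ℕ) :
    ∃ α : ℝ, ∀ (d : ℕ) (a : Fin s → Fin d → ℝ) (b : Fin s → ℝ) (opn : Fin s → Bool)
      (P : Finset (Fin d → ℝ)) (n₂ : ℕ) (F : Fin n₂ → Fin s → Fin d → ℝ),
      (¬ ∃ (P' : Finset (Fin d → ℝ)) (Q' : Finset (Fin n₂)),
          P' ⊆ P ∧ P'.card = k ∧ Q'.card = k ∧
          ∀ p ∈ P', ∀ q ∈ Q', p ∈ translatedPolytope a b opn (F q)) →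
      (Set.ncard {pq : (Fin d → ℝ) × Fin n₂ |
          pq.1 ∈ P ∧ pq.1 ∈ translatedPolytope a b opn (F pq.2)} : ℝ) ≤
        α * ((P.card + n₂ : ℕ) : ℝ) * Real.log ((P.card + n₂ : ℕ) : ℝ) ^ s := by
  refine ⟨k * 2 ^ s / Real.log 2 ^ s, fun d a b opn P n₂ F hfree => ?_⟩
  let R (x : Fin d → ℝ) (q : Fin n₂) : Prop :=
    Dominates univ opn (fun i => ∑ j, a i j * x j) (fun i => b i + ∑ j, a i j * F q i j)
  have hinc : {pq : (Fin d → ℝ) × Fin n₂ |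
      pq.1 ∈ P ∧ pq.1 ∈ translatedPolytope a b opn (F pq.2)} = ↑(incidences R P univ) := by
    ext
    simp [incidences, R, mem_translatedPolytope_iff]
  have hfree' : ¬HasBiclique k R P univ := by
    rintro ⟨P', hP', Q', -, hP'k, hQ'k, hR⟩
    exact hfree ⟨P', Q', hP', hP'k, hQ'k,
      fun p hp q hq => mem_translatedPolytope_iff.2 (hR p hp q hq)⟩
  have hbound := card_incidences_dominates_le opn _ _ k univ P univ hfree'
  rw [card_univ, card_univ, Fintype.card_fin, Fintype.card_fin] at hbound
  rw [hinc, Set.ncard_coe_finset]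
  exact (Nat.cast_le.2 hbound).trans (incidenceBound_le_mul_log_pow k s _)
end

section
/- For every d, k ∈ ℕ there exists α = α(d, k) ∈ ℝ satisfying the following. For any set P of n_1 points in ℝ^d and any finite list B of n_2 boxes in ℝ^d (each box a product of d intervals, each interval with open or closed endpoints, possibly unbounded), if the incidence graph on P × B is K_{k,k}-free, then the number of incidences (pairs (p, R) ∈ P × B with p ∈ R) is at most α · n · log^{2d}(n), where n = n_1 + n_2. -/
/-!
Replacing every coordinate by its rank among the coordinates of the points turns each interval
into an integer interval `[a, b)` with `b < 2 ^ L`, `L = ⌊log₂ |P|⌋ + 1`, which is a union of at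
most `2 L` dyadic intervals of levels `< L`. Hence every box is a union of at most `(2 L) ^ d`
dyadic boxes, while a point lies in at most `L ^ d` of them (one per choice of levels). For a
dyadic box `σ`, its points and the boxes using `σ` span a complete bipartite subgraph of the
incidence graph, so one side has fewer than `k` members and their product is at most `k` times
their sum. Summing over `σ` gives at most `k (|P| L ^ d + n₂ (2 L) ^ d) ≤ k n (2 L) ^ d`
incidences, and `2 L = O(log n)`.
-/

def boxOf {d : ℕ} (I : Fin d → Set ℝ) : Set (Fin d → ℝ) :=
  {x | ∀ j, x j ∈ I j}

open Finset

-- `(s, c)` encodes the dyadic interval `[c 2 ^ s, (c + 1) 2 ^ s)`, which contains `x` iff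
-- `x / 2 ^ s = c`.
theorem exists_dyadic_cover : ∀ L a b : ℕ, b < 2 ^ L → ∃ T : Finset (ℕ × ℕ),
    #T ≤ 2 * L ∧ (∀ t ∈ T, t.1 < L) ∧
      ∀ x, x ∈ Set.Ico a b ↔ ∃ t ∈ T, x / 2 ^ t.1 = t.2
  | 0, a, b, hb => ⟨∅, by simp, by simp, fun x => by simp at hb ⊢; omega⟩
  | L + 1, a, b, hb => by
    obtain ⟨T, hcard, hlev, hT⟩ :=
      exists_dyadic_cover L ((a + 1) / 2) (b / 2) (by rw [pow_succ] at hb; omega)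
    -- apart from the endpoints `a` (if odd) and `b - 1` (if even), `[a, b)` is the union of the
    -- pairs `{2 y, 2 y + 1}`, `y ∈ [⌈a / 2⌉, ⌊b / 2⌋)`, which are the level-one dyadic intervals
    set E := ({a, b - 1} : Finset ℕ).filter
      fun x => x ∈ Ico a b ∧ x / 2 ∉ Ico ((a + 1) / 2) (b / 2)
    refine ⟨E.image (fun x => (0, x)) ∪ T.image (fun t => (t.1 + 1, t.2)), ?_, ?_,
      fun x => ?_⟩
    · have : #E ≤ 2 := (card_filter_le _ _).trans card_le_two
      grw [card_union_le, card_image_le, card_image_le]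
      omega
    · simp only [mem_union, mem_image]
      rintro _ (⟨x, -, rfl⟩ | ⟨t, ht, rfl⟩)
      · simp
      · simpa using hlev t ht
    have hsplit : x ∈ Set.Ico a b ↔ x ∈ E ∨ x / 2 ∈ Set.Ico ((a + 1) / 2) (b / 2) := by
      simp only [E, mem_filter, mem_insert, mem_singleton, mem_Ico, Set.mem_Ico]
      omega
    simp only [hsplit, hT, mem_union, or_and_right, exists_or, exists_mem_image, pow_zero,
      Nat.div_one, exists_eq_right', pow_succ', ← Nat.div_div_eq_div_mul]

section Rank

variable {α : Type*} [LinearOrder α] (V : Finset α)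

def rankIn (x : α) : ℕ := #{v ∈ V | v < x}

theorem rankIn_mono : Monotone (rankIn V) := fun _ _ hxy =>
  card_le_card <| monotone_filter_right V fun _ _ hv => hv.trans_le hxy

variable {V}

theorem rankIn_lt_rankIn {x y : α} (hx : x ∈ V) (hxy : x < y) : rankIn V x < rankIn V y :=
  card_lt_card <| (ssubset_iff_of_subset
    (monotone_filter_right V fun _ _ hv => hv.trans hxy)).2
    ⟨x, mem_filter.2 ⟨hx, hxy⟩, fun h => lt_irrefl x (mem_filter.1 h).2⟩

theorem rankIn_le_rankIn_iff {x y : α} (hy : y ∈ V) : rankIn V x ≤ rankIn V y ↔ x ≤ y :=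
  ⟨fun h => not_lt.1 fun hyx => (rankIn_lt_rankIn hy hyx).not_ge h, fun h => rankIn_mono V h⟩

theorem rankIn_lt_card {x : α} (hx : x ∈ V) : rankIn V x < #V :=
  card_lt_card <| (ssubset_iff_of_subset (filter_subset _ _)).2
    ⟨x, hx, fun h => lt_irrefl x (mem_filter.1 h).2⟩

theorem Set.OrdConnected.exists_Ico_rankIn {I : Set α} (hI : I.OrdConnected) (V : Finset α) :
    ∃ a b, b ≤ #V ∧ ∀ x ∈ V, x ∈ I ↔ rankIn V x ∈ Ico a b := by
  classical
  set W := {v ∈ V | v ∈ I}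
  rcases W.eq_empty_or_nonempty with hW | hW
  · refine ⟨0, 0, Nat.zero_le _, fun x hx => ?_⟩
    simpa using filter_eq_empty_iff.1 hW hx
  obtain ⟨hminV, hminI⟩ := mem_filter.1 (W.min'_mem hW)
  obtain ⟨hmaxV, hmaxI⟩ := mem_filter.1 (W.max'_mem hW)
  refine ⟨rankIn V (W.min' hW), rankIn V (W.max' hW) + 1, rankIn_lt_card hmaxV, fun x hx => ?_⟩
  rw [mem_Ico, Nat.lt_succ_iff, rankIn_le_rankIn_iff hx, rankIn_le_rankIn_iff hmaxV]
  exact ⟨fun hxI => ⟨W.min'_le x (mem_filter.2 ⟨hx, hxI⟩), W.le_max' x (mem_filter.2 ⟨hx, hxI⟩)⟩,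
    fun h => hI.out hminI hmaxI h⟩

end Rank

theorem ncard_incidences_le_sum_card_mul_card {X Q C : Type*} [Fintype Q] [DecidableEq C]
    (P : Finset X) (box : Q → Set X) (cell : C → Set X) [∀ σ, DecidablePred (· ∈ cell σ)]
    (S : Q → Finset C) (hS : ∀ q, ∀ p ∈ P, p ∈ box q → ∃ σ ∈ S q, p ∈ cell σ) :
    {pq : X × Q | pq.1 ∈ P ∧ pq.1 ∈ box pq.2}.ncard ≤
      ∑ σ ∈ univ.biUnion S, #{p ∈ P | p ∈ cell σ} * #{q | σ ∈ S q} := by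
  classical
  calc _ ≤ #((univ.biUnion S).biUnion
          fun σ => {p ∈ P | p ∈ cell σ} ×ˢ ({q | σ ∈ S q} : Finset Q)) := by
        rw [← Set.ncard_coe_finset]
        refine Set.ncard_le_ncard fun ⟨p, q⟩ ⟨hp, hpq⟩ => ?_
        obtain ⟨σ, hσ, hpσ⟩ := hS q p hp hpq
        exact mem_biUnion.2 ⟨σ, mem_biUnion.2 ⟨q, mem_univ q, hσ⟩,
          mem_product.2 ⟨mem_filter.2 ⟨hp, hpσ⟩, mem_filter.2 ⟨mem_univ q, hσ⟩⟩⟩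
    _ ≤ _ := card_biUnion_le.trans_eq (sum_congr rfl fun _ _ => card_product _ _)

theorem ncard_incidences_le_of_cover {X Q C : Type*} [Fintype Q] [DecidableEq C] {k c s : ℕ}
    (P : Finset X) (box : Q → Set X) (cell : C → Set X) [∀ σ, DecidablePred (· ∈ cell σ)]
    (S : Q → Finset C) (hS : ∀ q, ∀ p ∈ P, p ∈ box q ↔ ∃ σ ∈ S q, p ∈ cell σ)
    (hs : ∀ q, #(S q) ≤ s) (hc : ∀ p ∈ P, #{σ ∈ univ.biUnion S | p ∈ cell σ} ≤ c)
    (hfree : ¬ ∃ (P' : Finset X) (Q' : Finset Q), P' ⊆ P ∧ #P' = k ∧ #Q' = k ∧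
      ∀ p ∈ P', ∀ q ∈ Q', p ∈ box q) :
    {pq : X × Q | pq.1 ∈ P ∧ pq.1 ∈ box pq.2}.ncard ≤ k * (#P * c + Fintype.card Q * s) := by
  have hmin : ∀ σ, #{p ∈ P | p ∈ cell σ} < k ∨ #{q | σ ∈ S q} < k := by
    intro σ
    by_contra! h
    obtain ⟨P', hP', hP'k⟩ := exists_subset_card_eq h.1
    obtain ⟨Q', hQ', hQ'k⟩ := exists_subset_card_eq h.2
    refine hfree ⟨P', Q', hP'.trans (filter_subset _ _), hP'k, hQ'k, fun p hp q hq => ?_⟩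
    obtain ⟨hpP, hpσ⟩ := mem_filter.1 (hP' hp)
    exact (hS q p hpP).2 ⟨σ, (mem_filter.1 (hQ' hq)).2, hpσ⟩
  have hpts : ∑ σ ∈ univ.biUnion S, #{p ∈ P | p ∈ cell σ} ≤ #P * c := by
    rw [← smul_eq_mul]
    exact (sum_card_bipartiteAbove_eq_sum_card_bipartiteBelow _).symm.trans_le
      (sum_le_card_nsmul _ _ _ hc)
  have hbxs : ∑ σ ∈ univ.biUnion S, #{q | σ ∈ S q} ≤ Fintype.card Q * s := by
    have hU : ∀ q, {σ ∈ univ.biUnion S | σ ∈ S q} = S q := fun q => by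
      rw [filter_mem_eq_inter, inter_eq_right.2 (subset_biUnion_of_mem S (mem_univ q))]
    rw [← card_univ, ← smul_eq_mul]
    exact (sum_card_bipartiteAbove_eq_sum_card_bipartiteBelow _).symm.trans_le
      (sum_le_card_nsmul _ _ _ fun q _ => (congrArg card (hU q)).trans_le (hs q))
  calc _ ≤ ∑ σ ∈ univ.biUnion S, #{p ∈ P | p ∈ cell σ} * #{q | σ ∈ S q} :=
        ncard_incidences_le_sum_card_mul_card P box cell S fun q p hp => (hS q p hp).1
    _ ≤ ∑ σ ∈ univ.biUnion S, k * (#{p ∈ P | p ∈ cell σ} + #{q | σ ∈ S q}) := by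
        refine sum_le_sum fun σ _ => ?_
        rcases hmin σ with h | h <;> nlinarith
    _ = k * (∑ σ ∈ univ.biUnion S, #{p ∈ P | p ∈ cell σ} +
          ∑ σ ∈ univ.biUnion S, #{q | σ ∈ S q}) := by
        rw [← mul_sum, sum_add_distrib]
    _ ≤ k * (#P * c + Fintype.card Q * s) := by gcongr

theorem card_dyadic_boxes_containing_le {ι : Type*} [Fintype ι] [DecidableEq ι] {L : ℕ}
    (U : Finset (ι → ℕ × ℕ)) (hU : ∀ σ ∈ U, ∀ j, (σ j).1 < L) (g : ι → ℕ) :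
    #{σ ∈ U | ∀ j, g j / 2 ^ (σ j).1 = (σ j).2} ≤ L ^ Fintype.card ι := by
  calc _ ≤ #((Fintype.piFinset fun _ => range L).image fun ℓ j => (ℓ j, g j / 2 ^ ℓ j)) := by
        refine card_le_card fun σ hσ => ?_
        obtain ⟨hσU, hσg⟩ := mem_filter.1 hσ
        refine mem_image.2 ⟨fun j => (σ j).1,
          Fintype.mem_piFinset.2 fun j => mem_range.2 (hU σ hσU j), ?_⟩
        funext j
        exact Prod.ext rfl (hσg j)
    _ ≤ L ^ Fintype.card ι := card_image_le.trans (by simp)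

theorem ncard_box_incidences_le {ι α Q : Type*} [Fintype ι] [LinearOrder α] [Fintype Q]
    {k : ℕ} (P : Finset (ι → α)) (I : Q → ι → Set α) (hI : ∀ q j, (I q j).OrdConnected)
    (hfree : ¬ ∃ (P' : Finset (ι → α)) (Q' : Finset Q), P' ⊆ P ∧ #P' = k ∧ #Q' = k ∧
      ∀ p ∈ P', ∀ q ∈ Q', ∀ j, p j ∈ I q j) :
    {pq : (ι → α) × Q | pq.1 ∈ P ∧ ∀ j, pq.1 j ∈ I pq.2 j}.ncard ≤
      k * (#P + Fintype.card Q) * (2 * (Nat.log 2 #P + 1)) ^ Fintype.card ι := by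
  classical
  set L := Nat.log 2 #P + 1
  set V : ι → Finset α := fun j => P.image (· j)
  choose a b hb hab using fun q j => (hI q j).exists_Ico_rankIn (V j)
  have hbL : ∀ q j, b q j < 2 ^ L := fun q j =>
    ((hb q j).trans card_image_le).trans_lt (Nat.lt_pow_succ_log_self one_lt_two _)
  choose T hTcard hTlev hT using fun q j => exists_dyadic_cover L (a q j) (b q j) (hbL q j)
  have hS : ∀ q, ∀ p ∈ P, (∀ j, p j ∈ I q j) ↔
      ∃ σ ∈ Fintype.piFinset (T q), ∀ j, rankIn (V j) (p j) / 2 ^ (σ j).1 = (σ j).2 := by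
    intro q p hp
    have hpV : ∀ j, p j ∈ V j := fun j => mem_image_of_mem _ hp
    simp only [fun j => hab q j (p j) (hpV j), hT, Fintype.mem_piFinset, ← forall_and]
    exact Classical.skolem
  have hs : ∀ q, #(Fintype.piFinset (T q)) ≤ (2 * L) ^ Fintype.card ι := fun q => by
    rw [Fintype.card_piFinset]
    exact prod_le_pow_card _ _ _ fun j _ => hTcard q j
  have hc : ∀ p ∈ P, #{σ ∈ univ.biUnion fun q => Fintype.piFinset (T q) |
      ∀ j, rankIn (V j) (p j) / 2 ^ (σ j).1 = (σ j).2} ≤ L ^ Fintype.card ι := by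
    intro p _
    refine card_dyadic_boxes_containing_le _ (fun σ hσ j => ?_) _
    obtain ⟨q, -, hq⟩ := mem_biUnion.1 hσ
    exact hTlev q j _ (Fintype.mem_piFinset.1 hq j)
  calc _ ≤ k * (#P * L ^ Fintype.card ι + Fintype.card Q * (2 * L) ^ Fintype.card ι) :=
        ncard_incidences_le_of_cover P (fun q => {x | ∀ j, x j ∈ I q j})
          (fun σ : ι → ℕ × ℕ => {p | ∀ j, rankIn (V j) (p j) / 2 ^ (σ j).1 = (σ j).2}) _
          hS hs hc hfree
    _ ≤ k * (#P * (2 * L) ^ Fintype.card ι + Fintype.card Q * (2 * L) ^ Fintype.card ι) := by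
        gcongr
        omega
    _ = k * (#P + Fintype.card Q) * (2 * L) ^ Fintype.card ι := by ring

theorem two_mul_natLog_succ_le_log_sq {n : ℕ} (hn : 2 ≤ n) :
    2 * ((Nat.log 2 n + 1 : ℕ) : ℝ) ≤ 4 / Real.log 2 ^ 2 * Real.log n ^ 2 := by
  have hlogb : 1 ≤ Real.logb 2 n := by
    rw [Real.le_logb_iff_rpow_le one_lt_two (by positivity)]
    exact_mod_cast hn
  calc 2 * ((Nat.log 2 n + 1 : ℕ) : ℝ) ≤ 4 * Real.logb 2 n := by
        have := Real.natLog_le_logb n 2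
        push_cast at this ⊢
        linarith
    _ ≤ 4 * Real.logb 2 n ^ 2 := by nlinarith
    _ = 4 / Real.log 2 ^ 2 * Real.log n ^ 2 := by rw [Real.logb, div_pow]; ring

/-- For every `d, k` there is `α` such that: for any finite set `P` of points in `ℝ^d`
and any finite list (of length `n₂`) of boxes in `ℝ^d` — each box a product of `d`
intervals (arbitrary intervals, i.e. order-connected subsets of `ℝ`, so with open or
closed, possibly unbounded endpoints) — if the incidence graph is `K_{k,k}`-free, then
the number of incidences is at most `α · n · log^{2d} n`, where `n = |P| + n₂`. -/
theorem box_incidence_bound (d k : ℕ) :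
    ∃ α : ℝ, ∀ (P : Finset (Fin d → ℝ)) (n₂ : ℕ) (I : Fin n₂ → Fin d → Set ℝ),
      (∀ q j, (I q j).OrdConnected) →
      (¬ ∃ (P' : Finset (Fin d → ℝ)) (Q' : Finset (Fin n₂)),
          P' ⊆ P ∧ P'.card = k ∧ Q'.card = k ∧
          ∀ p ∈ P', ∀ q ∈ Q', p ∈ boxOf (I q)) →
      (Set.ncard {pq : (Fin d → ℝ) × Fin n₂ |
          pq.1 ∈ P ∧ pq.1 ∈ boxOf (I pq.2)} : ℝ) ≤
        α * ((P.card + n₂ : ℕ) : ℝ) * Real.log ((P.card + n₂ : ℕ) : ℝ) ^ (2 * d) := by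
  refine ⟨k * (4 / Real.log 2 ^ 2) ^ d, fun P n₂ I hI hfree => ?_⟩
  have hcount := ncard_box_incidences_le P I hI hfree
  rw [Fintype.card_fin, Fintype.card_fin] at hcount
  set n := P.card + n₂
  rcases lt_or_ge n 2 with hn | hn
  · have hempty : {pq : (Fin d → ℝ) × Fin n₂ | pq.1 ∈ P ∧ pq.1 ∈ boxOf (I pq.2)} = ∅ := by
      obtain hP | rfl : P.card = 0 ∨ n₂ = 0 := by omega
      · simp [Finset.card_eq_zero.1 hP]
      · exact Set.eq_empty_of_isEmpty _
    rw [hempty, Set.ncard_empty, Nat.cast_zero]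
    positivity
  calc (Set.ncard {pq : (Fin d → ℝ) × Fin n₂ | pq.1 ∈ P ∧ pq.1 ∈ boxOf (I pq.2)} : ℝ)
      ≤ ((k * n * (2 * (Nat.log 2 n + 1)) ^ d : ℕ) : ℝ) := by
        exact_mod_cast hcount.trans (by gcongr; omega)
    _ ≤ k * (n : ℝ) * (4 / Real.log 2 ^ 2 * Real.log n ^ 2) ^ d := by
        rw [Nat.cast_mul, Nat.cast_mul, Nat.cast_pow]
        gcongr
        exact_mod_cast two_mul_natLog_succ_le_log_sq hn
    _ = k * (4 / Real.log 2 ^ 2) ^ d * (n : ℝ) * Real.log n ^ (2 * d) := by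
        rw [mul_pow, pow_mul]
        ring
end

section
/- Let d, n_1, n_2, n'_1, n'_2, m, m' be positive integers and suppose: (1) there exist a set P^{d-1} of n_1 points in ℝ^{d-1} and a set B^{d-1} of n_2 open axis-parallel boxes in ℝ^{d-1} with exactly m incidences between them and K_{2,2}-free incidence graph; (2) there exist a set P^d of n'_1 points in ℝ^d and a set B^d of n'_2 open axis-parallel boxes in ℝ^d with exactly m' incidences between them and K_{2,2}-free incidence graph. Then there exist a set P of n_1·n'_1 points in ℝ^d and a set B of n_1·n'_2 + n'_1·n_2 open axis-parallel boxes in ℝ^d such that there are exactly n_1·m' + n'_1·m incidences between P and B and the incidence graph on P × B is K_{2,2}-free. -/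
/-- The open axis-parallel box in `ℝ^D` with lower corner `lu.1` and upper corner `lu.2`. -/
def openBox {D : ℕ} (lu : (Fin D → ℝ) × (Fin D → ℝ)) : Set (Fin D → ℝ) :=
  {x | ∀ j, x j ∈ Set.Ioo (lu.1 j) (lu.2 j)}

/-- The number of incidences between a finite set of points `P` and a finite set of
open axis-parallel boxes `B` (boxes given by their pairs of corners). -/
noncomputable def boxIncidences {D : ℕ} (P : Finset (Fin D → ℝ))
    (B : Finset ((Fin D → ℝ) × (Fin D → ℝ))) : ℕ :=
  Set.ncard {pr : (Fin D → ℝ) × ((Fin D → ℝ) × (Fin D → ℝ)) |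
    pr.1 ∈ P ∧ pr.2 ∈ B ∧ pr.1 ∈ openBox pr.2}

/-- The incidence graph between `P` and `B` is `K_{2,2}`-free: no two distinct points
both lie in two distinct boxes. -/
def K22Free {D : ℕ} (P : Finset (Fin D → ℝ))
    (B : Finset ((Fin D → ℝ) × (Fin D → ℝ))) : Prop :=
  ¬ ∃ p₁ p₂ R₁ R₂, p₁ ∈ P ∧ p₂ ∈ P ∧ p₁ ≠ p₂ ∧ R₁ ∈ B ∧ R₂ ∈ B ∧ R₁ ≠ R₂ ∧
    p₁ ∈ openBox R₁ ∧ p₁ ∈ openBox R₂ ∧ p₂ ∈ openBox R₁ ∧ p₂ ∈ openBox R₂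

theorem mem_openBox_iff {D : ℕ} {lu : (Fin D → ℝ) × (Fin D → ℝ)} {x : Fin D → ℝ} :
    x ∈ openBox lu ↔ ∀ j, lu.1 j < x j ∧ x j < lu.2 j := by
  simp [openBox]

theorem exists_Ioo_not_mem (S : Set ℝ) (hS : S.Finite) {a b : ℝ} (h : a < b) :
    ∃ x, x ∈ Set.Ioo a b ∧ x ∉ S := by
  have h2 := (Set.Ioo_infinite h).diff hS
  obtain ⟨x, hx⟩ := h2.nonempty
  exact ⟨x, hx.1, hx.2⟩

theorem exists_pos_min (s : Finset ℝ) : ∃ δ : ℝ, 0 < δ ∧ ∀ x ∈ s, 0 < x → δ ≤ x := by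
  classical
  refine ⟨(insert (1:ℝ) (s.filter (fun x => 0 < x))).min' (Finset.insert_nonempty _ _), ?_, ?_⟩
  · have h := Finset.min'_mem (insert (1:ℝ) (s.filter (fun x => 0 < x)))
      (Finset.insert_nonempty _ _)
    rcases Finset.mem_insert.mp h with h | h
    · rw [h]; norm_num
    · exact (Finset.mem_filter.mp h).2
  · intro x hx hpos
    exact Finset.min'_le _ _ (Finset.mem_insert_of_mem (Finset.mem_filter.mpr ⟨hx, hpos⟩))

theorem exists_abs_bound (s : Finset ℝ) : ∃ C : ℝ, 1 ≤ C ∧ ∀ x ∈ s, |x| ≤ C := by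
  classical
  refine ⟨(insert (1:ℝ) (s.image abs)).max' (Finset.insert_nonempty _ _), ?_, ?_⟩
  · exact Finset.le_max' _ _ (Finset.mem_insert_self _ _)
  · intro x hx
    exact Finset.le_max' _ _ (Finset.mem_insert_of_mem (Finset.mem_image_of_mem _ hx))

theorem exists_injOn_Ioo {α : Type*} (s : Finset α) {a b : ℝ} (hab : a < b) :
    ∃ f : α → ℝ, Set.InjOn f ↑s ∧ ∀ x ∈ s, f x ∈ Set.Ioo a b := by
  classical
  induction s using Finset.induction_on with
  | empty => exact ⟨fun _ => a, by simp, by simp⟩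
  | insert x s hxs ih =>
    obtain ⟨f, hinj, hmem⟩ := ih
    obtain ⟨c, hc, hcS⟩ := exists_Ioo_not_mem ↑(s.image f) (s.image f).finite_toSet hab
    refine ⟨Function.update f x c, ?_, ?_⟩
    · intro u hu v hv huv
      simp only [Finset.coe_insert, Set.mem_insert_iff, Finset.mem_coe] at hu hv
      rcases hu with rfl | hu <;> rcases hv with rfl | hv
      · rfl
      · exfalso
        have hvx : v ≠ u := fun h => hxs (h ▸ hv)
        rw [Function.update_self, Function.update_of_ne hvx] at huv
        exact hcS (by rw [Finset.coe_image]; exact ⟨v, hv, huv.symm⟩)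
      · exfalso
        have hux : u ≠ v := fun h => hxs (h ▸ hu)
        rw [Function.update_self, Function.update_of_ne hux] at huv
        exact hcS (by rw [Finset.coe_image]; exact ⟨u, hu, huv⟩)
      · have hux : u ≠ x := fun h => hxs (h ▸ hu)
        have hvx : v ≠ x := fun h => hxs (h ▸ hv)
        rw [Function.update_of_ne hux, Function.update_of_ne hvx] at huv
        exact hinj hu hv huv
    · intro y hy
      rcases Finset.mem_insert.mp hy with rfl | hy
      · rw [Function.update_self]; exact hc
      · have h : y ≠ x := fun h => hxs (h ▸ hy)
        rw [Function.update_of_ne h]; exact hmem y hy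

theorem boxIncidences_eq {D : ℕ} (P : Finset (Fin D → ℝ))
    (B : Finset ((Fin D → ℝ) × (Fin D → ℝ)))
    [DecidablePred fun pr : (Fin D → ℝ) × ((Fin D → ℝ) × (Fin D → ℝ)) =>
      pr.1 ∈ openBox pr.2] :
    boxIncidences P B = ((P ×ˢ B).filter fun pr => pr.1 ∈ openBox pr.2).card := by
  rw [boxIncidences, ← Set.ncard_coe_finset]
  congr 1
  ext pr
  simp only [Finset.coe_filter, Finset.mem_product, Set.mem_setOf_eq]
  tauto

set_option maxHeartbeats 2000000 in
/-- Stepping-up lemma: from a `K_{2,2}`-free configuration of `n₁` points and `n₂` open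
boxes in `ℝ^{d-1}` with `m` incidences, and a `K_{2,2}`-free configuration of `n₁'`
points and `n₂'` open boxes in `ℝ^d` with `m'` incidences, one obtains a `K_{2,2}`-free
configuration of `n₁·n₁'` points and `n₁·n₂' + n₁'·n₂` open boxes in `ℝ^d` with
`n₁·m' + n₁'·m` incidences. -/
theorem stepping_up (d n₁ n₂ n₁' n₂' m m' : ℕ)
    (hd : 0 < d) (hn₁ : 0 < n₁) (hn₂ : 0 < n₂) (hn₁' : 0 < n₁') (hn₂' : 0 < n₂')
    (hm : 0 < m) (hm' : 0 < m')
    (hlow : ∃ (P : Finset (Fin (d - 1) → ℝ))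
        (B : Finset ((Fin (d - 1) → ℝ) × (Fin (d - 1) → ℝ))),
        P.card = n₁ ∧ B.card = n₂ ∧ boxIncidences P B = m ∧ K22Free P B)
    (hhigh : ∃ (P : Finset (Fin d → ℝ)) (B : Finset ((Fin d → ℝ) × (Fin d → ℝ))),
        P.card = n₁' ∧ B.card = n₂' ∧ boxIncidences P B = m' ∧ K22Free P B) :
    ∃ (P : Finset (Fin d → ℝ)) (B : Finset ((Fin d → ℝ) × (Fin d → ℝ))),
      P.card = n₁ * n₁' ∧ B.card = n₁ * n₂' + n₁' * n₂ ∧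
      boxIncidences P B = n₁ * m' + n₁' * m ∧ K22Free P B := by
  classical
  obtain ⟨P₁, B₁, hP₁, hB₁, hm₁, hK₁⟩ := hlow
  obtain ⟨P₂, B₂, hP₂, hB₂, hm₂, hK₂⟩ := hhigh
  have hd1 : d - 1 < d := by omega
  set L : Fin d := ⟨d - 1, hd1⟩ with hLdef
  have hLval : ¬((L : ℕ) < d - 1) := by
    rw [hLdef]; exact lt_irrefl _
  have hkL : ∀ k : Fin d, ¬((k : ℕ) < d - 1) → k = L := by
    intro k h
    apply Fin.ext
    have hk2 := k.2
    rw [hLdef]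
    omega
  -- incident pair finsets
  set I₁ : Finset ((Fin (d - 1) → ℝ) × ((Fin (d - 1) → ℝ) × (Fin (d - 1) → ℝ))) :=
    (P₁ ×ˢ B₁).filter (fun y => y.1 ∈ openBox y.2) with hI₁def
  set I₂ : Finset ((Fin d → ℝ) × ((Fin d → ℝ) × (Fin d → ℝ))) :=
    (P₂ ×ˢ B₂).filter (fun y => y.1 ∈ openBox y.2) with hI₂def
  have hI₁mem : ∀ y : (Fin (d - 1) → ℝ) × ((Fin (d - 1) → ℝ) × (Fin (d - 1) → ℝ)),
      y ∈ I₁ ↔ y.1 ∈ P₁ ∧ y.2 ∈ B₁ ∧ y.1 ∈ openBox y.2 := by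
    intro y; rw [hI₁def, Finset.mem_filter, Finset.mem_product]; tauto
  have hI₂mem : ∀ y : (Fin d → ℝ) × ((Fin d → ℝ) × (Fin d → ℝ)),
      y ∈ I₂ ↔ y.1 ∈ P₂ ∧ y.2 ∈ B₂ ∧ y.1 ∈ openBox y.2 := by
    intro y; rw [hI₂def, Finset.mem_filter, Finset.mem_product]; tauto
  have hI₁card : I₁.card = m := by rw [hI₁def, ← boxIncidences_eq, hm₁]
  have hI₂card : I₂.card = m' := by rw [hI₂def, ← boxIncidences_eq, hm₂]
  -- global bound C on coordinates of P₂ points and B₂ corners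
  obtain ⟨C, hC1, hCb⟩ := exists_abs_bound
    ((P₂.biUnion fun q => Finset.image q Finset.univ) ∪
     (B₂.biUnion fun β => Finset.image β.1 Finset.univ ∪ Finset.image β.2 Finset.univ))
  have hC0 : (0:ℝ) < C := by linarith
  have hCq : ∀ q ∈ P₂, ∀ k, |q k| ≤ C := by
    intro q hq k
    exact hCb _ (Finset.mem_union_left _ (Finset.mem_biUnion.mpr
      ⟨q, hq, Finset.mem_image_of_mem _ (Finset.mem_univ k)⟩))
  have hCβ₁ : ∀ β ∈ B₂, ∀ k, |β.1 k| ≤ C := by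
    intro β hβ k
    exact hCb _ (Finset.mem_union_right _ (Finset.mem_biUnion.mpr
      ⟨β, hβ, Finset.mem_union_left _ (Finset.mem_image_of_mem _ (Finset.mem_univ k))⟩))
  have hCβ₂ : ∀ β ∈ B₂, ∀ k, |β.2 k| ≤ C := by
    intro β hβ k
    exact hCb _ (Finset.mem_union_right _ (Finset.mem_biUnion.mpr
      ⟨β, hβ, Finset.mem_union_right _ (Finset.mem_image_of_mem _ (Finset.mem_univ k))⟩))
  -- minimal incidence margin μ
  obtain ⟨μ, hμ0, hμmin⟩ := exists_pos_min
    ((I₁.biUnion fun y => Finset.image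
        (fun j => min (y.1 j - y.2.1 j) (y.2.2 j - y.1 j)) Finset.univ) ∪
     (I₂.biUnion fun y => Finset.image
        (fun k => min (y.1 k - y.2.1 k) (y.2.2 k - y.1 k)) Finset.univ))
  have hμ₁ : ∀ y ∈ I₁, ∀ j, μ ≤ y.1 j - y.2.1 j ∧ μ ≤ y.2.2 j - y.1 j := by
    intro y hy j
    have hinc := ((hI₁mem y).mp hy).2.2
    rw [mem_openBox_iff] at hinc
    have hj := hinc j
    have hpos : 0 < min (y.1 j - y.2.1 j) (y.2.2 j - y.1 j) :=
      lt_min (by linarith [hj.1]) (by linarith [hj.2])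
    have h := hμmin _ (Finset.mem_union_left _ (Finset.mem_biUnion.mpr
      ⟨y, hy, Finset.mem_image_of_mem _ (Finset.mem_univ j)⟩)) hpos
    exact ⟨le_trans h (min_le_left _ _), le_trans h (min_le_right _ _)⟩
  have hμ₂ : ∀ y ∈ I₂, ∀ k, μ ≤ y.1 k - y.2.1 k ∧ μ ≤ y.2.2 k - y.1 k := by
    intro y hy k
    have hinc := ((hI₂mem y).mp hy).2.2
    rw [mem_openBox_iff] at hinc
    have hk := hinc k
    have hpos : 0 < min (y.1 k - y.2.1 k) (y.2.2 k - y.1 k) :=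
      lt_min (by linarith [hk.1]) (by linarith [hk.2])
    have h := hμmin _ (Finset.mem_union_right _ (Finset.mem_biUnion.mpr
      ⟨y, hy, Finset.mem_image_of_mem _ (Finset.mem_univ k)⟩)) hpos
    exact ⟨le_trans h (min_le_left _ _), le_trans h (min_le_right _ _)⟩
  -- minimal coordinate separation Δ of points of P₁
  obtain ⟨Δ, hΔ0, hΔmin⟩ := exists_pos_min
    ((P₁ ×ˢ P₁).biUnion fun z => Finset.image (fun j => |z.1 j - z.2 j|) Finset.univ)
  have hΔ : ∀ p ∈ P₁, ∀ p' ∈ P₁, ∀ j, p j ≠ p' j → Δ ≤ |p j - p' j| := by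
    intro p hp p' hp' j hne
    refine hΔmin _ ?_ (abs_pos.mpr (sub_ne_zero.mpr hne))
    exact Finset.mem_biUnion.mpr ⟨(p, p'), Finset.mem_product.mpr ⟨hp, hp'⟩,
      Finset.mem_image_of_mem _ (Finset.mem_univ j)⟩
  -- minimal last-coordinate gap ρ of points of P₂
  obtain ⟨ρ, hρ0, hρmin⟩ := exists_pos_min ((P₂ ×ˢ P₂).image fun z => |z.1 L - z.2 L|)
  have hρ : ∀ q ∈ P₂, ∀ q' ∈ P₂, q L ≠ q' L → ρ ≤ |q L - q' L| := by
    intro q hq q' hq' hne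
    refine hρmin _ ?_ (abs_pos.mpr (sub_ne_zero.mpr hne))
    exact Finset.mem_image.mpr ⟨(q, q'), Finset.mem_product.mpr ⟨hq, hq'⟩, rfl⟩
  -- injections into intervals
  obtain ⟨r, hrinj, hrmem⟩ := exists_injOn_Ioo P₂ (show (0:ℝ) < 1/2 by norm_num)
  obtain ⟨r₁, hr₁inj, hr₁mem⟩ := exists_injOn_Ioo (P₁ ×ˢ B₂) (show (1:ℝ)/2 < 1 by norm_num)
  -- choice of θ
  obtain ⟨θ, hθmem, hθS⟩ := exists_Ioo_not_mem
    (↑(((P₁ ×ˢ B₂) ×ˢ (P₁ ×ˢ B₂)).image fun z =>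
        (z.2.2.1 L - z.1.2.1 L) / (r₁ z.1 - r₁ z.2)))
    (Finset.finite_toSet _) (show (0:ℝ) < min μ ρ from lt_min hμ0 hρ0)
  obtain ⟨hθ0, hθlt⟩ := hθmem
  have hθμ : θ < μ := lt_of_lt_of_le hθlt (min_le_left _ _)
  have hθρ : θ < ρ := lt_of_lt_of_le hθlt (min_le_right _ _)
  -- the perturbed last coordinate
  set w : (Fin d → ℝ) → ℝ := fun q => q L + θ * r q with hwdef
  have hwinj : ∀ q ∈ P₂, ∀ q' ∈ P₂, w q = w q' → q = q' := by
    intro q hq q' hq' hww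
    rw [hwdef] at hww
    simp only at hww
    by_cases hL : q L = q' L
    · have hrr : θ * r q = θ * r q' := by linarith
      exact hrinj hq hq' (mul_left_cancel₀ (ne_of_gt hθ0) hrr)
    · exfalso
      have h1 := hρ q hq q' hq' hL
      have hr1 := hrmem q hq
      have hr2 := hrmem q' hq'
      simp only [Set.mem_Ioo] at hr1 hr2
      have h2 : q L - q' L = θ * (r q' - r q) := by linarith
      have h3 : |q L - q' L| ≤ θ * 1 := by
        rw [h2, abs_mul, abs_of_pos hθ0]
        have : |r q' - r q| ≤ 1 := by rw [abs_le]; constructor <;> linarith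
        nlinarith
      linarith
  obtain ⟨ρw, hρw0, hρwmin⟩ := exists_pos_min ((P₂ ×ˢ P₂).image fun z => |w z.1 - w z.2|)
  have hρw : ∀ q ∈ P₂, ∀ q' ∈ P₂, q ≠ q' → ρw ≤ |w q - w q'| := by
    intro q hq q' hq' hne
    refine hρwmin _ (Finset.mem_image.mpr ⟨(q, q'), Finset.mem_product.mpr ⟨hq, hq'⟩, rfl⟩)
      (abs_pos.mpr (sub_ne_zero.mpr fun h => hne (hwinj q hq q' hq' h)))
  -- choice of ε
  set ε : ℝ := min (μ / (8 * C)) (Δ / (8 * C)) with hεdef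
  have hε0 : (0:ℝ) < ε := lt_min (by positivity) (by positivity)
  have hεμ : 8 * ε * C ≤ μ := by
    have h : ε ≤ μ / (8 * C) := min_le_left _ _
    have h2 : (8 * C) * ε ≤ (8 * C) * (μ / (8 * C)) :=
      mul_le_mul_of_nonneg_left h (by positivity)
    have h3 : (8 * C) * (μ / (8 * C)) = μ := by field_simp
    linarith
  have hεΔ : 8 * ε * C ≤ Δ := by
    have h : ε ≤ Δ / (8 * C) := min_le_right _ _
    have h2 : (8 * C) * ε ≤ (8 * C) * (Δ / (8 * C)) :=
      mul_le_mul_of_nonneg_left h (by positivity)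
    have h3 : (8 * C) * (Δ / (8 * C)) = Δ := by field_simp
    linarith
  -- choice of κ
  obtain ⟨κ, hκmem, hκS⟩ := exists_Ioo_not_mem
    (↑((P₁ ×ˢ B₂).image fun x => (ε * x.2.2 L - ε * (x.2.1 L + θ * r₁ x)) / 2))
    (Finset.finite_toSet _) (show (0:ℝ) < ε * ρw from mul_pos hε0 hρw0)
  obtain ⟨hκ0, hκlt⟩ := hκmem
  -- canonical embedding of coordinates
  have hle : d - 1 ≤ d := by omega
  set e : Fin (d - 1) → Fin d := Fin.castLE hle with hedef
  have hesurj : ∀ k : Fin d, (k : ℕ) < d - 1 → ∃ j, k = e j := by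
    intro k hk
    exact ⟨⟨(k : ℕ), hk⟩, rfl⟩
  -- the maps, introduced opaquely together with their coordinate evaluation laws
  obtain ⟨Φ, hΦe, hΦL⟩ :
      ∃ Φ : ((Fin (d - 1) → ℝ) × (Fin d → ℝ)) → (Fin d → ℝ),
        (∀ x (j : Fin (d - 1)), Φ x (e j) = x.1 j + ε * x.2 (e j)) ∧
        (∀ x, Φ x L = ε * w x.2) := by
    refine ⟨fun x k => if h : (k : ℕ) < d - 1 then x.1 ⟨k, h⟩ + ε * x.2 k
      else ε * w x.2, ?_, ?_⟩
    · intro x j; exact dif_pos j.2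
    · intro x; exact dif_neg hLval
  obtain ⟨G₁, hG₁1e, hG₁1L, hG₁2e, hG₁2L⟩ :
      ∃ G₁ : ((Fin (d - 1) → ℝ) × ((Fin d → ℝ) × (Fin d → ℝ))) →
          ((Fin d → ℝ) × (Fin d → ℝ)),
        (∀ x (j : Fin (d - 1)), (G₁ x).1 (e j) = x.1 j + ε * x.2.1 (e j)) ∧
        (∀ x, (G₁ x).1 L = ε * (x.2.1 L + θ * r₁ x)) ∧
        (∀ x (j : Fin (d - 1)), (G₁ x).2 (e j) = x.1 j + ε * x.2.2 (e j)) ∧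
        (∀ x, (G₁ x).2 L = ε * x.2.2 L) := by
    refine ⟨fun x => (fun k => if h : (k : ℕ) < d - 1 then x.1 ⟨k, h⟩ + ε * x.2.1 k
        else ε * (x.2.1 L + θ * r₁ x),
      fun k => if h : (k : ℕ) < d - 1 then x.1 ⟨k, h⟩ + ε * x.2.2 k
        else ε * x.2.2 L), ?_, ?_, ?_, ?_⟩
    · intro x j; exact dif_pos j.2
    · intro x; exact dif_neg hLval
    · intro x j; exact dif_pos j.2
    · intro x; exact dif_neg hLval
  obtain ⟨G₂, hG₂1e, hG₂1L, hG₂2e, hG₂2L⟩ :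
      ∃ G₂ : ((Fin d → ℝ) × ((Fin (d - 1) → ℝ) × (Fin (d - 1) → ℝ))) →
          ((Fin d → ℝ) × (Fin d → ℝ)),
        (∀ x (j : Fin (d - 1)), (G₂ x).1 (e j) = x.2.1 j + 2 * ε * C) ∧
        (∀ x, (G₂ x).1 L = ε * w x.1 - κ) ∧
        (∀ x (j : Fin (d - 1)), (G₂ x).2 (e j) = x.2.2 j - ε * C) ∧
        (∀ x, (G₂ x).2 L = ε * w x.1 + κ) := by
    refine ⟨fun x => (fun k => if h : (k : ℕ) < d - 1 then x.2.1 ⟨k, h⟩ + 2 * ε * C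
        else ε * w x.1 - κ,
      fun k => if h : (k : ℕ) < d - 1 then x.2.2 ⟨k, h⟩ - ε * C
        else ε * w x.1 + κ), ?_, ?_, ?_, ?_⟩
    · intro x j; exact dif_pos j.2
    · intro x; exact dif_neg hLval
    · intro x j; exact dif_pos j.2
    · intro x; exact dif_neg hLval
  -- key membership characterization for boxes of the first kind
  have key1 : ∀ p ∈ P₁, ∀ β ∈ B₂, ∀ p' ∈ P₁, ∀ q ∈ P₂,
      (Φ (p', q) ∈ openBox (G₁ (p, β)) ↔ p' = p ∧ q ∈ openBox β) := by
    intro p hp β hβ p' hp' q hq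
    constructor
    · intro hmem
      rw [mem_openBox_iff] at hmem
      have hpp : p' = p := by
        by_contra hne
        obtain ⟨j, hj⟩ := Function.ne_iff.mp hne
        have h := hmem (e j)
        rw [hΦe, hG₁1e, hG₁2e] at h
        have hq1 := abs_le.mp (hCq q hq (e j))
        have hb1 := abs_le.mp (hCβ₁ β hβ (e j))
        have hb2 := abs_le.mp (hCβ₂ β hβ (e j))
        have hΔj := hΔ p' hp' p hp j hj
        have habs : |p' j - p j| < 2 * ε * C := by
          rw [abs_sub_lt_iff]
          constructor <;> nlinarith [h.1, h.2, hε0, hC1]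
        nlinarith [habs, hΔj, hεΔ, mul_pos hε0 hC0]
      subst hpp
      refine ⟨rfl, ?_⟩
      rw [mem_openBox_iff]
      intro k
      by_cases hk : (k : ℕ) < d - 1
      · obtain ⟨j, rfl⟩ := hesurj k hk
        have h := hmem (e j)
        rw [hΦe, hG₁1e, hG₁2e] at h
        constructor
        · nlinarith [h.1, hε0]
        · nlinarith [h.2, hε0]
      · have hkL' : k = L := hkL k hk
        subst hkL'
        have h := hmem L
        rw [hΦL, hG₁1L, hG₁2L] at h
        have h1 : β.1 L + θ * r₁ (p', β) < w q := (mul_lt_mul_iff_right₀ hε0).mp h.1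
        have h2 : w q < β.2 L := (mul_lt_mul_iff_right₀ hε0).mp h.2
        rw [hwdef] at h1 h2
        simp only at h1 h2
        have hr1 := hr₁mem (p', β) (Finset.mem_product.mpr ⟨hp', hβ⟩)
        have hrq := hrmem q hq
        simp only [Set.mem_Ioo] at hr1 hrq
        constructor
        · nlinarith [hθ0]
        · nlinarith [hθ0]
    · rintro ⟨rfl, hqβ⟩
      have hyI : (q, β) ∈ I₂ := (hI₂mem (q, β)).mpr ⟨hq, hβ, hqβ⟩
      rw [mem_openBox_iff]
      intro k
      by_cases hk : (k : ℕ) < d - 1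
      · obtain ⟨j, rfl⟩ := hesurj k hk
        rw [hΦe, hG₁1e, hG₁2e]
        have hmar := hμ₂ (q, β) hyI (e j)
        constructor
        · nlinarith [hmar.1, hε0, hμ0, mul_le_mul_of_nonneg_left hmar.1 hε0.le]
        · nlinarith [hmar.2, hε0, hμ0, mul_le_mul_of_nonneg_left hmar.2 hε0.le]
      · have hkL' : k = L := hkL k hk
        subst hkL'
        rw [hΦL, hG₁1L, hG₁2L]
        have hmar := hμ₂ (q, β) hyI L
        have hr1 := hr₁mem (p', β) (Finset.mem_product.mpr ⟨hp', hβ⟩)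
        have hrq := hrmem q hq
        simp only [Set.mem_Ioo] at hr1 hrq
        rw [hwdef]
        simp only
        constructor
        · apply (mul_lt_mul_iff_right₀ hε0).mpr
          nlinarith [hmar.1, hθμ, hθ0, hr1.2, hrq.1]
        · apply (mul_lt_mul_iff_right₀ hε0).mpr
          nlinarith [hmar.2, hθμ, hθ0, hrq.2]
  -- key membership characterization for boxes of the second kind
  have key2 : ∀ q ∈ P₂, ∀ R ∈ B₁, ∀ p' ∈ P₁, ∀ qt ∈ P₂,
      (Φ (p', qt) ∈ openBox (G₂ (q, R)) ↔ qt = q ∧ p' ∈ openBox R) := by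
    intro q hq R hR p' hp' qt hqt
    constructor
    · intro hmem
      rw [mem_openBox_iff] at hmem
      have hL := hmem L
      rw [hΦL, hG₂1L, hG₂2L] at hL
      have hqq : qt = q := by
        by_contra hne
        have h1 := hρw qt hqt q hq hne
        have h2 : |ε * w qt - ε * w q| < κ := by
          rw [abs_lt]
          constructor
          · linarith [hL.1]
          · linarith [hL.2]
        have h3 : ε * |w qt - w q| < κ := by
          calc ε * |w qt - w q| = |ε * (w qt - w q)| := by
                rw [abs_mul, abs_of_pos hε0]
          _ = |ε * w qt - ε * w q| := by ring_nf
          _ < κ := h2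
        nlinarith [hκlt, mul_le_mul_of_nonneg_left h1 hε0.le]
      subst hqq
      refine ⟨rfl, ?_⟩
      rw [mem_openBox_iff]
      intro j
      have h := hmem (e j)
      rw [hΦe, hG₂1e, hG₂2e] at h
      have hqb := abs_le.mp (hCq qt hqt (e j))
      constructor
      · nlinarith [h.1, hε0, hC0, mul_le_mul_of_nonneg_left hqb.2 hε0.le,
          mul_le_mul_of_nonneg_left hqb.1 hε0.le]
      · nlinarith [h.2, hε0, hC0, mul_le_mul_of_nonneg_left hqb.2 hε0.le,
          mul_le_mul_of_nonneg_left hqb.1 hε0.le]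
    · rintro ⟨rfl, hpR⟩
      have hyI : (p', R) ∈ I₁ := (hI₁mem (p', R)).mpr ⟨hp', hR, hpR⟩
      rw [mem_openBox_iff] at hpR
      rw [mem_openBox_iff]
      intro k
      by_cases hk : (k : ℕ) < d - 1
      · obtain ⟨j, rfl⟩ := hesurj k hk
        rw [hΦe, hG₂1e, hG₂2e]
        have hmar := hμ₁ (p', R) hyI j
        have hqb := abs_le.mp (hCq qt hqt (e j))
        constructor
        · nlinarith [hmar.1, hεμ, hε0, hC0, mul_pos hε0 hC0,
            mul_le_mul_of_nonneg_left hqb.1 hε0.le]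
        · nlinarith [hmar.2, hεμ, hε0, hC0, mul_pos hε0 hC0,
            mul_le_mul_of_nonneg_left hqb.2 hε0.le]
      · have hkL' : k = L := hkL k hk
        subst hkL'
        rw [hΦL, hG₂1L, hG₂2L]
        constructor
        · simp only; linarith [hκ0]
        · simp only; linarith [hκ0]
  -- injectivity of the point map
  have hΦinj : Set.InjOn Φ ↑(P₁ ×ˢ P₂) := by
    intro x hx y hy hxy
    rw [Finset.mem_coe, Finset.mem_product] at hx hy
    have hL := congrFun hxy L
    rw [hΦL x, hΦL y] at hL
    have h2 : x.2 = y.2 :=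
      hwinj _ hx.2 _ hy.2 (mul_left_cancel₀ (ne_of_gt hε0) hL)
    have h1 : x.1 = y.1 := by
      funext j
      have h := congrFun hxy (e j)
      rw [hΦe, hΦe, h2] at h
      linarith
    exact Prod.ext_iff.mpr ⟨h1, h2⟩
  -- injectivity of the first-kind box map
  have hG₁inj : Set.InjOn G₁ ↑(P₁ ×ˢ B₂) := by
    intro x hx y hy hxy
    have hL := congrFun (congrArg Prod.fst hxy) L
    rw [hG₁1L x, hG₁1L y] at hL
    have hL' : x.2.1 L + θ * r₁ x = y.2.1 L + θ * r₁ y :=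
      mul_left_cancel₀ (ne_of_gt hε0) hL
    by_cases hrr : r₁ x = r₁ y
    · exact hr₁inj hx hy hrr
    · exfalso
      apply hθS
      refine Finset.mem_coe.mpr (Finset.mem_image.mpr ⟨(x, y), ?_, ?_⟩)
      · rw [Finset.mem_product]
        exact ⟨Finset.mem_coe.mp hx, Finset.mem_coe.mp hy⟩
      · rw [eq_comm, eq_div_iff (sub_ne_zero.mpr hrr)]
        linear_combination hL'
  -- injectivity of the second-kind box map
  have hG₂inj : Set.InjOn G₂ ↑(P₂ ×ˢ B₁) := by
    intro x hx y hy hxy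
    rw [Finset.mem_coe, Finset.mem_product] at hx hy
    have hL := congrFun (congrArg Prod.snd hxy) L
    rw [hG₂2L x, hG₂2L y] at hL
    have h1 : x.1 = y.1 :=
      hwinj _ hx.1 _ hy.1 (mul_left_cancel₀ (ne_of_gt hε0) (by linarith))
    have h2 : x.2.1 = y.2.1 := by
      funext j
      have h := congrFun (congrArg Prod.fst hxy) (e j)
      rw [hG₂1e, hG₂1e] at h
      linarith
    have h3 : x.2.2 = y.2.2 := by
      funext j
      have h := congrFun (congrArg Prod.snd hxy) (e j)
      rw [hG₂2e, hG₂2e] at h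
      linarith
    exact Prod.ext_iff.mpr ⟨h1, Prod.ext_iff.mpr ⟨h2, h3⟩⟩
  -- boxes of the two kinds are distinct
  have hkinds : ∀ x ∈ P₁ ×ˢ B₂, ∀ y ∈ P₂ ×ˢ B₁, G₁ x ≠ G₂ y := by
    intro x hx y hy heq
    apply hκS
    have e1 := congrFun (congrArg Prod.fst heq) L
    have e2 := congrFun (congrArg Prod.snd heq) L
    rw [hG₁1L] at e1
    rw [hG₂1L] at e1
    rw [hG₁2L] at e2
    rw [hG₂2L] at e2
    refine Finset.mem_coe.mpr (Finset.mem_image.mpr ⟨x, hx, ?_⟩)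
    linarith
  -- the final configuration
  set Pts : Finset (Fin d → ℝ) := (P₁ ×ˢ P₂).image Φ with hPdef
  set Bx : Finset ((Fin d → ℝ) × (Fin d → ℝ)) :=
    ((P₁ ×ˢ B₂).image G₁) ∪ ((P₂ ×ˢ B₁).image G₂) with hBdef
  have hdisjB : Disjoint ((P₁ ×ˢ B₂).image G₁) ((P₂ ×ˢ B₁).image G₂) := by
    rw [Finset.disjoint_left]
    rintro b hb1 hb2
    obtain ⟨x, hx, rfl⟩ := Finset.mem_image.mp hb1
    obtain ⟨y, hy, heq⟩ := Finset.mem_image.mp hb2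
    exact hkinds x hx y hy heq.symm
  refine ⟨Pts, Bx, ?_, ?_, ?_, ?_⟩
  · rw [hPdef, Finset.card_image_of_injOn hΦinj, Finset.card_product, hP₁, hP₂]
  · rw [hBdef, Finset.card_union_of_disjoint hdisjB,
      Finset.card_image_of_injOn hG₁inj, Finset.card_image_of_injOn hG₂inj,
      Finset.card_product, Finset.card_product, hP₁, hB₂, hP₂, hB₁]
  · -- incidence count
    rw [boxIncidences_eq]
    have hfe : ((Pts ×ˢ Bx).filter fun pr => pr.1 ∈ openBox pr.2) =
        ((P₁ ×ˢ I₂).image fun z => (Φ (z.1, z.2.1), G₁ (z.1, z.2.2))) ∪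
        ((P₂ ×ˢ I₁).image fun z => (Φ (z.2.1, z.1), G₂ (z.1, z.2.2))) := by
      ext pr
      constructor
      · intro hpr
        have hmm := Finset.mem_filter.mp hpr
        have hprod := Finset.mem_product.mp hmm.1
        have hinc := hmm.2
        obtain ⟨a, ha, hae⟩ := Finset.mem_image.mp (hPdef ▸ hprod.1)
        have haP := Finset.mem_product.mp ha
        rcases Finset.mem_union.mp (hBdef ▸ hprod.2) with hbx | hbx
        · obtain ⟨x, hx, hxe⟩ := Finset.mem_image.mp hbx
          have hxP := Finset.mem_product.mp hx
          rw [← hae, ← hxe] at hinc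
          have hk := (key1 x.1 hxP.1 x.2 hxP.2 a.1 haP.1 a.2 haP.2).mp hinc
          apply Finset.mem_union_left
          refine Finset.mem_image.mpr ⟨(x.1, (a.2, x.2)), ?_, ?_⟩
          · exact Finset.mem_product.mpr
              ⟨hxP.1, (hI₂mem (a.2, x.2)).mpr ⟨haP.2, hxP.2, hk.2⟩⟩
          · show (Φ (x.1, a.2), G₁ (x.1, x.2)) = pr
            refine Prod.ext_iff.mpr ⟨?_, ?_⟩
            · show Φ (x.1, a.2) = pr.1
              rw [← hae, ← hk.1]
            · exact hxe
        · obtain ⟨y, hy, hye⟩ := Finset.mem_image.mp hbx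
          have hyP := Finset.mem_product.mp hy
          rw [← hae, ← hye] at hinc
          have hk := (key2 y.1 hyP.1 y.2 hyP.2 a.1 haP.1 a.2 haP.2).mp hinc
          apply Finset.mem_union_right
          refine Finset.mem_image.mpr ⟨(y.1, (a.1, y.2)), ?_, ?_⟩
          · exact Finset.mem_product.mpr
              ⟨hyP.1, (hI₁mem (a.1, y.2)).mpr ⟨haP.1, hyP.2, hk.2⟩⟩
          · show (Φ (a.1, y.1), G₂ (y.1, y.2)) = pr
            refine Prod.ext_iff.mpr ⟨?_, ?_⟩
            · show Φ (a.1, y.1) = pr.1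
              rw [← hae, ← hk.1]
            · exact hye
      · intro hpr
        rcases Finset.mem_union.mp hpr with h | h
        · obtain ⟨z, hz, hze⟩ := Finset.mem_image.mp h
          have hzP := Finset.mem_product.mp hz
          have hzI := (hI₂mem z.2).mp hzP.2
          refine Finset.mem_filter.mpr ⟨Finset.mem_product.mpr ⟨?_, ?_⟩, ?_⟩
          · rw [← hze, hPdef]
            exact Finset.mem_image.mpr ⟨(z.1, z.2.1),
              Finset.mem_product.mpr ⟨hzP.1, hzI.1⟩, rfl⟩
          · rw [← hze, hBdef]
            exact Finset.mem_union_left _ (Finset.mem_image.mpr ⟨(z.1, z.2.2),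
              Finset.mem_product.mpr ⟨hzP.1, hzI.2.1⟩, rfl⟩)
          · rw [← hze]
            exact (key1 z.1 hzP.1 z.2.2 hzI.2.1 z.1 hzP.1 z.2.1 hzI.1).mpr
              ⟨rfl, hzI.2.2⟩
        · obtain ⟨z, hz, hze⟩ := Finset.mem_image.mp h
          have hzP := Finset.mem_product.mp hz
          have hzI := (hI₁mem z.2).mp hzP.2
          refine Finset.mem_filter.mpr ⟨Finset.mem_product.mpr ⟨?_, ?_⟩, ?_⟩
          · rw [← hze, hPdef]
            exact Finset.mem_image.mpr ⟨(z.2.1, z.1),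
              Finset.mem_product.mpr ⟨hzI.1, hzP.1⟩, rfl⟩
          · rw [← hze, hBdef]
            exact Finset.mem_union_right _ (Finset.mem_image.mpr ⟨(z.1, z.2.2),
              Finset.mem_product.mpr ⟨hzP.1, hzI.2.1⟩, rfl⟩)
          · rw [← hze]
            exact (key2 z.1 hzP.1 z.2.2 hzI.2.1 z.2.1 hzI.1 z.1 hzP.1).mpr
              ⟨rfl, hzI.2.2⟩
    rw [hfe]
    have hinj1 : Set.InjOn
        (fun z : (Fin (d-1) → ℝ) × ((Fin d → ℝ) × ((Fin d → ℝ) × (Fin d → ℝ))) =>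
          (Φ (z.1, z.2.1), G₁ (z.1, z.2.2)))
        ↑(P₁ ×ˢ I₂) := by
      intro z hz z' hz' hzz
      rw [Finset.mem_coe, Finset.mem_product] at hz hz'
      have hzI := (hI₂mem z.2).mp hz.2
      have hzI' := (hI₂mem z'.2).mp hz'.2
      have e2 : G₁ (z.1, z.2.2) = G₁ (z'.1, z'.2.2) := congrArg Prod.snd hzz
      have h12 := hG₁inj
        (Finset.mem_coe.mpr (Finset.mem_product.mpr ⟨hz.1, hzI.2.1⟩))
        (Finset.mem_coe.mpr (Finset.mem_product.mpr ⟨hz'.1, hzI'.2.1⟩)) e2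
      have e1 : Φ (z.1, z.2.1) = Φ (z'.1, z'.2.1) := congrArg Prod.fst hzz
      have h21 := hΦinj
        (Finset.mem_coe.mpr (Finset.mem_product.mpr ⟨hz.1, hzI.1⟩))
        (Finset.mem_coe.mpr (Finset.mem_product.mpr ⟨hz'.1, hzI'.1⟩)) e1
      have hA : z.1 = z'.1 := (Prod.ext_iff.mp h12).1
      have hB : z.2.2 = z'.2.2 := (Prod.ext_iff.mp h12).2
      have hCc : z.2.1 = z'.2.1 := (Prod.ext_iff.mp h21).2
      exact Prod.ext_iff.mpr ⟨hA, Prod.ext_iff.mpr ⟨hCc, hB⟩⟩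
    have hinj2 : Set.InjOn
        (fun z : (Fin d → ℝ) ×
            ((Fin (d-1) → ℝ) × ((Fin (d-1) → ℝ) × (Fin (d-1) → ℝ))) =>
          (Φ (z.2.1, z.1), G₂ (z.1, z.2.2)))
        ↑(P₂ ×ˢ I₁) := by
      intro z hz z' hz' hzz
      rw [Finset.mem_coe, Finset.mem_product] at hz hz'
      have hzI := (hI₁mem z.2).mp hz.2
      have hzI' := (hI₁mem z'.2).mp hz'.2
      have e2 : G₂ (z.1, z.2.2) = G₂ (z'.1, z'.2.2) := congrArg Prod.snd hzz
      have h12 := hG₂inj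
        (Finset.mem_coe.mpr (Finset.mem_product.mpr ⟨hz.1, hzI.2.1⟩))
        (Finset.mem_coe.mpr (Finset.mem_product.mpr ⟨hz'.1, hzI'.2.1⟩)) e2
      have e1 : Φ (z.2.1, z.1) = Φ (z'.2.1, z'.1) := congrArg Prod.fst hzz
      have h21 := hΦinj
        (Finset.mem_coe.mpr (Finset.mem_product.mpr ⟨hzI.1, hz.1⟩))
        (Finset.mem_coe.mpr (Finset.mem_product.mpr ⟨hzI'.1, hz'.1⟩)) e1
      have hA : z.1 = z'.1 := (Prod.ext_iff.mp h12).1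
      have hB : z.2.2 = z'.2.2 := (Prod.ext_iff.mp h12).2
      have hCc : z.2.1 = z'.2.1 := (Prod.ext_iff.mp h21).1
      exact Prod.ext_iff.mpr ⟨hA, Prod.ext_iff.mpr ⟨hCc, hB⟩⟩
    have hdisjE : Disjoint
        ((P₁ ×ˢ I₂).image fun z => (Φ (z.1, z.2.1), G₁ (z.1, z.2.2)))
        ((P₂ ×ˢ I₁).image fun z => (Φ (z.2.1, z.1), G₂ (z.1, z.2.2))) := by
      rw [Finset.disjoint_left]
      rintro b hb1 hb2
      obtain ⟨z, hz, rfl⟩ := Finset.mem_image.mp hb1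
      obtain ⟨z', hz', heq⟩ := Finset.mem_image.mp hb2
      have hzP := Finset.mem_product.mp hz
      have hzI := (hI₂mem z.2).mp hzP.2
      have hzP' := Finset.mem_product.mp hz'
      have hzI' := (hI₁mem z'.2).mp hzP'.2
      have := congrArg Prod.snd heq
      exact hkinds (z.1, z.2.2) (Finset.mem_product.mpr ⟨hzP.1, hzI.2.1⟩)
        (z'.1, z'.2.2) (Finset.mem_product.mpr ⟨hzP'.1, hzI'.2.1⟩) this.symm
    rw [Finset.card_union_of_disjoint hdisjE,
      Finset.card_image_of_injOn hinj1, Finset.card_image_of_injOn hinj2,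
      Finset.card_product, Finset.card_product, hP₁, hP₂, hI₁card, hI₂card]
  · -- K22-freeness
    rintro ⟨pt₁, pt₂, bx₁, bx₂, h₁, h₂, hne, hb₁, hb₂, hbne, m11, m12, m21, m22⟩
    rw [hPdef] at h₁ h₂
    rw [hBdef] at hb₁ hb₂
    obtain ⟨a, ha, rfl⟩ := Finset.mem_image.mp h₁
    obtain ⟨b, hb, rfl⟩ := Finset.mem_image.mp h₂
    have haP := Finset.mem_product.mp ha
    have hbP := Finset.mem_product.mp hb
    rcases Finset.mem_union.mp hb₁ with hb₁ | hb₁ <;>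
      rcases Finset.mem_union.mp hb₂ with hb₂ | hb₂
    · -- both first kind
      obtain ⟨x, hx, rfl⟩ := Finset.mem_image.mp hb₁
      obtain ⟨y, hy, rfl⟩ := Finset.mem_image.mp hb₂
      have hxP := Finset.mem_product.mp hx
      have hyP := Finset.mem_product.mp hy
      have k11 := (key1 x.1 hxP.1 x.2 hxP.2 a.1 haP.1 a.2 haP.2).mp m11
      have k12 := (key1 y.1 hyP.1 y.2 hyP.2 a.1 haP.1 a.2 haP.2).mp m12
      have k21 := (key1 x.1 hxP.1 x.2 hxP.2 b.1 hbP.1 b.2 hbP.2).mp m21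
      have k22 := (key1 y.1 hyP.1 y.2 hyP.2 b.1 hbP.1 b.2 hbP.2).mp m22
      apply hK₂
      refine ⟨a.2, b.2, x.2, y.2, haP.2, hbP.2, ?_, hxP.2, hyP.2, ?_,
        k11.2, k12.2, k21.2, k22.2⟩
      · intro hcon
        apply hne
        have : a = b := Prod.ext_iff.mpr ⟨k11.1.trans k21.1.symm, hcon⟩
        rw [this]
      · intro hcon
        apply hbne
        have : x = y := Prod.ext_iff.mpr ⟨k11.1.symm.trans k12.1, hcon⟩
        rw [this]
    · -- first and second kind
      obtain ⟨x, hx, rfl⟩ := Finset.mem_image.mp hb₁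
      obtain ⟨y, hy, rfl⟩ := Finset.mem_image.mp hb₂
      have hxP := Finset.mem_product.mp hx
      have hyP := Finset.mem_product.mp hy
      have k11 := (key1 x.1 hxP.1 x.2 hxP.2 a.1 haP.1 a.2 haP.2).mp m11
      have k21 := (key1 x.1 hxP.1 x.2 hxP.2 b.1 hbP.1 b.2 hbP.2).mp m21
      have k12 := (key2 y.1 hyP.1 y.2 hyP.2 a.1 haP.1 a.2 haP.2).mp m12
      have k22 := (key2 y.1 hyP.1 y.2 hyP.2 b.1 hbP.1 b.2 hbP.2).mp m22
      apply hne
      have : a = b := Prod.ext_iff.mpr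
        ⟨k11.1.trans k21.1.symm, k12.1.trans k22.1.symm⟩
      rw [this]
    · -- second and first kind
      obtain ⟨x, hx, rfl⟩ := Finset.mem_image.mp hb₁
      obtain ⟨y, hy, rfl⟩ := Finset.mem_image.mp hb₂
      have hxP := Finset.mem_product.mp hx
      have hyP := Finset.mem_product.mp hy
      have k11 := (key2 x.1 hxP.1 x.2 hxP.2 a.1 haP.1 a.2 haP.2).mp m11
      have k21 := (key2 x.1 hxP.1 x.2 hxP.2 b.1 hbP.1 b.2 hbP.2).mp m21
      have k12 := (key1 y.1 hyP.1 y.2 hyP.2 a.1 haP.1 a.2 haP.2).mp m12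
      have k22 := (key1 y.1 hyP.1 y.2 hyP.2 b.1 hbP.1 b.2 hbP.2).mp m22
      apply hne
      have : a = b := Prod.ext_iff.mpr
        ⟨k12.1.trans k22.1.symm, k11.1.trans k21.1.symm⟩
      rw [this]
    · -- both second kind
      obtain ⟨x, hx, rfl⟩ := Finset.mem_image.mp hb₁
      obtain ⟨y, hy, rfl⟩ := Finset.mem_image.mp hb₂
      have hxP := Finset.mem_product.mp hx
      have hyP := Finset.mem_product.mp hy
      have k11 := (key2 x.1 hxP.1 x.2 hxP.2 a.1 haP.1 a.2 haP.2).mp m11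
      have k12 := (key2 y.1 hyP.1 y.2 hyP.2 a.1 haP.1 a.2 haP.2).mp m12
      have k21 := (key2 x.1 hxP.1 x.2 hxP.2 b.1 hbP.1 b.2 hbP.2).mp m21
      have k22 := (key2 y.1 hyP.1 y.2 hyP.2 b.1 hbP.1 b.2 hbP.2).mp m22
      apply hK₁
      refine ⟨a.1, b.1, x.2, y.2, haP.1, hbP.1, ?_, hxP.2, hyP.2, ?_,
        k11.2, k12.2, k21.2, k22.2⟩
      · intro hcon
        apply hne
        have : a = b := Prod.ext_iff.mpr ⟨hcon, k11.1.trans k21.1.symm⟩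
        rw [this]
      · intro hcon
        apply hbne
        have : x = y := Prod.ext_iff.mpr ⟨k11.1.symm.trans k12.1, hcon⟩
        rw [this]
end

section
/- For every ℓ ∈ ℕ with ℓ ≥ 1, there exist a set P of ℓ^ℓ points in ℝ² and a set B of ℓ^ℓ dyadic rectangles in ℝ² such that the incidence graph between P and B is K_{2,2}-free and the number of incidences (pairs (p, R) ∈ P × B with p ∈ R) equals ℓ · ℓ^ℓ. In particular, setting n := ℓ^ℓ, the number of incidences in a K_{2,2}-free point–dyadic-rectangle configuration with n points and n rectangles can be Ω(n · log n / log log n). -/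
/-- The dyadic interval `[s·2^t, (s+1)·2^t) ⊆ ℝ`, for `s, t ∈ ℤ`. -/
def dyadicInterval (s t : ℤ) : Set ℝ :=
  Set.Ico ((s : ℝ) * (2 : ℝ) ^ t) (((s : ℝ) + 1) * (2 : ℝ) ^ t)

/-- The dyadic rectangle in `ℝ²` with parameters `q = (s₁, t₁, s₂, t₂)`, namely
`[s₁·2^{t₁}, (s₁+1)·2^{t₁}) × [s₂·2^{t₂}, (s₂+1)·2^{t₂})`. -/
def dyadicRect (q : ℤ × ℤ × ℤ × ℤ) : Set (ℝ × ℝ) :=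
  {p | p.1 ∈ dyadicInterval q.1 q.2.1 ∧ p.2 ∈ dyadicInterval q.2.2.1 q.2.2.2}

/-!
Points are indexed by words `w ∈ [ℓ]^ℓ`, rectangles by a position `i` together with a word on the
other `ℓ - 1` positions, and a point lies in a rectangle iff deleting letter `i` from its word gives
the rectangle's word. Two words that agree off two different positions are equal, and two
rectangles with the same position sharing a point are equal, so the incidence graph is
`K_{2,2}`-free; every rectangle contains exactly `ℓ` points.

Geometrically, `w` is read as a base-`2^ℓ` fraction, forwards for the x-coordinate and backwards
for the y-coordinate (letters are `< ℓ < 2^ℓ`, so they are genuine digits). The first `i`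
letters then pin down a dyadic interval of length `2^{-ℓi}` in x, and the last `ℓ - 1 - i` letters
one of length `2^{-ℓ(ℓ-1-i)}` in y.
-/

lemma mem_dyadicInterval_iff_floor {x : ℝ} {s t : ℤ} :
    x ∈ dyadicInterval s t ↔ ⌊x / 2 ^ t⌋ = s := by
  have h2t : (0 : ℝ) < 2 ^ t := by positivity
  rw [dyadicInterval, Set.mem_Ico, Int.floor_eq_iff, le_div_iff₀ h2t, div_lt_iff₀ h2t]

lemma natCast_div_two_pow_mem_dyadicInterval_iff (N a d : ℕ) (s : ℤ) :
    (N : ℝ) / 2 ^ (a + d) ∈ dyadicInterval s (-(a : ℤ)) ↔ ((N / 2 ^ d : ℕ) : ℤ) = s := by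
  have hscale : (N : ℝ) / 2 ^ (a + d) / 2 ^ (-(a : ℤ)) = (N : ℝ) / ((2 ^ d : ℕ) : ℝ) := by
    rw [zpow_neg, zpow_natCast, pow_add]
    push_cast
    field_simp
  rw [mem_dyadicInterval_iff_floor, hscale, Int.floor_div_natCast, Int.floor_natCast,
    Int.natCast_div]

lemma List.ofFn_removeNth {α : Type*} {n : ℕ} (i : Fin (n + 1)) (w : Fin (n + 1) → α) :
    List.ofFn (i.removeNth w) = (List.ofFn w).eraseIdx i := by
  refine List.ext_getElem (by simp [List.length_eraseIdx, i.is_le]) fun j _ _ => ?_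
  simp only [List.getElem_ofFn, List.getElem_eraseIdx, Fin.removeNth_apply]
  split_ifs with hj
  · rw [Fin.succAbove_of_castSucc_lt _ _ (by simpa [Fin.lt_def] using hj)]
    rfl
  · rw [Fin.succAbove_of_le_castSucc _ _ (by simpa [Fin.le_def] using hj)]
    rfl

lemma Fin.eq_of_removeNth_eq_of_ne {α : Type*} {n : ℕ} {i j : Fin (n + 1)} (hij : i ≠ j)
    {v w : Fin (n + 1) → α} (hi : i.removeNth v = i.removeNth w)
    (hj : j.removeNth v = j.removeNth w) : v = w := by
  funext x
  rcases eq_or_ne x i with rfl | hxi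
  · obtain ⟨y, rfl⟩ := Fin.exists_succAbove_eq hij
    exact congrFun hj y
  · obtain ⟨y, rfl⟩ := Fin.exists_succAbove_eq hxi
    exact congrFun hi y

namespace DyadicK22

open Nat (ofDigits)

variable {k : ℕ}

/-- `Nat.ofDigits` is little-endian, so the last entry of `L` is the leading digit. -/
noncomputable def digitFraction (k : ℕ) (L : List ℕ) : ℝ :=
  (ofDigits (2 ^ k) L : ℕ) / 2 ^ (k * L.length)

lemma digitFraction_mem_dyadicInterval_iff (hk : 0 < k) {L M : List ℕ}
    (hL : ∀ d ∈ L, d < 2 ^ k) (hM : ∀ d ∈ M, d < 2 ^ k) (hML : M.length ≤ L.length) :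
    digitFraction k L ∈ dyadicInterval (ofDigits (2 ^ k) M : ℕ) (-((k * M.length : ℕ) : ℤ)) ↔
      L.drop (L.length - M.length) = M := by
  have hsplit : k * L.length = k * M.length + k * (L.length - M.length) := by
    rw [← Nat.mul_add, Nat.add_sub_cancel' hML]
  rw [digitFraction, hsplit, natCast_div_two_pow_mem_dyadicInterval_iff, Nat.cast_inj, pow_mul,
    Nat.ofDigits_div_pow_eq_ofDigits_drop _ (by positivity) _ hL]
  refine ⟨Nat.ofDigits_inj_of_len_eq (Nat.one_lt_two_pow hk.ne') (by simp; omega)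
    (fun d hd => hL d (List.mem_of_mem_drop hd)) hM, congrArg _⟩

lemma digitFraction_inj_of_length_eq (hk : 0 < k) {L L' : List ℕ} (hL : ∀ d ∈ L, d < 2 ^ k)
    (hL' : ∀ d ∈ L', d < 2 ^ k) (hlen : L.length = L'.length)
    (h : digitFraction k L = digitFraction k L') : L = L' := by
  have hmem : digitFraction k L ∈ dyadicInterval (ofDigits (2 ^ k) L' : ℕ)
      (-((k * L'.length : ℕ) : ℤ)) := by
    rw [h, digitFraction_mem_dyadicInterval_iff hk hL' hL' le_rfl, Nat.sub_self, List.drop_zero]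
  rwa [digitFraction_mem_dyadicInterval_iff hk hL hL' hlen.ge, hlen, Nat.sub_self,
    List.drop_zero] at hmem

noncomputable def digitPoint (k : ℕ) (L : List ℕ) : ℝ × ℝ :=
  (digitFraction k L.reverse, digitFraction k L)

def digitRect (k : ℕ) (L₁ L₂ : List ℕ) : ℤ × ℤ × ℤ × ℤ :=
  ((ofDigits (2 ^ k) L₁.reverse : ℕ), -((k * L₁.length : ℕ) : ℤ),
    (ofDigits (2 ^ k) L₂ : ℕ), -((k * L₂.length : ℕ) : ℤ))

lemma digitPoint_mem_dyadicRect_iff (hk : 0 < k) {L L₁ L₂ : List ℕ}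
    (hL : ∀ d ∈ L, d < 2 ^ k) (hL₁ : ∀ d ∈ L₁, d < 2 ^ k) (hL₂ : ∀ d ∈ L₂, d < 2 ^ k)
    (hlen : L.length = L₁.length + 1 + L₂.length) :
    digitPoint k L ∈ dyadicRect (digitRect k L₁ L₂) ↔ L.eraseIdx L₁.length = L₁ ++ L₂ := by
  have hx : digitFraction k L.reverse ∈
      dyadicInterval (ofDigits (2 ^ k) L₁.reverse : ℕ) (-((k * L₁.length : ℕ) : ℤ)) ↔
      L.take L₁.length = L₁ := by
    rw [← List.length_reverse (as := L₁), digitFraction_mem_dyadicInterval_iff hk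
      (by simpa using hL) (by simpa using hL₁) (by simp; omega), List.drop_reverse,
      List.reverse_inj]
    simp only [List.length_reverse, show L.length - (L.length - L₁.length) = L₁.length by omega]
  have hy : digitFraction k L ∈
      dyadicInterval (ofDigits (2 ^ k) L₂ : ℕ) (-((k * L₂.length : ℕ) : ℤ)) ↔
      L.drop (L₁.length + 1) = L₂ := by
    rw [digitFraction_mem_dyadicInterval_iff hk hL hL₂ (by omega),
      show L.length - L₂.length = L₁.length + 1 by omega]
  have htake : (L.take L₁.length).length = L₁.length := by simp; omega
  refine (and_congr hx hy).trans ?_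
  rw [List.eraseIdx_eq_take_drop_succ]
  exact ⟨fun ⟨h₁, h₂⟩ => by rw [h₁, h₂], fun h => List.append_inj h htake⟩

lemma eq_of_digitRect_eq (hk : 0 < k) {L₁ L₂ M₁ M₂ : List ℕ}
    (hL₁ : ∀ d ∈ L₁, d < 2 ^ k) (hL₂ : ∀ d ∈ L₂, d < 2 ^ k)
    (hM₁ : ∀ d ∈ M₁, d < 2 ^ k) (hM₂ : ∀ d ∈ M₂, d < 2 ^ k)
    (h : digitRect k L₁ L₂ = digitRect k M₁ M₂) : L₁ = M₁ ∧ L₂ = M₂ := by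
  simp only [digitRect, Prod.mk.injEq, neg_inj, Nat.cast_inj, Nat.mul_left_cancel_iff hk] at h
  obtain ⟨h₁, hlen₁, h₂, hlen₂⟩ := h
  have hb : 1 < 2 ^ k := Nat.one_lt_two_pow hk.ne'
  refine ⟨List.reverse_injective ?_, Nat.ofDigits_inj_of_len_eq hb hlen₂ hL₂ hM₂ h₂⟩
  exact Nat.ofDigits_inj_of_len_eq hb (by simpa using hlen₁) (by simpa using hL₁)
    (by simpa using hM₁) h₁

variable {n m : ℕ}

def tupleDigits (w : Fin n → Fin m) : List ℕ :=
  List.ofFn fun j => (w j : ℕ)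

lemma tupleDigits_injective : Function.Injective (tupleDigits : (Fin n → Fin m) → List ℕ) :=
  fun _ _ h => funext fun j => Fin.val_injective (congrFun (List.ofFn_injective h) j)

lemma tupleDigits_lt_two_pow (hm : m ≤ 2 ^ k) (w : Fin n → Fin m) :
    ∀ d ∈ tupleDigits w, d < 2 ^ k := by
  simp only [tupleDigits, List.mem_ofFn, forall_exists_index]
  rintro _ j rfl
  exact (w j).isLt.trans_le hm

variable (k) in
noncomputable def tuplePoint (w : Fin (n + 1) → Fin m) : ℝ × ℝ :=
  digitPoint k (tupleDigits w)

variable (k) in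
def tupleRect (R : Fin (n + 1) × (Fin n → Fin m)) : ℤ × ℤ × ℤ × ℤ :=
  digitRect k ((tupleDigits R.2).take R.1) ((tupleDigits R.2).drop R.1)

variable (hk : 0 < k) (hm : m ≤ 2 ^ k)
include hk hm

lemma tuplePoint_mem_tupleRect_iff (w : Fin (n + 1) → Fin m)
    (R : Fin (n + 1) × (Fin n → Fin m)) :
    tuplePoint k w ∈ dyadicRect (tupleRect k R) ↔ R.1.removeNth w = R.2 := by
  have hlt := tupleDigits_lt_two_pow hm R.2
  have hlen : (List.take R.1 (tupleDigits R.2)).length = R.1 := by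
    simp [tupleDigits, R.1.is_le]
  rw [tuplePoint, tupleRect, digitPoint_mem_dyadicRect_iff hk (tupleDigits_lt_two_pow hm w)
    (fun d hd => hlt d (List.mem_of_mem_take hd)) (fun d hd => hlt d (List.mem_of_mem_drop hd))
    (by simp [tupleDigits]; omega), List.take_append_drop, hlen, tupleDigits,
    ← List.ofFn_removeNth]
  exact tupleDigits_injective.eq_iff

lemma tuplePoint_injective :
    Function.Injective (tuplePoint k : (Fin (n + 1) → Fin m) → ℝ × ℝ) :=
  fun v w h => tupleDigits_injective <| digitFraction_inj_of_length_eq hk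
    (tupleDigits_lt_two_pow hm v) (tupleDigits_lt_two_pow hm w) (by simp [tupleDigits])
    (congrArg Prod.snd h)

lemma tupleRect_injective :
    Function.Injective (tupleRect k : Fin (n + 1) × (Fin n → Fin m) → ℤ × ℤ × ℤ × ℤ) := by
  rintro ⟨i, f⟩ ⟨j, g⟩ h
  have hf := tupleDigits_lt_two_pow hm f
  have hg := tupleDigits_lt_two_pow hm g
  obtain ⟨htake, hdrop⟩ := eq_of_digitRect_eq hk
    (fun d hd => hf d (List.mem_of_mem_take hd)) (fun d hd => hf d (List.mem_of_mem_drop hd))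
    (fun d hd => hg d (List.mem_of_mem_take hd)) (fun d hd => hg d (List.mem_of_mem_drop hd)) h
  have hij : i = j := Fin.ext <| by
    simpa [tupleDigits, i.is_le, j.is_le] using congrArg List.length htake
  subst hij
  refine congrArg (Prod.mk i) (tupleDigits_injective ?_)
  rw [← List.take_append_drop i (tupleDigits f), htake, hdrop, List.take_append_drop]

lemma eq_or_eq_of_tuplePoint_mem_tupleRect {v w : Fin (n + 1) → Fin m}
    {R S : Fin (n + 1) × (Fin n → Fin m)}
    (hvR : tuplePoint k v ∈ dyadicRect (tupleRect k R))
    (hvS : tuplePoint k v ∈ dyadicRect (tupleRect k S))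
    (hwR : tuplePoint k w ∈ dyadicRect (tupleRect k R))
    (hwS : tuplePoint k w ∈ dyadicRect (tupleRect k S)) : v = w ∨ R = S := by
  obtain ⟨i, f⟩ := R
  obtain ⟨j, g⟩ := S
  simp only [tuplePoint_mem_tupleRect_iff hk hm] at hvR hvS hwR hwS
  rcases eq_or_ne i j with rfl | hij
  · exact Or.inr (by rw [← hvR, ← hvS])
  · exact Or.inl (Fin.eq_of_removeNth_eq_of_ne hij (hvR.trans hwR.symm) (hvS.trans hwS.symm))

lemma ncard_tupleIncidences :
    {pr : (ℝ × ℝ) × (ℤ × ℤ × ℤ × ℤ) |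
      pr.1 ∈ Finset.univ.image (tuplePoint k (n := n) (m := m)) ∧
      pr.2 ∈ Finset.univ.image (tupleRect k (n := n) (m := m)) ∧ pr.1 ∈ dyadicRect pr.2}.ncard =
      m ^ (n + 1) * (n + 1) := by
  calc _ = (Set.range fun q : (Fin (n + 1) → Fin m) × Fin (n + 1) =>
        (tuplePoint k q.1, tupleRect k (q.2, q.2.removeNth q.1))).ncard := by
        congr 1
        ext ⟨p, R⟩
        simp only [Finset.mem_image, Finset.mem_univ, true_and, Set.mem_ofPred_eq, Set.mem_range,
          Prod.mk.injEq]
        constructor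
        · rintro ⟨⟨w, rfl⟩, ⟨⟨i, f⟩, rfl⟩, hmem⟩
          exact ⟨(w, i), rfl, by rw [(tuplePoint_mem_tupleRect_iff hk hm w (i, f)).1 hmem]⟩
        · rintro ⟨⟨w, i⟩, rfl, rfl⟩
          exact ⟨⟨w, rfl⟩, ⟨_, rfl⟩, (tuplePoint_mem_tupleRect_iff hk hm w _).2 rfl⟩
    _ = m ^ (n + 1) * (n + 1) := by
        rw [Set.ncard_range_of_injective, Nat.card_eq_fintype_card, Fintype.card_prod,
          Fintype.card_fun, Fintype.card_fin, Fintype.card_fin]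
        rintro ⟨v, i⟩ ⟨w, j⟩ h
        obtain ⟨hvw, hij⟩ := Prod.mk.inj h
        cases tuplePoint_injective hk hm hvw
        cases (Prod.mk.inj (tupleRect_injective hk hm hij)).1
        rfl

end DyadicK22

open DyadicK22

/-- For every `ℓ ≥ 1` there are a set `P` of `ℓ^ℓ` points in `ℝ²` and a set `B` of `ℓ^ℓ`
dyadic rectangles (given by their parameters, which determine them uniquely) such that
the incidence graph is `K_{2,2}`-free and the number of incidences equals `ℓ · ℓ^ℓ`. -/
theorem dyadic_lower_bound (ℓ : ℕ) (hℓ : 1 ≤ ℓ) :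
    ∃ (P : Finset (ℝ × ℝ)) (B : Finset (ℤ × ℤ × ℤ × ℤ)),
      P.card = ℓ ^ ℓ ∧ B.card = ℓ ^ ℓ ∧
      (¬ ∃ p₁ p₂ R₁ R₂, p₁ ∈ P ∧ p₂ ∈ P ∧ p₁ ≠ p₂ ∧ R₁ ∈ B ∧ R₂ ∈ B ∧ R₁ ≠ R₂ ∧
        p₁ ∈ dyadicRect R₁ ∧ p₁ ∈ dyadicRect R₂ ∧
        p₂ ∈ dyadicRect R₁ ∧ p₂ ∈ dyadicRect R₂) ∧
      Set.ncard {pr : (ℝ × ℝ) × (ℤ × ℤ × ℤ × ℤ) |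
        pr.1 ∈ P ∧ pr.2 ∈ B ∧ pr.1 ∈ dyadicRect pr.2} = ℓ * ℓ ^ ℓ := by
  obtain ⟨n, rfl⟩ := Nat.exists_eq_add_of_le' hℓ
  have hk : 0 < n + 1 := n.succ_pos
  have hm : n + 1 ≤ 2 ^ (n + 1) := Nat.lt_two_pow_self.le
  refine ⟨Finset.univ.image (tuplePoint (n + 1) (n := n) (m := n + 1)),
    Finset.univ.image (tupleRect (n + 1) (n := n) (m := n + 1)), ?_, ?_, ?_, ?_⟩
  · rw [Finset.card_image_of_injective _ (tuplePoint_injective hk hm), Finset.card_univ,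
      Fintype.card_fun, Fintype.card_fin]
  · rw [Finset.card_image_of_injective _ (tupleRect_injective hk hm), Finset.card_univ,
      Fintype.card_prod, Fintype.card_fun, Fintype.card_fin, Fintype.card_fin, pow_succ']
  · rintro ⟨_, _, _, _, hv, hw, hvw, hR, hS, hRS, hvR, hvS, hwR, hwS⟩
    simp only [Finset.mem_image, Finset.mem_univ, true_and] at hv hw hR hS
    obtain ⟨v, rfl⟩ := hv
    obtain ⟨w, rfl⟩ := hw
    obtain ⟨R, rfl⟩ := hR
    obtain ⟨S, rfl⟩ := hS
    rcases eq_or_eq_of_tuplePoint_mem_tupleRect hk hm hvR hvS hwR hwS with rfl | rfl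
    · exact hvw rfl
    · exact hRS rfl
  · rw [ncard_tupleIncidences hk hm, mul_comm]
end

section
/- Let k ≥ 2 and let R be a finite set of pairwise distinct dyadic rectangles in ℝ² such that R contains no chain D_1 ⊇ D_2 ⊇ ⋯ ⊇ D_k of k nested rectangles. Define a relation ≼ on R by: I × J ≼ I' × J' iff I ⊆ I' and J ⊇ J'. Then ≼ is a partial order on R, and (R, ≼) is locally (k−1)-linear, i.e., every interval [a, b] = {x ∈ R : a ≼ x ≼ b} contains no antichain of size k. Moreover, for every point p ∈ ℝ², the set ℓ_p of rectangles in R containing p is (k−1)-linear, i.e., contains no ≼-antichain of size k. -/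
/-- The relation `≼` on dyadic rectangles `I × J`: `I × J ≼ I' × J'` iff `I ⊆ I'` and
`J ⊇ J'`. -/
def rectLE (q q' : ℤ × ℤ × ℤ × ℤ) : Prop :=
  dyadicInterval q.1 q.2.1 ⊆ dyadicInterval q'.1 q'.2.1 ∧
  dyadicInterval q'.2.2.1 q'.2.2.2 ⊆ dyadicInterval q.2.2.1 q.2.2.2

lemma two_zpow_pos (t : ℤ) : (0:ℝ) < (2:ℝ) ^ t := by positivity

lemma dyadic_lt (s t : ℤ) : (s:ℝ) * (2:ℝ)^t < ((s:ℝ)+1) * (2:ℝ)^t := by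
  have h := two_zpow_pos t; nlinarith

lemma dyadic_nonempty (s t : ℤ) : ((s:ℝ) * (2:ℝ)^t) ∈ dyadicInterval s t :=
  ⟨le_refl _, dyadic_lt s t⟩

lemma dyadic_subset_of_le {s t s' t' : ℤ} (htt : t ≤ t') {x : ℝ}
    (hx : x ∈ dyadicInterval s t) (hx' : x ∈ dyadicInterval s' t') :
    dyadicInterval s t ⊆ dyadicInterval s' t' := by
  obtain ⟨h1, h2⟩ := hx
  obtain ⟨h3, h4⟩ := hx'
  set n : ℕ := (t' - t).toNat with hn
  have hnt : t' = t + (n : ℤ) := by omega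
  have hpow : (2:ℝ)^t' = (2:ℝ)^t * (2:ℝ)^(n:ℕ) := by
    rw [hnt, zpow_add₀ (by norm_num : (2:ℝ) ≠ 0), zpow_natCast]
  have hp := two_zpow_pos t
  have hq : (0:ℝ) < (2:ℝ)^(n:ℕ) := by positivity
  rw [hpow] at h3 h4
  have ha : (s':ℝ) * (2:ℝ)^(n:ℕ) < (s:ℝ) + 1 := by nlinarith
  have hb : (s:ℝ) < ((s':ℝ) + 1) * (2:ℝ)^(n:ℕ) := by nlinarith
  have hA : s' * 2^n ≤ s := by
    have : (s' * 2^n : ℤ) < s + 1 := by exact_mod_cast ha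
    omega
  have hB : s + 1 ≤ (s' + 1) * 2^n := by
    have : (s : ℤ) < (s' + 1) * 2^n := by exact_mod_cast hb
    omega
  rintro y ⟨hy1, hy2⟩
  have hA' : (s':ℝ) * (2:ℝ)^(n:ℕ) ≤ (s:ℝ) := by exact_mod_cast hA
  have hB' : (s:ℝ) + 1 ≤ ((s':ℝ) + 1) * (2:ℝ)^(n:ℕ) := by exact_mod_cast hB
  constructor
  · rw [hpow]; nlinarith
  · rw [hpow]; nlinarith

lemma dyadic_nested {s t s' t' : ℤ} {x : ℝ}
    (hx : x ∈ dyadicInterval s t) (hx' : x ∈ dyadicInterval s' t') :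
    dyadicInterval s t ⊆ dyadicInterval s' t' ∨
    dyadicInterval s' t' ⊆ dyadicInterval s t := by
  rcases le_total t t' with h | h
  · exact Or.inl (dyadic_subset_of_le h hx hx')
  · exact Or.inr (dyadic_subset_of_le h hx' hx)

lemma dyadic_subset_endpoints {s t s' t' : ℤ}
    (h : dyadicInterval s t ⊆ dyadicInterval s' t') :
    (s':ℝ)*(2:ℝ)^t' ≤ (s:ℝ)*(2:ℝ)^t ∧ ((s:ℝ)+1)*(2:ℝ)^t ≤ ((s':ℝ)+1)*(2:ℝ)^t' := by
  rw [dyadicInterval, dyadicInterval, Set.Ico_subset_Ico_iff (dyadic_lt s t)] at h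
  exact h

lemma exp_le_of_subset {s t s' t' : ℤ}
    (h : dyadicInterval s t ⊆ dyadicInterval s' t') : t ≤ t' := by
  obtain ⟨h1, h2⟩ := dyadic_subset_endpoints h
  by_contra hc
  have : (2:ℝ)^t' < (2:ℝ)^t :=
    zpow_lt_zpow_right₀ (by norm_num : (1:ℝ) < 2) (by omega)
  nlinarith

lemma eq_of_subset_exp_eq {s t s' t' : ℤ}
    (h : dyadicInterval s t ⊆ dyadicInterval s' t') (ht : t = t') : s = s' := by
  subst ht
  obtain ⟨h1, h2⟩ := dyadic_subset_endpoints h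
  have hp := two_zpow_pos t
  have hs1 : (s':ℝ) ≤ s := by nlinarith
  have hs2 : (s:ℝ) ≤ s' := by nlinarith
  have : (s:ℝ) = s' := le_antisymm hs2 hs1
  exact_mod_cast this

/-- `subs q q'` : both component intervals of `q` are contained in those of `q'`. -/
def subs (q q' : ℤ × ℤ × ℤ × ℤ) : Prop :=
  dyadicInterval q.1 q.2.1 ⊆ dyadicInterval q'.1 q'.2.1 ∧
  dyadicInterval q.2.2.1 q.2.2.2 ⊆ dyadicInterval q'.2.2.1 q'.2.2.2

lemma subs_rect {q q' : ℤ × ℤ × ℤ × ℤ} (h : subs q q') :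
    dyadicRect q ⊆ dyadicRect q' := fun p hp => ⟨h.1 hp.1, h.2 hp.2⟩

/-- linear proxy: sum of the two exponents. -/
def fexp (q : ℤ × ℤ × ℤ × ℤ) : ℤ := q.2.1 + q.2.2.2

lemma subs_fexp_le {q q' : ℤ × ℤ × ℤ × ℤ} (h : subs q q') : fexp q ≤ fexp q' :=
  add_le_add (exp_le_of_subset h.1) (exp_le_of_subset h.2)

lemma subs_fexp_eq {q q' : ℤ × ℤ × ℤ × ℤ} (h : subs q q') (hf : fexp q = fexp q') :
    q = q' := by
  obtain ⟨h1, h2⟩ := h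
  have e1 : q.2.1 ≤ q'.2.1 := exp_le_of_subset h1
  have e2 : q.2.2.2 ≤ q'.2.2.2 := exp_le_of_subset h2
  have t1 : q.2.1 = q'.2.1 := by unfold fexp at hf; omega
  have t2 : q.2.2.2 = q'.2.2.2 := by unfold fexp at hf; omega
  have s1 : q.1 = q'.1 := eq_of_subset_exp_eq h1 t1
  have s2 : q.2.2.1 = q'.2.2.1 := eq_of_subset_exp_eq h2 t2
  obtain ⟨a, b, c, d⟩ := q
  obtain ⟨a', b', c', d'⟩ := q'
  simp_all

lemma antisymm_aux {q q' : ℤ × ℤ × ℤ × ℤ} (h : rectLE q q') (h' : rectLE q' q) :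
    q = q' := by
  obtain ⟨h1, h2⟩ := h
  obtain ⟨h3, h4⟩ := h'
  have hs : subs q q' := ⟨h1, h4⟩
  have hs' : subs q' q := ⟨h3, h2⟩
  exact subs_fexp_eq hs (le_antisymm (subs_fexp_le hs) (subs_fexp_le hs'))

/-- Key combinatorial lemma. -/
lemma key_lemma (k : ℕ) (hk : 2 ≤ k) (R : Finset (ℤ × ℤ × ℤ × ℤ))
    (hchain : ¬ ∃ D : Fin k → ℤ × ℤ × ℤ × ℤ, Function.Injective D ∧
      (∀ i, D i ∈ R) ∧ ∀ i j : Fin k, i ≤ j → dyadicRect (D j) ⊆ dyadicRect (D i))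
    (A : Finset (ℤ × ℤ × ℤ × ℤ)) (hA : A ⊆ R)
    (hI : ∀ x ∈ A, ∀ y ∈ A,
      dyadicInterval x.1 x.2.1 ⊆ dyadicInterval y.1 y.2.1 ∨
      dyadicInterval y.1 y.2.1 ⊆ dyadicInterval x.1 x.2.1)
    (hJ : ∀ x ∈ A, ∀ y ∈ A,
      dyadicInterval x.2.2.1 x.2.2.2 ⊆ dyadicInterval y.2.2.1 y.2.2.2 ∨
      dyadicInterval y.2.2.1 y.2.2.2 ⊆ dyadicInterval x.2.2.1 x.2.2.2)
    (anti : ∀ x ∈ A, ∀ y ∈ A, x ≠ y → ¬ rectLE x y) :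
    A.card ≤ k - 1 := by
  by_contra hcard
  have hk' : k ≤ A.card := by omega
  -- total comparability under subs
  have comp : ∀ x ∈ A, ∀ y ∈ A, subs x y ∨ subs y x := by
    intro x hx y hy
    by_cases hxy : x = y
    · subst hxy; exact Or.inl ⟨subset_rfl, subset_rfl⟩
    rcases hI x hx y hy with h1 | h1
    · rcases hJ x hx y hy with h2 | h2
      · exact Or.inl ⟨h1, h2⟩
      · exact absurd ⟨h1, h2⟩ (anti x hx y hy hxy)
    · rcases hJ x hx y hy with h2 | h2
      · exact absurd ⟨h1, h2⟩ (anti y hy x hx (Ne.symm hxy))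
      · exact Or.inr ⟨h1, h2⟩
  -- fexp is injective on A
  have finj : Set.InjOn fexp A := by
    intro x hx y hy hf
    rcases comp x hx y hy with h | h
    · exact subs_fexp_eq h hf
    · exact (subs_fexp_eq h hf.symm).symm
  have hBcard : k ≤ (A.image fexp).card := by
    rwa [Finset.card_image_of_injOn finj]
  set emb := (A.image fexp).orderEmbOfCardLe hBcard with hemb
  have hmem : ∀ i : Fin k, ∃ x, x ∈ A ∧ fexp x = emb i.rev := by
    intro i
    have := (A.image fexp).orderEmbOfCardLe_mem hBcard i.rev
    rw [Finset.mem_image] at this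
    obtain ⟨x, hx, hfx⟩ := this
    exact ⟨x, hx, hfx⟩
  choose D hDA hDf using hmem
  apply hchain
  refine ⟨D, ?_, fun i => hA (hDA i), ?_⟩
  · intro i j hij
    have : emb i.rev = emb j.rev := by rw [← hDf i, ← hDf j, hij]
    have := emb.injective this
    exact Fin.rev_inj.mp this
  · intro i j hij
    have hrev : j.rev ≤ i.rev := Fin.rev_le_rev.mpr hij
    have hf : fexp (D j) ≤ fexp (D i) := by
      rw [hDf i, hDf j]; exact emb.monotone hrev
    rcases comp (D j) (hDA j) (D i) (hDA i) with h | h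
    · exact subs_rect h
    · have : fexp (D i) = fexp (D j) := le_antisymm (subs_fexp_le h) hf
      rw [subs_fexp_eq h this]

/-- If a finite set `R` of (pairwise distinct) dyadic rectangles contains no chain of
`k` nested rectangles, then `≼` is a partial order on `R`, the poset `(R, ≼)` is locally
`(k-1)`-linear (no interval contains a `≼`-antichain of size `k`), and moreover for
every point `p ∈ ℝ²` the set `ℓ_p` of rectangles of `R` containing `p` is
`(k-1)`-linear. -/
theorem dyadic_rect_order (k : ℕ) (hk : 2 ≤ k) (R : Finset (ℤ × ℤ × ℤ × ℤ))
    (hchain : ¬ ∃ D : Fin k → ℤ × ℤ × ℤ × ℤ, Function.Injective D ∧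
      (∀ i, D i ∈ R) ∧ ∀ i j : Fin k, i ≤ j → dyadicRect (D j) ⊆ dyadicRect (D i)) :
    -- `≼` is a partial order on `R`:
    (∀ q ∈ R, rectLE q q) ∧
    (∀ q ∈ R, ∀ q' ∈ R, ∀ q'' ∈ R, rectLE q q' → rectLE q' q'' → rectLE q q'') ∧
    (∀ q ∈ R, ∀ q' ∈ R, rectLE q q' → rectLE q' q → q = q') ∧
    -- `(R, ≼)` is locally `(k-1)`-linear:
    (∀ a ∈ R, ∀ b ∈ R, ∀ A : Finset (ℤ × ℤ × ℤ × ℤ), A ⊆ R →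
      (∀ x ∈ A, rectLE a x ∧ rectLE x b) →
      (∀ x ∈ A, ∀ y ∈ A, x ≠ y → ¬ rectLE x y) →
      A.card ≤ k - 1) ∧
    -- for every point `p`, the set `ℓ_p` of rectangles of `R` containing `p` is
    -- `(k-1)`-linear:
    (∀ p : ℝ × ℝ, ∀ A : Finset (ℤ × ℤ × ℤ × ℤ), A ⊆ R →
      (∀ x ∈ A, p ∈ dyadicRect x) →
      (∀ x ∈ A, ∀ y ∈ A, x ≠ y → ¬ rectLE x y) →
      A.card ≤ k - 1) := by
  refine ⟨fun q _ => ⟨subset_rfl, subset_rfl⟩,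
    fun q _ q' _ q'' _ h h' => ⟨h.1.trans h'.1, h'.2.trans h.2⟩,
    fun q _ q' _ h h' => antisymm_aux h h', ?_, ?_⟩
  · intro a _ b _ A hAR hbetween anti
    apply key_lemma k hk R hchain A hAR _ _ anti
    · intro x hx y hy
      have hxa := (hbetween x hx).1.1
      have hya := (hbetween y hy).1.1
      exact dyadic_nested (hxa (dyadic_nonempty a.1 a.2.1)) (hya (dyadic_nonempty a.1 a.2.1))
    · intro x hx y hy
      have hxb := (hbetween x hx).2.2
      have hyb := (hbetween y hy).2.2
      exact dyadic_nested (hxb (dyadic_nonempty b.2.2.1 b.2.2.2))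
        (hyb (dyadic_nonempty b.2.2.1 b.2.2.2))
  · intro p A hAR hp anti
    apply key_lemma k hk R hchain A hAR _ _ anti
    · intro x hx y hy
      exact dyadic_nested (hp x hx).1 (hp y hy).1
    · intro x hx y hy
      exact dyadic_nested (hp x hx).2 (hp y hy).2
end

section
/- Let r ≥ 2, let d_1, …, d_r ∈ ℕ, and let X ⊆ ℝ^{d_1} × ⋯ × ℝ^{d_r} be a semilinear set (of some description complexity (s, t)). Assume that X does not contain any product A_1 × ⋯ × A_r with every A_i ⊆ ℝ^{d_i} infinite. Then there exists α = α(X) ∈ ℝ such that for all finite sets V_i ⊆ ℝ^{d_i}, setting n := Σ_{i=1}^r |V_i|, one has |X ∩ (V_1 × ⋯ × V_r)| ≤ α · n^{r−1}. -/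
/-! Every cell of `X` is convex. If a convex set `C` contains, for each coordinate `i`, two points
differing only in their `i`-th coordinate, then `C` contains the average of the `r` segments joining
them, which is a product of `r` segments. So each cell is the graph of a function of all
coordinates but one, meets `V₁ × ⋯ × V_r` in at most `∏_{j ≠ i₀} |V_j| ≤ n^{r-1}` points, and
`α = t` works. -/

section ConvexProduct

variable {𝕜 ι : Type*} [Field 𝕜] [LinearOrder 𝕜] [IsStrictOrderedRing 𝕜] [Fintype ι]
  {E : ι → Type*} [∀ i, AddCommGroup (E i)] [∀ i, Module 𝕜 (E i)] {C : Set (∀ i, E i)}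

theorem Convex.exists_infinite_pi_subset [Nonempty ι] (hC : Convex 𝕜 C)
    (h : ∀ i, ∃ x ∈ C, ∃ y ∈ C, x i ≠ y i ∧ ∀ j ≠ i, x j = y j) :
    ∃ A : ∀ i, Set (E i), (∀ i, (A i).Infinite) ∧ Set.univ.pi A ⊆ C := by
  choose x hx y hy hxy hagree using h
  set w : 𝕜 := (Fintype.card ι : 𝕜)⁻¹
  set c : ∀ i, E i := ∑ i, w • y i
  refine ⟨fun k => (fun σ : 𝕜 => c k + σ • w • (x k k - y k k)) '' Set.Icc 0 1,
    fun k => ?_, ?_⟩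
  · refine (Set.Icc_infinite zero_lt_one).image fun σ _ τ _ hστ => ?_
    exact smul_left_injective 𝕜 (smul_ne_zero (by positivity) (sub_ne_zero.2 (hxy k)))
      (add_left_cancel hστ)
  · intro z hz
    choose σ hσ hzσ using Set.mem_univ_pi.1 hz
    have hz : z = ∑ i, w • (y i + σ i • (x i - y i)) := by
      funext k
      simp only [Finset.sum_apply, Pi.add_apply, Pi.smul_apply, Pi.sub_apply, smul_add,
        Finset.sum_add_distrib, ← hzσ k, c]
      congr 1
      rw [Fintype.sum_eq_single k fun i hik => by
        rw [hagree i k hik.symm, sub_self, smul_zero, smul_zero], smul_comm]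
    rw [hz]
    refine hC.sum_mem (fun _ _ => by positivity) ?_ fun i _ =>
      hC.add_smul_sub_mem (hy i) (hx i) (hσ i)
    simp [w]

theorem Convex.exists_injOn_domRestrict_compl (hC : Convex 𝕜 C) (hne : C.Nonempty)
    (hC_pi : ¬ ∃ A : ∀ i, Set (E i), (∀ i, (A i).Infinite) ∧ Set.univ.pi A ⊆ C) :
    ∃ i₀, C.InjOn ({i₀}ᶜ : Set ι).domRestrict := by
  cases isEmpty_or_nonempty ι
  · obtain ⟨x₀, hx₀⟩ := hne
    exact (hC_pi ⟨isEmptyElim, isEmptyElim, fun z _ => Subsingleton.elim x₀ z ▸ hx₀⟩).elim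
  by_contra! h
  refine hC_pi (hC.exists_infinite_pi_subset fun i => ?_)
  obtain ⟨x, hx, y, hy, hxy, hne⟩ := by simpa [Set.InjOn] using h i
  have hagree : ∀ j ≠ i, x j = y j := fun j hj => congrFun hxy ⟨j, hj⟩
  exact ⟨x, hx, y, hy, fun hi => hne (funext fun j => (eq_or_ne j i).elim (· ▸ hi) (hagree j)),
    hagree⟩

end ConvexProduct

theorem Set.InjOn.ncard_sep_forall_mem_le_pow {ι : Type*} [Fintype ι] [DecidableEq ι]
    {α : ι → Type*} {S : Set (∀ i, α i)} {i₀ : ι} (hS : S.InjOn ({i₀}ᶜ : Set ι).domRestrict)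
    (V : ∀ i, Finset (α i)) :
    {x ∈ S | ∀ i, x i ∈ V i}.ncard ≤ (∑ i, (V i).card) ^ (Fintype.card ι - 1) := by
  calc {x ∈ S | ∀ i, x i ∈ V i}.ncard
      ≤ (Fintype.piFinset fun j : ↥({i₀}ᶜ : Set ι) => V j : Set _).ncard :=
        Set.ncard_le_ncard_of_injOn _
          (fun x hx => by simpa [Set.domRestrict] using fun j _ => hx.2 j)
          (hS.mono fun _ hx => hx.1)
    _ = ∏ j : ↥({i₀}ᶜ : Set ι), (V j).card := by
        rw [Set.ncard_coe_finset, Fintype.card_piFinset]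
    _ ≤ ∏ _j : ↥({i₀}ᶜ : Set ι), ∑ i, (V i).card :=
        Finset.prod_le_prod' fun j _ =>
          Finset.single_le_sum (f := fun i => (V i).card) (fun i _ => Nat.zero_le _)
            (Finset.mem_univ _)
    _ = (∑ i, (V i).card) ^ (Fintype.card ι - 1) := by simp [Finset.filter_ne']

theorem IsSemilinearCell.convex {r s : ℕ} {d : Fin r → ℕ} {C : Set (∀ i, Fin (d i) → ℝ)}
    (hC : IsSemilinearCell s C) : Convex ℝ C := by
  obtain ⟨p, -, lam, a, rfl⟩ := hC
  intro x hx y hy α β hα hβ hαβ q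
  have hq : ∑ i, ∑ c, lam q i c * (α • x + β • y) i c + a q =
      α • (∑ i, ∑ c, lam q i c * x i c + a q) + β • (∑ i, ∑ c, lam q i c * y i c + a q) := by
    simp only [Pi.add_apply, Pi.smul_apply, smul_eq_mul, mul_add, Finset.sum_add_distrib,
      Finset.mul_sum, mul_left_comm]
    linear_combination (a q) * hαβ.symm
  rw [hq]
  exact ⟨fun h => convex_Iic (0 : ℝ) ((hx q).1 h) ((hy q).1 h) hα hβ hαβ,
    fun h => convex_Iio (0 : ℝ) ((hx q).2 h) ((hy q).2 h) hα hβ hαβ⟩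

theorem semilinear_linear_zarankiewicz_general (r : ℕ) (d : Fin r → ℕ)
    (X : Set (∀ i, Fin (d i) → ℝ))
    (hsemi : ∃ s t : ℕ, IsSemilinearOfComplexity s t X)
    (hprod : ¬ ∃ A : ∀ i, Set (Fin (d i) → ℝ), (∀ i, (A i).Infinite) ∧
      {x : ∀ i, Fin (d i) → ℝ | ∀ i, x i ∈ A i} ⊆ X) :
    ∃ α : ℝ, ∀ V : ∀ i, Finset (Fin (d i) → ℝ),
      (Set.ncard {x ∈ X | ∀ i, x i ∈ V i} : ℝ) ≤
        α * ((∑ i, ((V i).card : ℝ)) ^ (r - 1)) := by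
  obtain ⟨s, t, t', ht', C, hC, rfl⟩ := hsemi
  refine ⟨t, fun V => ?_⟩
  have hcell : ∀ j, {x ∈ C j | ∀ i, x i ∈ V i}.ncard ≤ (∑ i, (V i).card) ^ (r - 1) := by
    intro j
    rcases (C j).eq_empty_or_nonempty with hempty | hne
    · simp [hempty]
    obtain ⟨i₀, hinj⟩ := (hC j).convex.exists_injOn_domRestrict_compl hne
      fun ⟨A, hA, hAC⟩ => hprod ⟨A, hA, fun x hx =>
        Set.mem_iUnion.2 ⟨j, hAC (Set.mem_univ_pi.2 hx)⟩⟩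
    simpa using hinj.ncard_sep_forall_mem_le_pow V
  have hunion : {x ∈ ⋃ j, C j | ∀ i, x i ∈ V i} = ⋃ j, {x ∈ C j | ∀ i, x i ∈ V i} := by
    ext; simp
  have hcount : {x ∈ ⋃ j, C j | ∀ i, x i ∈ V i}.ncard ≤ t * (∑ i, (V i).card) ^ (r - 1) :=
    calc {x ∈ ⋃ j, C j | ∀ i, x i ∈ V i}.ncard
        ≤ ∑ j, {x ∈ C j | ∀ i, x i ∈ V i}.ncard := hunion ▸ Set.ncard_iUnion_le_of_fintype _
      _ ≤ ∑ _j : Fin t', (∑ i, (V i).card) ^ (r - 1) := Finset.sum_le_sum fun j _ => hcell j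
      _ ≤ t * (∑ i, (V i).card) ^ (r - 1) := by simpa using Nat.mul_le_mul_right _ ht'
  exact_mod_cast hcount

/-- If `X ⊆ ℝ^{d₁} × ⋯ × ℝ^{d_r}` (`r ≥ 2`) is semilinear (of some description
complexity) and does not contain a product `A₁ × ⋯ × A_r` of `r` infinite sets, then
there is `α = α(X)` such that for all finite `V_i ⊆ ℝ^{d_i}`, with `n := Σ_i |V_i|`,
one has `|X ∩ (V₁ × ⋯ × V_r)| ≤ α · n^{r-1}`. -/
theorem semilinear_linear_zarankiewicz (r : ℕ) (hr : 2 ≤ r) (d : Fin r → ℕ)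
    (X : Set (∀ i, Fin (d i) → ℝ))
    (hsemi : ∃ s t : ℕ, IsSemilinearOfComplexity s t X)
    (hprod : ¬ ∃ A : ∀ i, Set (Fin (d i) → ℝ), (∀ i, (A i).Infinite) ∧
      {x : ∀ i, Fin (d i) → ℝ | ∀ i, x i ∈ A i} ⊆ X) :
    ∃ α : ℝ, ∀ V : ∀ i, Finset (Fin (d i) → ℝ),
      (Set.ncard {x ∈ X | ∀ i, x i ∈ V i} : ℝ) ≤
        α * ((∑ i, ((V i).card : ℝ)) ^ (r - 1)) :=
  semilinear_linear_zarankiewicz_general r d X hsemi hprod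
end
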